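/- arXiv:2509.02043 — 5 statements merged into one kernel-verified Lean document; each statement's English description precedes it below -/
import Mathlib

section
/- Let m >= 1 be an integer. For a positive integer q, let M_C(q) be the set of tuples (x_1,...,x_m) in Z_q^m such that: 2x_s != 0 and 2x_s != 1 for all s in {1,...,m}; x_s != x_t for all s != t; x_s != x_t + 1 for all s < t; and x_s != -x_t and x_s != -x_t + 1 for all s != t. Then there exists a positive integer N such that for every integer q >= N, |M_C(q)| = (q - 2m)^m. (This is the characteristic quasi-polynomial of the Shi arrangement of type C; in particular it is an honest polynomial in q.) -/
namespace ShiCProof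
set_option linter.unusedSectionVars false

open Finset

variable {m n : ℕ}

/-- Strict lex order on labels: compare `g` values, then indices. -/
def slt (g : Fin m → Fin n) (t s : Fin m) : Prop :=
  g t < g s ∨ (g t = g s ∧ t < s)

instance (g : Fin m → Fin n) (t s : Fin m) : Decidable (slt g t s) := by
  unfold slt; infer_instance

def A (g : Fin m → Fin n) (s : Fin m) : ℕ :=
  (univ.filter (fun t => slt g t s)).card

def B (g : Fin m → Fin n) (s : Fin m) : ℕ :=
  (univ.filter (fun t => n ≤ (g t : ℕ) + (g s : ℕ))).card

def P (g : Fin m → Fin n) (s : Fin m) : ℕ := 1 + (g s : ℕ) + A g s + B g s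

lemma slt_trichotomy (g : Fin m → Fin n) (t s : Fin m) :
    slt g t s ∨ t = s ∨ slt g s t := by
  rcases lt_trichotomy (g t) (g s) with h | h | h
  · exact Or.inl (Or.inl h)
  · rcases lt_trichotomy t s with h' | h' | h'
    · exact Or.inl (Or.inr ⟨h, h'⟩)
    · exact Or.inr (Or.inl h')
    · exact Or.inr (Or.inr (Or.inr ⟨h.symm, h'⟩))
  · exact Or.inr (Or.inr (Or.inl h))

lemma slt_irrefl (g : Fin m → Fin n) (s : Fin m) : ¬ slt g s s := by
  simp [slt]

lemma slt_trans (g : Fin m → Fin n) {a b c : Fin m}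
    (h1 : slt g a b) (h2 : slt g b c) : slt g a c := by
  rcases h1 with h1 | ⟨h1, h1'⟩ <;> rcases h2 with h2 | ⟨h2, h2'⟩
  · exact Or.inl (h1.trans h2)
  · exact Or.inl (h2 ▸ h1)
  · exact Or.inl (h1 ▸ h2)
  · exact Or.inr ⟨h1.trans h2, h1'.trans h2'⟩

lemma slt_asymm (g : Fin m → Fin n) {a b : Fin m}
    (h1 : slt g a b) (h2 : slt g b a) : False :=
  slt_irrefl g a (slt_trans g h1 h2)

lemma A_lt_iff (g : Fin m → Fin n) (t s : Fin m) :
    A g t < A g s ↔ slt g t s := by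
  constructor
  · intro h
    rcases slt_trichotomy g t s with h' | h' | h'
    · exact h'
    · subst h'; omega
    · exfalso
      have : A g s ≤ A g t := by
        apply card_le_card
        intro u hu
        simp only [mem_filter, mem_univ, true_and] at hu ⊢
        exact slt_trans g hu h'
      omega
  · intro h
    apply card_lt_card
    constructor
    · intro u hu
      simp only [mem_filter, mem_univ, true_and] at hu ⊢
      exact slt_trans g hu h
    · intro hsub
      have := hsub (by simp [mem_filter, h] : t ∈ univ.filter (fun u => slt g u s))
      simp only [mem_filter, mem_univ, true_and] at this
      exact slt_irrefl g t this

lemma B_mono (g : Fin m → Fin n) {t s : Fin m} (h : (g t : ℕ) ≤ (g s : ℕ)) :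
    B g t ≤ B g s := by
  apply card_le_card
  intro u hu
  simp only [mem_filter, mem_univ, true_and] at hu ⊢
  omega

lemma A_lt_m (g : Fin m → Fin n) (s : Fin m) : A g s < m := by
  have : univ.filter (fun t => slt g t s) ⊂ univ := by
    refine Finset.filter_ssubset.mpr ⟨s, mem_univ s, slt_irrefl g s⟩
  simpa [A] using card_lt_card this

lemma B_le_m (g : Fin m → Fin n) (s : Fin m) : B g s ≤ m := by
  unfold B
  exact le_trans (card_filter_le _ _) (by simp)

/-- Strict monotonicity of `P` along `slt`, with a gap of `2` when values differ. -/
lemma P_strict (g : Fin m → Fin n) {t s : Fin m} (h : slt g t s) :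
    P g t < P g s ∧ ((g t : ℕ) < (g s : ℕ) → P g t + 2 ≤ P g s) := by
  have hA : A g t < A g s := (A_lt_iff g t s).mpr h
  rcases h with h' | ⟨h', _⟩
  · have hB : B g t ≤ B g s := B_mono g (le_of_lt h')
    have : (g t : ℕ) < (g s : ℕ) := h'
    constructor <;> [skip; intro] <;> (unfold P; omega)
  · have hB : B g t = B g s :=
      le_antisymm (B_mono g (le_of_eq (by rw [h']))) (B_mono g (le_of_eq (by rw [h'])))
    have : (g t : ℕ) = (g s : ℕ) := by rw [h']
    constructor
    · unfold P; omega
    · intro hc; omega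

lemma P_inj (g : Fin m → Fin n) {t s : Fin m} (h : P g t = P g s) : t = s := by
  rcases slt_trichotomy g t s with h' | h' | h'
  · exact absurd h (by have := (P_strict g h').1; omega)
  · exact h'
  · exact absurd h (by have := (P_strict g h').1; omega)

lemma P_pos (g : Fin m → Fin n) (s : Fin m) : 1 ≤ P g s := by unfold P; omega

lemma P_lt (g : Fin m → Fin n) (s : Fin m) : P g s < n + 2 * m := by
  have h1 : (g s : ℕ) < n := (g s).isLt
  have h2 := A_lt_m g s
  have h3 := B_le_m g s
  unfold P; omega

/-- key counting lemma, low case -/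
lemma AB_low (g : Fin m → Fin n) {s t : Fin m} (h : (g s : ℕ) + (g t : ℕ) < n) :
    A g s + B g t < m := by
  have hdisj : Disjoint (univ.filter (fun u => slt g u s))
      (univ.filter (fun u => n ≤ (g u : ℕ) + (g t : ℕ))) := by
    rw [Finset.disjoint_left]
    intro u h1 h2
    simp only [mem_filter, mem_univ, true_and] at h1 h2
    have : (g u : ℕ) ≤ (g s : ℕ) := by
      rcases h1 with h1 | ⟨h1, _⟩
      · exact le_of_lt h1
      · rw [h1]
    omega
  have hcard : A g s + B g t =
      ((univ.filter (fun u => slt g u s)) ∪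
        (univ.filter (fun u => n ≤ (g u : ℕ) + (g t : ℕ)))).card := by
    rw [card_union_of_disjoint hdisj]; rfl
  have hs : s ∉ (univ.filter (fun u => slt g u s)) ∪
      (univ.filter (fun u => n ≤ (g u : ℕ) + (g t : ℕ))) := by
    simp only [mem_union, mem_filter, mem_univ, true_and]
    rintro (hc | hc)
    · exact slt_irrefl g s hc
    · omega
  have : ((univ.filter (fun u => slt g u s)) ∪
        (univ.filter (fun u => n ≤ (g u : ℕ) + (g t : ℕ)))).card < m := by
    have hsub : (univ.filter (fun u => slt g u s)) ∪
        (univ.filter (fun u => n ≤ (g u : ℕ) + (g t : ℕ))) ⊂ univ :=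
      (ssubset_univ_iff).mpr (fun hEq => hs (by rw [hEq]; exact mem_univ s))
    simpa using card_lt_card hsub
  omega

/-- key counting lemma, high case -/
lemma AB_high (g : Fin m → Fin n) {s t : Fin m} (h : n ≤ (g s : ℕ) + (g t : ℕ)) :
    m ≤ A g s + B g t := by
  have hsub : (univ : Finset (Fin m)) ⊆
      (univ.filter (fun u => slt g u s)) ∪
        (univ.filter (fun u => n ≤ (g u : ℕ) + (g t : ℕ))) := by
    intro u _
    simp only [mem_union, mem_filter, mem_univ, true_and]
    by_cases hc : n ≤ (g u : ℕ) + (g t : ℕ)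
    · exact Or.inr hc
    · exact Or.inl (Or.inl (by omega))
  calc m = (univ : Finset (Fin m)).card := by simp
    _ ≤ _ := card_le_card hsub
    _ ≤ _ := card_union_le _ _

lemma P_sum_low (g : Fin m → Fin n) {s t : Fin m} (h : (g s : ℕ) + (g t : ℕ) < n) :
    P g s + P g t < n + 2 * m := by
  have h1 := AB_low g h
  have h2 := AB_low g (show (g t : ℕ) + (g s : ℕ) < n by omega)
  unfold P; omega

lemma P_sum_high (g : Fin m → Fin n) {s t : Fin m} (h : n ≤ (g s : ℕ) + (g t : ℕ)) :
    n + 2 * m + 2 ≤ P g s + P g t := by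
  have h1 := AB_high g h
  have h2 := AB_high g (show n ≤ (g t : ℕ) + (g s : ℕ) by omega)
  unfold P; omega


lemma P_succ (g : Fin m → Fin n) {s t : Fin m} (hst : s < t) :
    P g s ≠ P g t + 1 := by
  intro hEq
  rcases slt_trichotomy g s t with h | h | h
  · have := (P_strict g h).1; omega
  · subst h; omega
  · rcases h with h' | ⟨h', ht⟩
    · have := (P_strict g (Or.inl h' : slt g t s)).2 h'; omega
    · exact absurd (hst.trans ht) (lt_irrefl s)

lemma slt_iff_P (g : Fin m → Fin n) (t s : Fin m) : slt g t s ↔ P g t < P g s := by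
  constructor
  · exact fun h => (P_strict g h).1
  · intro h
    rcases slt_trichotomy g t s with h' | h' | h'
    · exact h'
    · subst h'; omega
    · have := (P_strict g h').1; omega

lemma Bcond_iff_P (g : Fin m → Fin n) (t s : Fin m) :
    n ≤ (g t : ℕ) + (g s : ℕ) ↔ n + 2 * m < P g t + P g s := by
  constructor
  · intro h; have := P_sum_high g (show n ≤ (g t : ℕ) + (g s : ℕ) from h); omega
  · intro h
    by_contra hc
    push_neg at hc
    have := P_sum_low g (show (g t : ℕ) + (g s : ℕ) < n from hc)
    omega

lemma P_determines (g g2 : Fin m → Fin n) (h : ∀ s, P g s = P g2 s) : g = g2 := by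
  have hA : ∀ s, A g s = A g2 s := by
    intro s
    unfold A
    apply Finset.card_bij (fun t _ => t) <;> simp only [mem_filter, mem_univ, true_and]
    · intro t ht
      exact (slt_iff_P g2 t s).mpr (by rw [← h t, ← h s]; exact (slt_iff_P g t s).mp ht)
    · intro t ht t' ht' hEq; exact hEq
    · intro t ht
      exact ⟨t, (slt_iff_P g t s).mpr (by rw [h t, h s]; exact (slt_iff_P g2 t s).mp ht), rfl⟩
  have hB : ∀ s, B g s = B g2 s := by
    intro s
    unfold B
    apply Finset.card_bij (fun t _ => t) <;> simp only [mem_filter, mem_univ, true_and]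
    · intro t ht
      exact (Bcond_iff_P g2 t s).mpr (by rw [← h t, ← h s]; exact (Bcond_iff_P g t s).mp ht)
    · intro t ht t' ht' hEq; exact hEq
    · intro t ht
      exact ⟨t, (Bcond_iff_P g t s).mpr (by rw [h t, h s]; exact (Bcond_iff_P g2 t s).mp ht), rfl⟩
  funext s
  have hP := h s
  have : (g s : ℕ) = (g2 s : ℕ) := by
    have := hA s; have := hB s; unfold P at hP; omega
  exact Fin.ext this

lemma modeq_elim {q a b : ℕ} (h : (a : ZMod q) = (b : ZMod q)) (ha : a < q) (hb : b < 2 * q) :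
    b = a ∨ b = a + q := by
  have h' : a % q = b % q := (ZMod.natCast_eq_natCast_iff a b q).mp h
  rcases Nat.lt_or_ge b q with hb' | hb'
  · left; rw [Nat.mod_eq_of_lt ha, Nat.mod_eq_of_lt hb'] at h'; omega
  · right
    have h2 : b % q = (b - q) % q := Nat.mod_eq_sub_mod hb'
    rw [Nat.mod_eq_of_lt ha, h2, Nat.mod_eq_of_lt (by omega)] at h'
    omega

/-- The inverse parking map into `ZMod (n + 2*m)`. -/
def Psi (g : Fin m → Fin n) : Fin m → ZMod (n + 2 * m) := fun s => (P g s : ZMod (n + 2 * m))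

section Membership

variable (hm : 1 ≤ m) (hn : 1 ≤ n)

lemma sum_ne (g : Fin m → Fin n) (s t : Fin m) :
    P g s + P g t ≠ n + 2 * m ∧ P g s + P g t ≠ n + 2 * m + 1 := by
  rcases Nat.lt_or_ge ((g s : ℕ) + (g t : ℕ)) n with h | h
  · have := P_sum_low g h; omega
  · have := P_sum_high g h; omega

include hm hn in
lemma Psi_mem (g : Fin m → Fin n) :
    (∀ s, 2 * Psi g s ≠ 0 ∧ 2 * Psi g s ≠ 1) ∧
    (∀ s t, s ≠ t → Psi g s ≠ Psi g t) ∧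
    (∀ s t, s < t → Psi g s ≠ Psi g t + 1) ∧
    (∀ s t, s ≠ t → Psi g s ≠ -Psi g t ∧ Psi g s ≠ -Psi g t + 1) := by
  have hq3 : 3 ≤ n + 2 * m := by omega
  have hPlt : ∀ s, P g s < n + 2 * m := fun s => P_lt g s
  have hPpos : ∀ s, 1 ≤ P g s := fun s => P_pos g s
  refine ⟨?_, ?_, ?_, ?_⟩
  · intro s
    constructor
    · intro hEq
      have h2 : ((2 * P g s : ℕ) : ZMod (n + 2 * m)) = ((0 : ℕ) : ZMod (n + 2 * m)) := by
        push_cast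
        simpa [Psi] using hEq
      rcases modeq_elim h2.symm (by omega) (by have := hPlt s; omega) with h | h
      · have := hPpos s; omega
      · have := (sum_ne g s s).1; omega
    · intro hEq
      have h2 : ((2 * P g s : ℕ) : ZMod (n + 2 * m)) = ((1 : ℕ) : ZMod (n + 2 * m)) := by
        push_cast
        simpa [Psi] using hEq
      rcases modeq_elim h2.symm (by omega) (by have := hPlt s; omega) with h | h
      · have := hPpos s; omega
      · have := (sum_ne g s s).2; omega
  · intro s t hst hEq
    apply hst
    apply P_inj g
    have := congrArg ZMod.val hEq
    rwa [show Psi g s = ((P g s : ℕ) : ZMod (n + 2 * m)) from rfl,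
      show Psi g t = ((P g t : ℕ) : ZMod (n + 2 * m)) from rfl,
      ZMod.val_cast_of_lt (hPlt s), ZMod.val_cast_of_lt (hPlt t)] at this
  · intro s t hst hEq
    have h2 : ((P g s : ℕ) : ZMod (n + 2 * m)) = ((P g t + 1 : ℕ) : ZMod (n + 2 * m)) := by
      push_cast
      simpa [Psi] using hEq
    rcases modeq_elim h2 (hPlt s) (by have := hPlt t; omega) with h | h
    · exact P_succ g hst (by omega)
    · have := hPlt t; have := hPpos s; omega
  · intro s t hst
    constructor
    · intro hEq
      have hsum : Psi g s + Psi g t = 0 := by rw [hEq]; ring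
      have h2 : ((0 : ℕ) : ZMod (n + 2 * m)) = ((P g s + P g t : ℕ) : ZMod (n + 2 * m)) := by
        push_cast
        simpa [Psi] using hsum.symm
      rcases modeq_elim h2 (by omega) (by have := hPlt s; have := hPlt t; omega) with h | h
      · have := hPpos s; have := hPpos t; omega
      · have := (sum_ne g s t).1; omega
    · intro hEq
      have hsum : Psi g s + Psi g t = 1 := by rw [hEq]; ring
      have h2 : ((1 : ℕ) : ZMod (n + 2 * m)) = ((P g s + P g t : ℕ) : ZMod (n + 2 * m)) := by
        push_cast
        simpa [Psi] using hsum.symm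
      rcases modeq_elim h2 (by omega) (by have := hPlt s; have := hPlt t; omega) with h | h
      · have := hPpos s; have := hPpos t; omega
      · have := (sum_ne g s t).2; omega

lemma Psi_injective : Function.Injective (Psi (m := m) (n := n)) := by
  intro g g2 hEq
  apply P_determines
  intro s
  have h := congrFun hEq s
  have := congrArg ZMod.val h
  rwa [show Psi g s = ((P g s : ℕ) : ZMod (n + 2*m)) from rfl,
    show Psi g2 s = ((P g2 s : ℕ) : ZMod (n + 2*m)) from rfl,
    ZMod.val_cast_of_lt (P_lt g s), ZMod.val_cast_of_lt (P_lt g2 s)] at this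

end Membership

section Surj

variable {m n : ℕ}

def vv (x : Fin m → ZMod (n + 2 * m)) (s : Fin m) : ℕ := (x s).val

def ww (x : Fin m → ZMod (n + 2 * m)) (s : Fin m) : ℕ := n + 2 * m - vv x s

def Vset (x : Fin m → ZMod (n + 2 * m)) : Finset ℕ :=
  (univ.image (vv x)) ∪ (univ.image (ww x))

def gapcount (x : Fin m → ZMod (n + 2 * m)) (p : ℕ) : ℕ :=
  ((range p).filter (fun j => j ∉ Vset x)).card

def aa (x : Fin m → ZMod (n + 2 * m)) (s : Fin m) : ℕ :=
  (univ.filter (fun t => vv x t < vv x s)).card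

def bb (x : Fin m → ZMod (n + 2 * m)) (s : Fin m) : ℕ :=
  (univ.filter (fun t => ww x t < vv x s)).card

def gg (x : Fin m → ZMod (n + 2 * m)) (s : Fin m) : ℕ := gapcount x (vv x s) - 1

lemma mem_Vset (x : Fin m → ZMod (n + 2 * m)) (j : ℕ) :
    j ∈ Vset x ↔ (∃ u, vv x u = j) ∨ (∃ u, ww x u = j) := by
  simp [Vset, Finset.mem_union, Finset.mem_image]

variable (hm : 1 ≤ m) (hn : 1 ≤ n) (x : Fin m → ZMod (n + 2 * m))
variable (h0 : ∀ s, 2 * x s ≠ 0 ∧ 2 * x s ≠ 1)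
variable (h1 : ∀ s t, s ≠ t → x s ≠ x t)
variable (h2 : ∀ s t, s < t → x s ≠ x t + 1)
variable (h3 : ∀ s t, s ≠ t → x s ≠ -x t ∧ x s ≠ -x t + 1)

include hm in
lemma v_lt (s : Fin m) : vv x s < n + 2 * m := by
  haveI : NeZero (n + 2 * m) := ⟨by omega⟩
  exact ZMod.val_lt (x s)

include hm h0 in
lemma v_pos (s : Fin m) : 1 ≤ vv x s := by
  haveI : NeZero (n + 2 * m) := ⟨by omega⟩
  have hx : x s ≠ 0 := by
    intro h
    exact (h0 s).1 (by rw [h]; ring)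
  have := (ZMod.val_eq_zero (x s)).not.mpr hx
  unfold vv; omega

include hm in
lemma cast_v (s : Fin m) : ((vv x s : ℕ) : ZMod (n + 2 * m)) = x s := by
  haveI : NeZero (n + 2 * m) := ⟨by omega⟩
  exact ZMod.natCast_rightInverse (x s)

include hm h1 in
lemma vD1 {s t : Fin m} (h : vv x s = vv x t) : s = t := by
  by_contra hne
  exact h1 s t hne (by rw [← cast_v hm x s, ← cast_v hm x t, h])

include hm h0 h3 in
lemma vD2 (s t : Fin m) : vv x s ≠ ww x t := by
  intro hEq
  have hvlt := v_lt hm x t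
  have hvp := v_pos hm x h0 t
  have hsum : vv x s + vv x t = n + 2 * m := by unfold ww at hEq; omega
  have hz : x s + x t = 0 := by
    rw [← cast_v hm x s, ← cast_v hm x t, ← Nat.cast_add, hsum]
    exact ZMod.natCast_self _
  by_cases hst : s = t
  · subst hst
    exact (h0 s).1 (by linear_combination hz)
  · exact (h3 s t hst).1 (eq_neg_of_add_eq_zero_left hz)

include hm h0 h1 h2 h3 in
lemma runA (k : ℕ) (s : Fin m) (hyp : ∀ i, i ≤ k → (vv x s - i) ∈ Vset x) :
    ∃ u, vv x u = vv x s - k ∧ u ≤ s ∧ (1 ≤ k → u < s) := by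
  induction k with
  | zero => exact ⟨s, by simp, le_refl s, by omega⟩
  | succ k ih =>
    obtain ⟨u, hu, hus, -⟩ := ih (fun i hi => hyp i (by omega))
    have hupos := v_pos hm x h0 u
    have hspos := v_pos hm x h0 s
    have hklt : k < vv x s := by omega
    have hmem := hyp (k + 1) le_rfl
    have heq1 : vv x s - (k + 1) = vv x u - 1 := by omega
    rw [heq1] at hmem
    rcases (mem_Vset x _).mp hmem with ⟨u', hu'⟩ | ⟨u', hu'⟩
    · -- previous position is a representative
      have hne : u' ≠ u := by
        intro h; subst h; omega
      have hcast : x u = x u' + 1 := by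
        have hv : vv x u' + 1 = vv x u := by omega
        rw [← cast_v hm x u, ← cast_v hm x u', ← hv]
        push_cast
        ring
      have hu'u : u' < u := by
        rcases lt_trichotomy u u' with h | h | h
        · exact absurd hcast (h2 u u' h)
        · exact absurd h hne.symm
        · exact h
      refine ⟨u', by omega, le_of_lt (lt_of_lt_of_le hu'u hus), fun _ => lt_of_lt_of_le hu'u hus⟩
    · -- previous position is an anti-representative: impossible
      exfalso
      have hu'lt := v_lt hm x u'
      have hu'pos := v_pos hm x h0 u'
      have hsum : vv x u + vv x u' = (n + 2 * m) + 1 := by unfold ww at hu'; omega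
      have hone : x u + x u' = 1 := by
        rw [← cast_v hm x u, ← cast_v hm x u', ← Nat.cast_add, hsum,
          show ((n + 2 * m + 1 : ℕ) : ZMod (n + 2 * m)) =
            ((n + 2 * m : ℕ) : ZMod (n + 2 * m)) + 1 by push_cast; ring,
          ZMod.natCast_self]
        ring
      by_cases hEq : u = u'
      · subst hEq
        exact (h0 u).2 (by linear_combination hone)
      · exact (h3 u u' hEq).2 (by linear_combination hone)

include hm h0 h1 h3 in
lemma G1 (s : Fin m) : aa x s + bb x s + gapcount x (vv x s) = vv x s := by
  classical
  set p := vv x s with hp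
  have hinj_v : Function.Injective (vv x) := fun a b h => vD1 hm x h1 h
  have hinj_w : Function.Injective (ww x) := by
    intro a b h
    have ha := v_lt hm x a
    have hb := v_lt hm x b
    apply hinj_v
    unfold ww at h; omega
  have himg : (range p).filter (fun j => j ∈ Vset x) =
      ((univ.filter (fun t => vv x t < p)).image (vv x)) ∪
        ((univ.filter (fun t => ww x t < p)).image (ww x)) := by
    ext j
    simp only [mem_filter, mem_range, mem_union, mem_image, mem_univ, true_and, mem_Vset]
    constructor
    · rintro ⟨hj, ⟨u, hu⟩ | ⟨u, hu⟩⟩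
      · exact Or.inl ⟨u, by omega, hu⟩
      · exact Or.inr ⟨u, by omega, hu⟩
    · rintro (⟨u, hu1, hu2⟩ | ⟨u, hu1, hu2⟩)
      · exact ⟨by omega, Or.inl ⟨u, hu2⟩⟩
      · exact ⟨by omega, Or.inr ⟨u, hu2⟩⟩
  have hdisj : Disjoint ((univ.filter (fun t => vv x t < p)).image (vv x))
      ((univ.filter (fun t => ww x t < p)).image (ww x)) := by
    rw [Finset.disjoint_left]
    intro j hj1 hj2
    simp only [mem_image, mem_filter, mem_univ, true_and] at hj1 hj2
    obtain ⟨u, -, hu⟩ := hj1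
    obtain ⟨u', -, hu'⟩ := hj2
    exact vD2 hm x h0 h3 u u' (by rw [hu, hu'])
  have hcard : ((range p).filter (fun j => j ∈ Vset x)).card = aa x s + bb x s := by
    rw [himg, card_union_of_disjoint hdisj,
      Finset.card_image_of_injective _ hinj_v, Finset.card_image_of_injective _ hinj_w]
    rfl
  have htot := Finset.card_filter_add_card_filter_not
    (s := range p) (p := fun j => j ∈ Vset x)
  rw [hcard, Finset.card_range] at htot
  unfold gapcount
  omega

lemma G2 {p p' : ℕ} (hpp : p ≤ p') : gapcount x p ≤ gapcount x p' :=
  card_le_card (Finset.filter_subset_filter _ (Finset.range_subset_range.mpr hpp))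

include hm h0 in
lemma G3 {p : ℕ} (hp : 1 ≤ p) : 1 ≤ gapcount x p := by
  unfold gapcount
  rw [Nat.succ_le_iff, Finset.card_pos]
  refine ⟨0, ?_⟩
  simp only [mem_filter, mem_range, mem_Vset]
  refine ⟨by omega, ?_⟩
  rintro (⟨u, hu⟩ | ⟨u, hu⟩)
  · exact absurd hu (by have := v_pos hm x h0 u; omega)
  · exact absurd hu (by have := v_lt hm x u; unfold ww; omega)

include hm h0 h1 h3 in
lemma G4 : gapcount x (n + 2 * m) = n := by
  classical
  have hinj_v : Function.Injective (vv x) := fun a b h => vD1 hm x h1 h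
  have hinj_w : Function.Injective (ww x) := by
    intro a b h
    have ha := v_lt hm x a
    have hb := v_lt hm x b
    apply hinj_v
    unfold ww at h; omega
  have hVsub : (range (n + 2 * m)).filter (fun j => j ∈ Vset x) = Vset x := by
    ext j
    simp only [mem_filter, mem_range]
    constructor
    · exact fun h => h.2
    · intro hj
      refine ⟨?_, hj⟩
      rcases (mem_Vset x j).mp hj with ⟨u, hu⟩ | ⟨u, hu⟩
      · have := v_lt hm x u; omega
      · have := v_pos hm x h0 u; unfold ww at hu; omega
  have hVcard : (Vset x).card = 2 * m := by
    unfold Vset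
    rw [card_union_of_disjoint, Finset.card_image_of_injective _ hinj_v,
      Finset.card_image_of_injective _ hinj_w, card_univ, Fintype.card_fin]
    · ring
    · rw [Finset.disjoint_left]
      intro j hj1 hj2
      simp only [mem_image, mem_univ, true_and] at hj1 hj2
      obtain ⟨u, hu⟩ := hj1
      obtain ⟨u', hu'⟩ := hj2
      exact vD2 hm x h0 h3 u u' (by rw [hu, hu'])
  have htot := Finset.card_filter_add_card_filter_not
    (s := range (n + 2 * m)) (p := fun j => j ∈ Vset x)
  rw [hVsub, hVcard, Finset.card_range] at htot
  unfold gapcount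
  omega

include hm h0 in
lemma Vsym {j : ℕ} (hj1 : 1 ≤ j) (hj2 : j < n + 2 * m) :
    j ∈ Vset x ↔ (n + 2 * m - j) ∈ Vset x := by
  have key : ∀ i : ℕ, 1 ≤ i → i < n + 2 * m → i ∈ Vset x → (n + 2 * m - i) ∈ Vset x := by
    intro i hi1 hi2 hi
    rcases (mem_Vset x i).mp hi with ⟨u, hu⟩ | ⟨u, hu⟩
    · refine (mem_Vset x _).mpr (Or.inr ⟨u, ?_⟩)
      unfold ww; omega
    · refine (mem_Vset x _).mpr (Or.inl ⟨u, ?_⟩)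
      have := v_lt hm x u
      have := v_pos hm x h0 u
      unfold ww at hu; omega
  constructor
  · exact key j hj1 hj2
  · intro h
    have := key (n + 2 * m - j) (by omega) (by omega) h
    rwa [show n + 2 * m - (n + 2 * m - j) = j by omega] at this

include hm h0 h1 h3 in
lemma G5 (t : Fin m) : gapcount x (ww x t) + gapcount x (vv x t) = n + 1 := by
  classical
  have hvlt := v_lt hm x t
  have hvp := v_pos hm x h0 t
  have hwlt : ww x t < n + 2 * m := by unfold ww; omega
  have hwp : 1 ≤ ww x t := by unfold ww; omega
  have hwv : ww x t = n + 2 * m - vv x t := rfl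
  set T1 := (range (n + 2 * m)).filter (fun j => j ∉ Vset x ∧ ww x t ≤ j) with hT1
  set T2 := (range (vv x t)).filter (fun j => j ∉ Vset x ∧ j ≠ 0) with hT2
  have hwmem : ww x t ∈ Vset x := (mem_Vset x _).mpr (Or.inr ⟨t, rfl⟩)
  have hsplit : gapcount x (n + 2 * m) = gapcount x (ww x t) + T1.card := by
    have hun : (range (n + 2 * m)).filter (fun j => j ∉ Vset x) =
        ((range (ww x t)).filter (fun j => j ∉ Vset x)) ∪ T1 := by
      ext j
      simp only [hT1, mem_union, mem_filter, mem_range]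
      constructor
      · rintro ⟨hj, hjv⟩
        rcases Nat.lt_or_ge j (ww x t) with h | h
        · exact Or.inl ⟨h, hjv⟩
        · exact Or.inr ⟨hj, hjv, h⟩
      · rintro (⟨hj, hjv⟩ | ⟨hj, hjv, -⟩)
        · exact ⟨by omega, hjv⟩
        · exact ⟨hj, hjv⟩
    rw [gapcount, hun, card_union_of_disjoint]
    · rfl
    · rw [Finset.disjoint_left]
      intro j hj1 hj2
      simp only [hT1, mem_filter, mem_range] at hj1 hj2
      omega
  have hT2card : T2.card = gapcount x (vv x t) - 1 := by
    have hzero : (0 : ℕ) ∈ (range (vv x t)).filter (fun j => j ∉ Vset x) := by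
      simp only [mem_filter, mem_range, mem_Vset]
      refine ⟨by omega, ?_⟩
      rintro (⟨u, hu⟩ | ⟨u, hu⟩)
      · exact absurd hu (by have := v_pos hm x h0 u; omega)
      · exact absurd hu (by have := v_lt hm x u; unfold ww; omega)
    have hers : T2 = ((range (vv x t)).filter (fun j => j ∉ Vset x)).erase 0 := by
      ext j
      simp only [hT2, Finset.mem_erase, mem_filter, mem_range]
      tauto
    rw [hers, Finset.card_erase_of_mem hzero]
    rfl
  have hbij : T1.card = T2.card := by
    apply Finset.card_nbij' (fun j => n + 2 * m - j) (fun j => n + 2 * m - j)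
    · intro j hj
      simp only [hT1, mem_coe, mem_filter, mem_range] at hj
      obtain ⟨hjq, hjv, hjw⟩ := hj
      have hjne : j ≠ ww x t := fun h => hjv (h ▸ hwmem)
      simp only [hT2, mem_coe, mem_filter, mem_range]
      refine ⟨by omega, ?_, by omega⟩
      intro hc
      exact hjv ((Vsym hm x h0 (by omega) (by omega)).mpr hc)
    · intro j hj
      simp only [hT2, mem_coe, mem_filter, mem_range] at hj
      obtain ⟨hjq, hjv, hj0⟩ := hj
      simp only [hT1, mem_coe, mem_filter, mem_range]
      refine ⟨by omega, ?_, by omega⟩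
      intro hc
      have hback := (Vsym hm x h0 (by omega) (by omega)).mp hc
      rw [show n + 2 * m - (n + 2 * m - j) = j by omega] at hback
      exact hjv hback
    · intro j hj
      simp only [hT1, mem_coe, mem_filter, mem_range] at hj ⊢
      omega
    · intro j hj
      simp only [hT2, mem_coe, mem_filter, mem_range] at hj ⊢
      omega
  have hG4 := G4 hm x h0 h1 h3
  have hG3 := G3 hm x h0 (show (1:ℕ) ≤ vv x t from hvp)
  rw [hbij, hT2card] at hsplit
  omega

include hm h0 h1 h3 in
lemma no_gap {lo p : ℕ} (hlo : lo ≤ p) (hgc : gapcount x p ≤ gapcount x lo) :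
    ∀ j, lo ≤ j → j < p → j ∈ Vset x := by
  classical
  have hsub : (range lo).filter (fun j => j ∉ Vset x) ⊆
      (range p).filter (fun j => j ∉ Vset x) :=
    Finset.filter_subset_filter _ (Finset.range_subset_range.mpr hlo)
  have heq := Finset.eq_of_subset_of_card_le hsub hgc
  intro j hj1 hj2
  by_contra hc
  have : j ∈ (range p).filter (fun j => j ∉ Vset x) := by
    simp only [mem_filter, mem_range]; exact ⟨hj2, hc⟩
  rw [← heq] at this
  simp only [mem_filter, mem_range] at this
  omega

include hm h0 h1 h2 h3 in
lemma ordv {t s : Fin m} (h : vv x t < vv x s) :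
    gg x t < gg x s ∨ (gg x t = gg x s ∧ t < s) := by
  have hmono : gapcount x (vv x t) ≤ gapcount x (vv x s) := G2 x (le_of_lt h)
  have hG3t := G3 hm x h0 (v_pos hm x h0 t)
  rcases lt_or_eq_of_le hmono with hlt | heq
  · left; unfold gg; omega
  · right
    refine ⟨by unfold gg; omega, ?_⟩
    have hng := no_gap hm x h0 h1 h3 (le_of_lt h) (le_of_eq heq.symm)
    have hyp : ∀ i, i ≤ vv x s - vv x t → (vv x s - i) ∈ Vset x := by
      intro i hi
      rcases Nat.eq_zero_or_pos i with h0' | h0'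
      · subst h0'
        simpa using (mem_Vset x _).mpr (Or.inl ⟨s, rfl⟩)
      · exact hng _ (by omega) (by omega)
    obtain ⟨u, hu, -, hlt⟩ := runA hm x h0 h1 h2 h3 (vv x s - vv x t) s hyp
    have : u = t := vD1 hm x h1 (by omega)
    subst this
    exact hlt (by omega)

include hm h0 h1 h2 h3 in
lemma S3iff (t s : Fin m) :
    (gg x t < gg x s ∨ (gg x t = gg x s ∧ t < s)) ↔ vv x t < vv x s := by
  constructor
  · intro h
    rcases lt_trichotomy (vv x t) (vv x s) with h' | h' | h'
    · exact h'
    · have : t = s := vD1 hm x h1 h'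
      subst this
      exfalso
      rcases h with h | ⟨-, h⟩
      · exact lt_irrefl _ h
      · exact lt_irrefl _ h
    · exfalso
      have hop := ordv hm x h0 h1 h2 h3 h'
      simp only [Fin.lt_def] at h hop
      omega
  · exact ordv hm x h0 h1 h2 h3

include hm h0 h1 h2 h3 in
lemma S4iff (t s : Fin m) :
    n ≤ gg x t + gg x s ↔ ww x t < vv x s := by
  have hG5 := G5 hm x h0 h1 h3 t
  have hG3t := G3 hm x h0 (v_pos hm x h0 t)
  have hG3s := G3 hm x h0 (v_pos hm x h0 s)
  have hwp : 1 ≤ ww x t := by have := v_lt hm x t; unfold ww; omega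
  constructor
  · intro h
    by_contra hc
    push_neg at hc
    have hmono : gapcount x (vv x s) ≤ gapcount x (ww x t) := G2 x hc
    unfold gg at h
    omega
  · intro h
    have hkey : gapcount x (ww x t) < gapcount x (vv x s) := by
      rcases Nat.lt_or_ge (gapcount x (ww x t)) (gapcount x (vv x s)) with hq | hq
      · exact hq
      · exfalso
        have hng := no_gap hm x h0 h1 h3 (le_of_lt h) hq
        have hyp : ∀ i, i ≤ vv x s - ww x t → (vv x s - i) ∈ Vset x := by
          intro i hi
          rcases Nat.eq_zero_or_pos i with h0' | h0'
          · subst h0'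
            simpa using (mem_Vset x _).mpr (Or.inl ⟨s, rfl⟩)
          · exact hng _ (by omega) (by omega)
        obtain ⟨u, hu, -, -⟩ := runA hm x h0 h1 h2 h3 (vv x s - ww x t) s hyp
        exact vD2 hm x h0 h3 u t (by omega)
    unfold gg
    omega

include hm hn h0 h1 h3 in
lemma gg_lt (s : Fin m) : gg x s < n := by
  have h1' : gapcount x (vv x s) ≤ gapcount x (n + 2 * m) :=
    G2 x (le_of_lt (v_lt hm x s))
  have hG4 := G4 hm x h0 h1 h3
  have hG3 := G3 hm x h0 (v_pos hm x h0 s)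
  unfold gg
  omega

include hm hn h0 h1 h2 h3 in
lemma Psi_gg :
    Psi (fun s => (⟨gg x s, gg_lt hm hn x h0 h1 h3 s⟩ : Fin n)) = x := by
  funext s
  set G : Fin m → Fin n := fun s => ⟨gg x s, gg_lt hm hn x h0 h1 h3 s⟩ with hG
  have hA : A G s = aa x s := by
    unfold A aa
    congr 1
    apply Finset.filter_congr
    intro t _
    have hiff := S3iff hm x h0 h1 h2 h3 t s
    simp only [slt, hG, Fin.mk_lt_mk, Fin.mk.injEq]
    exact hiff
  have hB : B G s = bb x s := by
    unfold B bb
    congr 1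
    apply Finset.filter_congr
    intro t _
    have hiff := S4iff hm x h0 h1 h2 h3 t s
    simpa only [hG] using hiff
  have hG1 := G1 hm x h0 h1 h3 s
  have hG3 := G3 hm x h0 (v_pos hm x h0 s)
  have hP : P G s = vv x s := by
    unfold P
    have hGs : (G s : ℕ) = gg x s := rfl
    rw [hGs, hA, hB]
    unfold gg
    omega
  show ((P G s : ℕ) : ZMod (n + 2 * m)) = x s
  rw [hP]
  exact cast_v hm x s

end Surj

theorem count (m n : ℕ) (hm : 1 ≤ m) (hn : 1 ≤ n) :
    ({x : Fin m → ZMod (n + 2 * m) |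
        (∀ s : Fin m, 2 * x s ≠ 0 ∧ 2 * x s ≠ 1) ∧
        (∀ s t : Fin m, s ≠ t → x s ≠ x t) ∧
        (∀ s t : Fin m, s < t → x s ≠ x t + 1) ∧
        (∀ s t : Fin m, s ≠ t → x s ≠ -x t ∧ x s ≠ -x t + 1)}).ncard = n ^ m := by
  have hbij : Set.BijOn (Psi (m := m) (n := n)) Set.univ
      {x : Fin m → ZMod (n + 2 * m) |
        (∀ s : Fin m, 2 * x s ≠ 0 ∧ 2 * x s ≠ 1) ∧
        (∀ s t : Fin m, s ≠ t → x s ≠ x t) ∧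
        (∀ s t : Fin m, s < t → x s ≠ x t + 1) ∧
        (∀ s t : Fin m, s ≠ t → x s ≠ -x t ∧ x s ≠ -x t + 1)} := by
    refine ⟨?_, Psi_injective.injOn, ?_⟩
    · intro g _
      exact Psi_mem hm hn g
    · intro x hx
      obtain ⟨h0, h1, h2, h3⟩ := hx
      exact ⟨fun s => ⟨gg x s, gg_lt hm hn x h0 h1 h3 s⟩, Set.mem_univ _,
        Psi_gg hm hn x h0 h1 h2 h3⟩
  calc ({x : Fin m → ZMod (n + 2 * m) |
        (∀ s : Fin m, 2 * x s ≠ 0 ∧ 2 * x s ≠ 1) ∧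
        (∀ s t : Fin m, s ≠ t → x s ≠ x t) ∧
        (∀ s t : Fin m, s < t → x s ≠ x t + 1) ∧
        (∀ s t : Fin m, s ≠ t → x s ≠ -x t ∧ x s ≠ -x t + 1)}).ncard
      = (Psi (m := m) (n := n) '' Set.univ).ncard := by rw [hbij.image_eq]
    _ = (Set.univ : Set (Fin m → Fin n)).ncard :=
        Set.ncard_image_of_injOn hbij.injOn
    _ = Nat.card (Fin m → Fin n) := Set.ncard_univ _
    _ = n ^ m := by
        rw [Nat.card_eq_fintype_card, Fintype.card_fun, Fintype.card_fin, Fintype.card_fin]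

end ShiCProof

/-- The characteristic quasi-polynomial of the Shi arrangement of type C:
for all sufficiently large `q`, the number of points of `(ZMod q)^m` in the
complement of the Shi arrangement of type C equals `(q - 2m)^m`. -/
theorem shi_typeC_characteristic_quasi_polynomial (m : ℕ) (hm : 1 ≤ m) :
    ∃ N : ℕ, 0 < N ∧ ∀ q : ℕ, N ≤ q →
      ({x : Fin m → ZMod q |
          (∀ s : Fin m, 2 * x s ≠ 0 ∧ 2 * x s ≠ 1) ∧
          (∀ s t : Fin m, s ≠ t → x s ≠ x t) ∧
          (∀ s t : Fin m, s < t → x s ≠ x t + 1) ∧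
          (∀ s t : Fin m, s ≠ t → x s ≠ -x t ∧ x s ≠ -x t + 1)}.ncard : ℤ)
        = ((q : ℤ) - 2 * m) ^ m := by
  refine ⟨2 * m + 1, by omega, fun q hq => ?_⟩
  obtain ⟨n, rfl⟩ : ∃ n, q = n + 2 * m := ⟨q - 2 * m, by omega⟩
  have hn : 1 ≤ n := by omega
  rw [ShiCProof.count m n hm hn]
  push_cast
  ring
end

section
/- Let m >= 1 be an integer. For a positive integer q, let M_D(q) be the set of tuples (x_1,...,x_m) in Z_q^m such that: x_s != x_t for all s != t; x_s != x_t + 1 for all s < t; and x_s != -x_t and x_s != -x_t + 1 for all s != t. Then there exists a positive integer N such that for every integer q >= N, |M_D(q)| = (q - 2m + 2)^m. (This is the characteristic quasi-polynomial of the Shi arrangement of type D; in particular it is an honest polynomial in q.) -/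
namespace ShiDQP

open Finset

/-! ### Arithmetic helpers -/

lemma mul_add_le_le {c a a' o o' : ℕ} (ho' : o' < c) (h : c*a + o ≤ c*a' + o') : a ≤ a' := by
  by_contra hc
  push_neg at hc
  have h2 : c * (a' + 1) ≤ c * a := Nat.mul_le_mul (le_refl c) (Nat.succ_le_of_lt hc)
  have h3 : c * (a' + 1) = c * a' + c := by ring
  omega

lemma mul_add_lt_le {c a a' o o' : ℕ} (ho' : o' < c) (h : c*a + o < c*a' + o') : a ≤ a' :=
  mul_add_le_le ho' (le_of_lt h)

lemma mul_add_lt_of_lt {c a a' o o' : ℕ} (ho : o < c) (h : a < a') : c*a + o < c*a' + o' := by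
  have h2 : c * (a + 1) ≤ c * a' := Nat.mul_le_mul (le_refl c) (Nat.succ_le_of_lt h)
  have h3 : c * (a + 1) = c * a + c := by ring
  omega

lemma mul_add_cancel' {c a a' o o' : ℕ} (ho : o < c) (ho' : o' < c)
    (h : c*a + o = c*a' + o') : a = a' ∧ o = o' := by
  have h1 : a ≤ a' := mul_add_le_le (o := o) ho' (le_of_eq h)
  have h2 : a' ≤ a := mul_add_le_le (o := o') ho (le_of_eq h.symm)
  have : a = a' := le_antisymm h1 h2
  subst this
  omega

/-! ### ZMod casting helpers -/

lemma master_cast {q u v : ℕ} (hq : 0 < q) (hu : u < 2*q) (hv : v < 2*q) :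
    ((u : ZMod q) = (v : ZMod q)) ↔ (u = v ∨ u = v + q ∨ v = u + q) := by
  rw [ZMod.natCast_eq_natCast_iff]
  constructor
  · intro h
    rcases le_total u v with hle | hle
    · have hd := (Nat.modEq_iff_dvd' hle).mp h
      obtain ⟨c, hc⟩ := hd
      have hc2 : c < 2 := by
        by_contra hcge
        push_neg at hcge
        have h5 : q * 2 ≤ q * c := Nat.mul_le_mul (le_refl q) hcge
        omega
      interval_cases c <;> omega
    · have hd := (Nat.modEq_iff_dvd' hle).mp h.symm
      obtain ⟨c, hc⟩ := hd
      have hc2 : c < 2 := by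
        by_contra hcge
        push_neg at hcge
        have h5 : q * 2 ≤ q * c := Nat.mul_le_mul (le_refl q) hcge
        omega
      interval_cases c <;> omega
  · rintro (rfl | h | h)
    · rfl
    · subst h
      show (v + q) % q = v % q
      exact Nat.add_mod_right v q
    · subst h
      show u % q = (u + q) % q
      exact (Nat.add_mod_right u q).symm

lemma neg_natCast {q a : ℕ} (h : a ≤ q) : -((a:ℕ) : ZMod q) = ((q - a : ℕ) : ZMod q) := by
  rw [Nat.cast_sub h, ZMod.natCast_self, zero_sub]


lemma bool_ite_false {b : Bool} (h : b = false) : (if b = true then (1:ℕ) else 0) = 0 := by simp [h]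

lemma bool_ite_true {b : Bool} (h : b = true) : (if b = true then (1:ℕ) else 0) = 1 := by simp [h]

/-! ### the weight `ordv` -/

def ordv (m : ℕ) (s : Bool) (i : ℕ) : ℕ := if s then m + i else m - 1 - i

lemma ordv_lt_two_mul {m i : ℕ} (hi : i < m) (s : Bool) : ordv m s i < 2*m := by
  cases s <;> simp [ordv] <;> omega

lemma ordv_inj {m i i' : ℕ} {s s' : Bool} (hi : i < m) (hi' : i' < m)
    (h : ordv m s i = ordv m s' i') : s = s' ∧ i = i' := by
  cases s <;> cases s' <;> simp [ordv] at h ⊢ <;> omega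

lemma ordv_lt_iff {m i i' : ℕ} (s s' : Bool) (hi' : i' < m) (hii' : i < i') :
    (ordv m s i < ordv m s' i' ↔ s' = true) := by
  cases s <;> cases s' <;> simp [ordv] <;> omega

lemma ordv_gt_iff {m i i' : ℕ} (s s' : Bool) (hi' : i' < m) (hii' : i < i') :
    (ordv m s' i' < ordv m s i ↔ s' = false) := by
  cases s <;> cases s' <;> simp [ordv] <;> omega

/-! ### generic rank -/

def rk {m : ℕ} (w : Fin m → ℕ) (i : Fin m) : ℕ :=
  (Finset.univ.filter (fun i' => w i' < w i)).card

lemma rk_lt_rk {m : ℕ} {w : Fin m → ℕ} {i i' : Fin m} (h : w i < w i') :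
    rk w i < rk w i' := by
  apply Finset.card_lt_card
  rw [Finset.ssubset_iff_of_subset]
  · exact ⟨i, by simp [h], by simp⟩
  · intro x hx
    simp only [Finset.mem_filter, Finset.mem_univ, true_and] at hx ⊢
    omega

lemma rk_le {m : ℕ} (w : Fin m → ℕ) (i : Fin m) : rk w i ≤ m - 1 := by
  have h : (Finset.univ.filter (fun i' => w i' < w i)) ⊆ Finset.univ.erase i := by
    intro x hx
    simp only [Finset.mem_filter, Finset.mem_univ, true_and] at hx
    simp only [Finset.mem_erase, Finset.mem_univ, and_true]
    intro hxi; subst hxi; omega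
  have := Finset.card_le_card h
  simpa [rk, Finset.card_erase_of_mem] using this


/-! ### decode: from `Fin m → Fin K` to a configuration -/

section Decode

variable {m K : ℕ} (f : Fin m → Fin K)

def gf (i : Fin m) : ℕ := (f i : ℕ) / 2

def sgf (i : Fin m) : Bool := decide ((f i : ℕ) % 2 = 1)

def keyf (i : Fin m) : ℕ := 2 * m * gf f i + ordv m (sgf f i) i

def jf (i : Fin m) : ℕ := gf f i + rk (keyf f) i

lemma keyf_inj {i i' : Fin m} (h : keyf f i = keyf f i') : i = i' := by
  have h1 := mul_add_cancel' (ordv_lt_two_mul i.2 (sgf f i)) (ordv_lt_two_mul i'.2 (sgf f i')) h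
  exact Fin.ext (ordv_inj i.2 i'.2 h1.2).2

lemma gf_le_of_keyf_lt {i i' : Fin m} (h : keyf f i < keyf f i') : gf f i ≤ gf f i' :=
  mul_add_lt_le (ordv_lt_two_mul i'.2 (sgf f i')) h

lemma jf_lt_jf {i i' : Fin m} (h : keyf f i < keyf f i') : jf f i < jf f i' := by
  have h1 := gf_le_of_keyf_lt f h
  have h2 := rk_lt_rk (w := keyf f) h
  simp only [jf]
  omega

lemma jf_lt_iff {i i' : Fin m} : jf f i < jf f i' ↔ keyf f i < keyf f i' := by
  constructor
  · intro h
    rcases lt_trichotomy (keyf f i) (keyf f i') with h1 | h1 | h1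
    · exact h1
    · exact absurd (keyf_inj f h1) (by rintro rfl; omega)
    · exact absurd (jf_lt_jf f h1) (by omega)
  · exact jf_lt_jf f

lemma jf_inj {i i' : Fin m} (h : jf f i = jf f i') : i = i' := by
  rcases lt_trichotomy (keyf f i) (keyf f i') with h1 | h1 | h1
  · exact absurd (jf_lt_jf f h1) (by omega)
  · exact keyf_inj f h1
  · exact absurd (jf_lt_jf f h1) (by omega)

lemma jf_lt_R {R : ℕ} (hmR : m ≤ R) (hK : K ≤ 2*(R - m) + 2) (i : Fin m) : jf f i < R := by
  have h1 : (f i : ℕ) < K := (f i).2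
  have h2 := rk_le (keyf f) i
  have h3 : 0 < m := i.pos
  simp only [jf, gf]
  omega

lemma rkf_succ {i i' : Fin m} (h : jf f i' = jf f i + 1) :
    rk (keyf f) i' = rk (keyf f) i + 1 := by
  have hfe : Finset.univ.filter (fun i'' => keyf f i'' < keyf f i') =
      insert i (Finset.univ.filter (fun i'' => keyf f i'' < keyf f i)) := by
    ext x
    simp only [Finset.mem_filter, Finset.mem_univ, true_and, Finset.mem_insert]
    rw [← jf_lt_iff, ← jf_lt_iff]
    constructor
    · intro hx
      rcases Nat.lt_or_ge (jf f x) (jf f i) with h1 | h1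
      · exact Or.inr h1
      · left
        exact jf_inj f (by omega)
    · rintro (rfl | hx) <;> omega
  rw [rk, hfe, Finset.card_insert_of_notMem (by simp), rk]

lemma jf_adj {i i' : Fin m} (h : jf f i' = jf f i + 1) :
    ordv m (sgf f i) i < ordv m (sgf f i') i' := by
  have h1 : keyf f i < keyf f i' := (jf_lt_iff f).mp (by omega)
  have h2 := rkf_succ f h
  have h3 : gf f i = gf f i' := by simp only [jf] at h; omega
  simp only [keyf, ← h3] at h1
  omega

lemma jf_special {R : ℕ} (hmR : m ≤ R) (hK : K = 2*(R - m) + 1) {i : Fin m}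
    (h : jf f i = R - 1) : sgf f i = false := by
  have h1 : (f i : ℕ) < K := (f i).2
  have h2 := rk_le (keyf f) i
  have h3 : 0 < m := i.pos
  have h4 : (f i : ℕ) = 2 * (R - m) := by simp only [jf, gf] at h; omega
  simp only [sgf, h4]
  rw [decide_eq_false_iff_not]
  omega

end Decode


/-! ### encode: from a configuration back to `Fin m → Fin K` -/

section Encode

variable {m R : ℕ} (j : Fin m → ℕ) (s : Fin m → Bool)

def gc (i : Fin m) : ℕ := ((Finset.range (j i)).filter (fun l => ∀ i', j i' ≠ l)).card

def keyc (i : Fin m) : ℕ := 2 * m * gc j i + ordv m (s i) i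

def enc (i : Fin m) : ℕ := 2 * gc j i + (if s i then 1 else 0)

lemma chain (hadj : ∀ i i', j i' = j i + 1 → ordv m (s i) i < ordv m (s i') i') :
    ∀ (d : ℕ) (i i' : Fin m), j i' = j i + (d+1) →
      (∀ l, j i < l → l < j i' → ∃ i'', j i'' = l) →
      ordv m (s i) i < ordv m (s i') i' := by
  intro d
  induction d with
  | zero => intro i i' h _; exact hadj i i' (by omega)
  | succ d ih =>
    intro i i' h hocc
    obtain ⟨i'', hi''⟩ := hocc (j i + (d+1)) (by omega) (by omega)
    have h1 := ih i i'' (by omega) (fun l hl1 hl2 => hocc l hl1 (by omega))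
    have h2 := hadj i'' i' (by omega)
    omega

lemma gc_mono {i i' : Fin m} (h : j i ≤ j i') : gc j i ≤ gc j i' :=
  Finset.card_le_card (Finset.filter_subset_filter _ (Finset.range_subset_range.mpr h))

lemma unocc_card_lt {i : Fin m} {l B : ℕ} (hl1 : j i ≤ l) (hl2 : l < B)
    (hun : ∀ i'', j i'' ≠ l) :
    gc j i < ((Finset.range B).filter (fun t => ∀ i', j i' ≠ t)).card := by
  apply Finset.card_lt_card
  rw [Finset.ssubset_iff_of_subset]
  · refine ⟨l, ?_, ?_⟩
    · simp only [Finset.mem_filter, Finset.mem_range]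
      exact ⟨hl2, hun⟩
    · simp only [Finset.mem_filter, Finset.mem_range]
      rintro ⟨h1, -⟩
      omega
  · apply Finset.filter_subset_filter
    rw [Finset.range_subset_range]
    omega

lemma gc_lt_of_unocc {i i' : Fin m} {l : ℕ} (hl1 : j i ≤ l) (hl2 : l < j i')
    (hun : ∀ i'', j i'' ≠ l) : gc j i < gc j i' :=
  unocc_card_lt j hl1 hl2 hun

lemma keyc_lt (hinj : Function.Injective j)
    (hadj : ∀ i i', j i' = j i + 1 → ordv m (s i) i < ordv m (s i') i')
    {i i' : Fin m} (h : j i < j i') : keyc j s i < keyc j s i' := by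
  rcases Nat.lt_or_ge (gc j i) (gc j i') with hg | hg
  · exact mul_add_lt_of_lt (ordv_lt_two_mul i.2 (s i)) hg
  · have hg2 : gc j i = gc j i' := le_antisymm (gc_mono j (le_of_lt h)) hg
    have hocc : ∀ l, j i < l → l < j i' → ∃ i'', j i'' = l := by
      intro l h1 h2
      by_contra hno
      push_neg at hno
      exact absurd (gc_lt_of_unocc j (le_of_lt h1) h2 hno) (by omega)
    have := chain j s hadj (j i' - j i - 1) i i' (by omega) hocc
    simp only [keyc, hg2]
    omega

lemma keyc_lt_iff (hinj : Function.Injective j)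
    (hadj : ∀ i i', j i' = j i + 1 → ordv m (s i) i < ordv m (s i') i')
    {i i' : Fin m} : j i < j i' ↔ keyc j s i < keyc j s i' := by
  constructor
  · exact keyc_lt j s hinj hadj
  · intro h
    rcases lt_trichotomy (j i) (j i') with h1 | h1 | h1
    · exact h1
    · exact absurd (hinj h1) (by rintro rfl; omega)
    · exact absurd (keyc_lt j s hinj hadj h1) (by omega)

lemma card_occ (hinj : Function.Injective j) (B : ℕ) :
    ((Finset.range B).filter (fun l => ¬ ∀ i', j i' ≠ l)).card
      = (Finset.univ.filter (fun i' => j i' < B)).card := by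
  have he : (Finset.range B).filter (fun l => ¬ ∀ i', j i' ≠ l)
      = (Finset.univ.filter (fun i' => j i' < B)).image j := by
    ext l
    simp only [Finset.mem_filter, Finset.mem_range, Finset.mem_image, Finset.mem_univ,
      true_and, not_forall, ne_eq, not_not]
    constructor
    · rintro ⟨hlB, i', rfl⟩
      exact ⟨i', hlB, rfl⟩
    · rintro ⟨i', hlt, rfl⟩
      exact ⟨hlt, i', rfl⟩
  rw [he, Finset.card_image_of_injective _ hinj]

lemma gc_add_rk (hinj : Function.Injective j) (i : Fin m) : gc j i + rk j i = j i := by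
  have h := Finset.card_filter_add_card_filter_not
    (s := Finset.range (j i)) (p := fun l => ∀ i', j i' ≠ l)
  rw [card_occ j hinj (j i), Finset.card_range] at h
  exact h

lemma gc_total (hinj : Function.Injective j) (hbd : ∀ i, j i < R) :
    ((Finset.range R).filter (fun l => ∀ i', j i' ≠ l)).card + m = R := by
  have h := Finset.card_filter_add_card_filter_not
    (s := Finset.range R) (p := fun l => ∀ i', j i' ≠ l)
  rw [card_occ j hinj R, Finset.card_range] at h
  have h2 : Finset.univ.filter (fun i' => j i' < R) = Finset.univ :=
    Finset.filter_true_of_mem (fun i _ => hbd i)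
  rw [h2, Finset.card_univ, Fintype.card_fin] at h
  exact h

lemma gc_le_total (hinj : Function.Injective j) (hbd : ∀ i, j i < R) (i : Fin m) :
    gc j i + m ≤ R := by
  have h1 : gc j i ≤ ((Finset.range R).filter (fun l => ∀ i', j i' ≠ l)).card :=
    Finset.card_le_card (Finset.filter_subset_filter _ (Finset.range_subset_range.mpr (le_of_lt (hbd i))))
  have h2 := gc_total j hinj hbd
  omega

lemma enc_lt {K : ℕ} (hinj : Function.Injective j) (hbd : ∀ i, j i < R)
    (hadj : ∀ i i', j i' = j i + 1 → ordv m (s i) i < ordv m (s i') i')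
    (hK : K = 2*(R-m)+2 ∨ (K = 2*(R-m)+1 ∧ ∀ i, j i = R-1 → s i = false))
    (i : Fin m) : enc j s i < K := by
  have h1 := gc_le_total j hinj hbd i
  have hm0 : 0 < m := i.pos
  rcases hK with hK | ⟨hK, hforce⟩
  · simp only [enc]
    cases s i <;> simp <;> omega
  · by_cases hcrit : gc j i = R - m ∧ s i = true
    · exfalso
      obtain ⟨hg, hs⟩ := hcrit
      have hRm : m ≤ R := by omega
      have hocc : ∀ l, j i ≤ l → l < R → ∃ i'', j i'' = l := by
        intro l hl1 hl2
        by_contra hno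
        push_neg at hno
        have h3 := unocc_card_lt j hl1 hl2 hno
        have h4 := gc_total j hinj hbd
        omega
      obtain ⟨i0, hi0⟩ := hocc (R-1) (by have := hbd i; omega) (by omega)
      have hs0 : s i0 = false := hforce i0 hi0
      rcases Nat.lt_or_ge (j i) (R-1) with hlt | hge
      · have hc := chain j s hadj (R - 1 - j i - 1) i i0 (by omega)
          (fun l hl1 hl2 => hocc l (by omega) (by omega))
        simp only [ordv, hs, hs0] at hc
        simp at hc
        omega
      · have hji : j i = R - 1 := by have := hbd i; omega
        have := hforce i hji
        rw [hs] at this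
        simp at this
    · simp only [enc]
      rcases Bool.eq_false_or_eq_true (s i) with hs | hs
      · rw [hs]; simp
        have : ¬ (gc j i = R - m) := fun hgg => hcrit ⟨hgg, hs⟩
        omega
      · rw [hs]; simp; omega

end Encode


/-! ### roundtrips -/

section Roundtrip

variable {m K R : ℕ}

-- decode ∘ encode = id
lemma sgf_enc (j : Fin m → ℕ) (s : Fin m → Bool) (hencK : ∀ i, enc j s i < K) (i : Fin m) :
    sgf (fun i => (⟨enc j s i, hencK i⟩ : Fin K)) i = s i := by
  rcases Bool.eq_false_or_eq_true (s i) with hsi | hsi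
  · simp only [sgf, enc]
    simp only [bool_ite_true hsi]
    rw [hsi, decide_eq_true_eq]
    omega
  · simp only [sgf, enc]
    simp only [bool_ite_false hsi]
    rw [hsi, decide_eq_false_iff_not]
    omega

lemma gf_enc (j : Fin m → ℕ) (s : Fin m → Bool) (hencK : ∀ i, enc j s i < K) (i : Fin m) :
    gf (fun i => (⟨enc j s i, hencK i⟩ : Fin K)) i = gc j i := by
  rcases Bool.eq_false_or_eq_true (s i) with hsi | hsi
  · simp only [gf, enc]
    simp only [bool_ite_true hsi]
    omega
  · simp only [gf, enc]
    simp only [bool_ite_false hsi]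
    omega

lemma keyf_enc (j : Fin m → ℕ) (s : Fin m → Bool) (hencK : ∀ i, enc j s i < K) (i : Fin m) :
    keyf (fun i => (⟨enc j s i, hencK i⟩ : Fin K)) i = keyc j s i := by
  simp only [keyf, keyc, gf_enc, sgf_enc]

lemma rk_keyf_enc (j : Fin m → ℕ) (s : Fin m → Bool) (hencK : ∀ i, enc j s i < K)
    (hinj : Function.Injective j)
    (hadj : ∀ i i', j i' = j i + 1 → ordv m (s i) i < ordv m (s i') i') (i : Fin m) :
    rk (keyf (fun i => (⟨enc j s i, hencK i⟩ : Fin K))) i = rk j i := by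
  unfold rk
  congr 1
  apply Finset.filter_congr
  intro x _
  rw [keyf_enc j s hencK, keyf_enc j s hencK]
  exact (keyc_lt_iff j s hinj hadj).symm

lemma jf_enc (j : Fin m → ℕ) (s : Fin m → Bool) (hencK : ∀ i, enc j s i < K)
    (hinj : Function.Injective j)
    (hadj : ∀ i i', j i' = j i + 1 → ordv m (s i) i < ordv m (s i') i') (i : Fin m) :
    jf (fun i => (⟨enc j s i, hencK i⟩ : Fin K)) i = j i := by
  simp only [jf, gf_enc j s hencK, rk_keyf_enc j s hencK hinj hadj]
  exact gc_add_rk j hinj i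

-- encode ∘ decode = id
lemma jf_injective (f : Fin m → Fin K) : Function.Injective (jf f) := fun _ _ h => jf_inj f h

lemma rk_jf (f : Fin m → Fin K) (i : Fin m) : rk (jf f) i = rk (keyf f) i := by
  unfold rk
  congr 1
  apply Finset.filter_congr
  intro x _
  exact jf_lt_iff f

lemma gc_jf (f : Fin m → Fin K) (i : Fin m) : gc (jf f) i = gf f i := by
  have h := gc_add_rk (jf f) (jf_injective f) i
  rw [rk_jf f i] at h
  simp only [jf] at h
  omega

lemma enc_jf (f : Fin m → Fin K) (i : Fin m) : enc (jf f) (sgf f) i = (f i : ℕ) := by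
  rcases Bool.eq_false_or_eq_true (sgf f i) with hs | hs
  · have h2 := hs
    simp only [sgf, decide_eq_true_eq] at h2
    simp only [enc, gc_jf f i]
    simp only [bool_ite_true hs]
    simp only [gf]
    omega
  · have h2 := hs
    simp only [sgf, decide_eq_false_iff_not] at h2
    simp only [enc, gc_jf f i]
    simp only [bool_ite_false hs]
    simp only [gf]
    omega

end Roundtrip


/-! ### the outer layer: ZMod conditions -/

def decZ (q a : ℕ) (s : Bool) : ZMod q := cond s ((a+1 : ℕ) : ZMod q) (-((a:ℕ) : ZMod q))

def decN (q a : ℕ) (s : Bool) : ℕ := cond s (a+1) (q - a)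

lemma decZ_eq (q a : ℕ) (s : Bool) (ha : a ≤ q) : decZ q a s = ((decN q a s : ℕ) : ZMod q) := by
  cases s
  · simp only [decZ, decN, cond_false]
    exact neg_natCast ha
  · rfl

lemma six_iff (q : ℕ) (hq3 : 3 ≤ q) (da db : ℕ) (hda : da ≤ q) (hdb : db ≤ q) :
    (((da : ZMod q) ≠ db) ∧ ((da:ZMod q) ≠ (db:ZMod q) + 1) ∧ ((da:ZMod q) ≠ -(db:ZMod q)) ∧
     ((da:ZMod q) ≠ -(db:ZMod q)+1) ∧ ((db:ZMod q) ≠ -(da:ZMod q)) ∧ ((db:ZMod q) ≠ -(da:ZMod q)+1))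
    ↔ (¬(da = db ∨ da = db + q ∨ db = da + q) ∧
       ¬(da = db+1 ∨ da = db+1+q ∨ db+1 = da+q) ∧
       ¬(da = q-db ∨ da = q-db+q ∨ q-db = da+q) ∧
       ¬(da = q-db+1 ∨ da = q-db+1+q ∨ q-db+1 = da+q) ∧
       ¬(db = q-da ∨ db = q-da+q ∨ q-da = db+q) ∧
       ¬(db = q-da+1 ∨ db = q-da+1+q ∨ q-da+1 = db+q)) := by
  have e2 : ((db : ℕ) : ZMod q) + 1 = ((db + 1 : ℕ) : ZMod q) := by push_cast; ring
  have e3 : -((db : ℕ) : ZMod q) = ((q - db : ℕ) : ZMod q) := neg_natCast hdb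
  have e4 : -((db : ℕ) : ZMod q) + 1 = ((q - db + 1 : ℕ) : ZMod q) := by rw [e3]; push_cast; ring
  have e5 : -((da : ℕ) : ZMod q) = ((q - da : ℕ) : ZMod q) := neg_natCast hda
  have e6 : -((da : ℕ) : ZMod q) + 1 = ((q - da + 1 : ℕ) : ZMod q) := by rw [e5]; push_cast; ring
  rw [e2, e4, e3, e6, e5]
  exact and_congr (not_congr (master_cast (by omega) (by omega) (by omega)))
    (and_congr (not_congr (master_cast (by omega) (by omega) (by omega)))
      (and_congr (not_congr (master_cast (by omega) (by omega) (by omega)))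
        (and_congr (not_congr (master_cast (by omega) (by omega) (by omega)))
          (and_congr (not_congr (master_cast (by omega) (by omega) (by omega)))
            (not_congr (master_cast (by omega) (by omega) (by omega)))))))

lemma pair_iff (q R : ℕ) (hq2 : 2*R = q ∨ 2*R = q + 1) (hR : 2 ≤ R)
    (a b : ℕ) (sa sb : Bool) (ha : a < R) (hb : b < R)
    (haf : sa = true → 2*(a+1) ≤ q) (hbf : sb = true → 2*(b+1) ≤ q) :
    ((decZ q a sa ≠ decZ q b sb) ∧
     (decZ q a sa ≠ decZ q b sb + 1) ∧
     (decZ q a sa ≠ -decZ q b sb) ∧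
     (decZ q a sa ≠ -decZ q b sb + 1) ∧
     (decZ q b sb ≠ -decZ q a sa) ∧
     (decZ q b sb ≠ -decZ q a sa + 1)) ↔
    (a ≠ b ∧ (b = a + 1 → sb = true) ∧ (a = b + 1 → sb = false)) := by
  have hq3 : 3 ≤ q := by omega
  have hdaq : decN q a sa ≤ q := by cases sa <;> simp only [decN, cond_true, cond_false] <;> omega
  have hdbq : decN q b sb ≤ q := by cases sb <;> simp only [decN, cond_true, cond_false] <;> omega
  rw [decZ_eq q a sa (by omega), decZ_eq q b sb (by omega)]
  rw [six_iff q hq3 (decN q a sa) (decN q b sb) hdaq hdbq]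
  rcases Bool.eq_false_or_eq_true sa with hsa | hsa <;>
    rcases Bool.eq_false_or_eq_true sb with hsb | hsb
  · have ha2 := haf hsa
    have hb2 := hbf hsb
    simp only [hsa, hsb, decN, cond_true]
    simp only [eq_self_iff_true, imp_true_iff, true_and, and_true]
    simp
    omega
  · have ha2 := haf hsa
    simp only [hsa, hsb, decN, cond_true, cond_false]
    simp
    omega
  · have hb2 := hbf hsb
    simp only [hsa, hsb, decN, cond_true, cond_false]
    simp
    omega
  · simp only [hsa, hsb, decN, cond_true, cond_false]
    simp
    omega


/-! ### val-based inverse of decZ -/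

def sxv (q : ℕ) (x : ZMod q) : Bool := decide (1 ≤ x.val ∧ 2 * x.val ≤ q)

def jxv (q : ℕ) (x : ZMod q) : ℕ :=
  if 1 ≤ x.val ∧ 2 * x.val ≤ q then x.val - 1 else (if x.val = 0 then 0 else q - x.val)

lemma decZ_jxv (q : ℕ) [NeZero q] (x : ZMod q) : decZ q (jxv q x) (sxv q x) = x := by
  have hv : x.val < q := x.val_lt
  have hx : ((x.val : ℕ) : ZMod q) = x := by simp [ZMod.natCast_val, ZMod.cast_id]
  by_cases h1 : 1 ≤ x.val ∧ 2 * x.val ≤ q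
  · have hs : sxv q x = true := by simp [sxv, h1]
    rw [hs]
    simp only [decZ, cond_true, jxv, if_pos h1]
    have h2 : x.val - 1 + 1 = x.val := by omega
    rw [h2, hx]
  · have hs : sxv q x = false := by simp only [sxv, decide_eq_false_iff_not]; exact h1
    rw [hs]
    simp only [decZ, cond_false, jxv, if_neg h1]
    by_cases h0 : x.val = 0
    · rw [if_pos h0]
      have : x = 0 := by rwa [← ZMod.val_eq_zero]
      simp [this]
    · rw [if_neg h0]
      rw [neg_natCast (by omega : q - x.val ≤ q)]
      have h3 : q - (q - x.val) = x.val := by omega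
      rw [h3, hx]

lemma jxv_lt (q R : ℕ) [NeZero q] (hq2 : 2*R = q ∨ 2*R = q+1) (hR : 1 ≤ R) (x : ZMod q) :
    jxv q x < R := by
  have hv : x.val < q := x.val_lt
  simp only [jxv]
  by_cases h1 : 1 ≤ x.val ∧ 2 * x.val ≤ q
  · rw [if_pos h1]; omega
  · rw [if_neg h1]
    by_cases h0 : x.val = 0
    · rw [if_pos h0]; omega
    · rw [if_neg h0]
      push_neg at h1
      omega

lemma jxv_force (q R : ℕ) [NeZero q] (hq2 : 2*R = q + 1) (x : ZMod q)
    (h : jxv q x = R - 1) (hR : 1 ≤ R) : sxv q x = false := by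
  have hv : x.val < q := x.val_lt
  simp only [sxv, decide_eq_false_iff_not]
  rintro ⟨h1, h2⟩
  simp only [jxv, if_pos (And.intro h1 h2)] at h
  omega

lemma sxv_le (q : ℕ) (x : ZMod q) (h : sxv q x = true) : 2*(jxv q x + 1) ≤ q := by
  simp only [sxv, decide_eq_true_eq] at h
  simp only [jxv, if_pos h]
  omega

lemma jxv_decZ (q R : ℕ) [NeZero q] (hq2 : 2*R = q ∨ 2*R = q + 1) (hR : 1 ≤ R)
    (a : ℕ) (s : Bool) (ha : a < R) (hforce : s = true → 2*(a+1) ≤ q) :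
    jxv q (decZ q a s) = a ∧ sxv q (decZ q a s) = s := by
  have hq1 : 1 ≤ q := by omega
  rcases Bool.eq_false_or_eq_true s with hs | hs
  · -- s = true : decZ = ↑(a+1)
    subst hs
    have h2 : 2*(a+1) ≤ q := hforce rfl
    have hlt : a + 1 < q := by omega
    have hval : (decZ q a true).val = a + 1 := by
      simp only [decZ, cond_true]
      exact ZMod.val_cast_of_lt hlt
    have hcond : 1 ≤ (decZ q a true).val ∧ 2 * (decZ q a true).val ≤ q := by
      rw [hval]; omega
    constructor
    · simp only [jxv, hval]
      rw [if_pos (show 1 ≤ a+1 ∧ 2*(a+1) ≤ q from ⟨by omega, h2⟩)]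
      omega
    · simp only [sxv, decide_eq_true_eq, hval]
      exact ⟨by omega, by omega⟩
  · -- s = false : decZ = -↑a
    subst hs
    by_cases h0 : a = 0
    · subst h0
      have hval : (decZ q 0 false).val = 0 := by
        simp only [decZ, cond_false, Nat.cast_zero, neg_zero]
        exact ZMod.val_zero
      have hcond : ¬ (1 ≤ (decZ q 0 false).val ∧ 2 * (decZ q 0 false).val ≤ q) := by
        rw [hval]; omega
      constructor
      · simp only [jxv, hval]
        rw [if_neg (show ¬(1 ≤ 0 ∧ 2*0 ≤ q) by omega)]
        simp
      · simp only [sxv, decide_eq_false_iff_not, hval]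
        omega
    · have hlt : q - a < q := by omega
      have hval : (decZ q a false).val = q - a := by
        simp only [decZ, cond_false]
        rw [neg_natCast (by omega : a ≤ q)]
        exact ZMod.val_cast_of_lt hlt
      have hcond : ¬ (1 ≤ (decZ q a false).val ∧ 2 * (decZ q a false).val ≤ q) := by
        rw [hval]
        rintro ⟨u1, u2⟩
        omega
      have hne : ¬ ((decZ q a false).val = 0) := by rw [hval]; omega
      constructor
      · simp only [jxv, hval]
        rw [if_neg (show ¬(1 ≤ q - a ∧ 2*(q-a) ≤ q) by omega), if_neg (show ¬(q - a = 0) by omega)]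
        omega
      · simp only [sxv, decide_eq_false_iff_not, hval]
        omega


/-! ### assembly -/

def Phi (m K q : ℕ) : (Fin m → Fin K) → (Fin m → ZMod q) :=
  fun f i => decZ q (jf f i) (sgf f i)

theorem core_count (m R q : ℕ) (hm : 1 ≤ m) (hmR : m + 2 ≤ R) (hq2 : 2*R = q ∨ 2*R = q+1)
    [NeZero q] :
    ({x : Fin m → ZMod q |
        (∀ s t : Fin m, s ≠ t → x s ≠ x t) ∧
        (∀ s t : Fin m, s < t → x s ≠ x t + 1) ∧
        (∀ s t : Fin m, s ≠ t → x s ≠ -x t ∧ x s ≠ -x t + 1)}).ncard = (q - 2*m + 2) ^ m := by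
  have hq4 : 2*m + 2 ≤ q := by omega
  set K := q - 2*m + 2 with hKdef
  have hR2 : 2 ≤ R := by omega
  have hK : K ≤ 2*(R - m) + 2 := by omega
  -- decode facts
  have jbd : ∀ (f : Fin m → Fin K) (i : Fin m), jf f i < R :=
    fun f i => jf_lt_R f (by omega) hK i
  have hsfb : ∀ (f : Fin m → Fin K) (i : Fin m), sgf f i = true → 2*(jf f i + 1) ≤ q := by
    intro f i hs
    rcases hq2 with h | h
    · have := jbd f i; omega
    · have hKo : K = 2*(R-m)+1 := by omega
      have hne : jf f i ≠ R - 1 := by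
        intro hh
        have := jf_special f (by omega) hKo hh
        rw [this] at hs
        simp at hs
      have := jbd f i
      omega
  -- membership of decoded points
  have hmem : ∀ f : Fin m → Fin K,
      (∀ s t : Fin m, s ≠ t → Phi m K q f s ≠ Phi m K q f t) ∧
      (∀ s t : Fin m, s < t → Phi m K q f s ≠ Phi m K q f t + 1) ∧
      (∀ s t : Fin m, s ≠ t → Phi m K q f s ≠ -Phi m K q f t ∧ Phi m K q f s ≠ -Phi m K q f t + 1) := by
    intro f
    have pairs : ∀ i i' : Fin m, (i:ℕ) < (i':ℕ) →
        (Phi m K q f i ≠ Phi m K q f i' ∧ Phi m K q f i ≠ Phi m K q f i' + 1 ∧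
         Phi m K q f i ≠ -Phi m K q f i' ∧ Phi m K q f i ≠ -Phi m K q f i' + 1 ∧
         Phi m K q f i' ≠ -Phi m K q f i ∧ Phi m K q f i' ≠ -Phi m K q f i + 1) := by
      intro i i' hii'
      apply (pair_iff q R hq2 hR2 (jf f i) (jf f i') (sgf f i) (sgf f i')
        (jbd f i) (jbd f i') (hsfb f i) (hsfb f i')).mpr
      refine ⟨?_, ?_, ?_⟩
      · intro hh
        have := jf_inj f hh
        subst this
        omega
      · intro hh
        exact (ordv_lt_iff _ _ i'.2 hii').mp (jf_adj f hh)
      · intro hh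
        exact (ordv_gt_iff (s := sgf f i) _ i'.2 hii').mp (jf_adj f hh)
    refine ⟨?_, ?_, ?_⟩
    · intro s t hst
      rcases lt_or_gt_of_ne (show (s:ℕ) ≠ (t:ℕ) from fun h => hst (Fin.ext h)) with h | h
      · exact (pairs s t h).1
      · exact fun hh => (pairs t s h).1 hh.symm
    · intro s t hst
      exact (pairs s t (Fin.lt_def.mp hst)).2.1
    · intro s t hst
      rcases lt_or_gt_of_ne (show (s:ℕ) ≠ (t:ℕ) from fun h => hst (Fin.ext h)) with h | h
      · exact ⟨(pairs s t h).2.2.1, (pairs s t h).2.2.2.1⟩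
      · exact ⟨(pairs t s h).2.2.2.2.1, (pairs t s h).2.2.2.2.2⟩
  -- injectivity
  have hPhiInj : Function.Injective (Phi m K q) := by
    intro f f' h
    have hjs : ∀ i, jf f i = jf f' i ∧ sgf f i = sgf f' i := by
      intro i
      have h1 : decZ q (jf f i) (sgf f i) = decZ q (jf f' i) (sgf f' i) := congrFun h i
      have e1 := jxv_decZ q R hq2 (by omega) (jf f i) (sgf f i) (jbd f i) (fun hs => hsfb f i hs)
      have e2 := jxv_decZ q R hq2 (by omega) (jf f' i) (sgf f' i) (jbd f' i) (fun hs => hsfb f' i hs)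
      rw [h1] at e1
      exact ⟨e1.1.symm.trans e2.1, e1.2.symm.trans e2.2⟩
    have hj : jf f = jf f' := funext fun i => (hjs i).1
    have hs : sgf f = sgf f' := funext fun i => (hjs i).2
    funext i
    apply Fin.ext
    rw [← enc_jf f i, ← enc_jf f' i, hj, hs]
  -- surjectivity
  have hsub : ∀ x : Fin m → ZMod q,
      ((∀ s t : Fin m, s ≠ t → x s ≠ x t) ∧
       (∀ s t : Fin m, s < t → x s ≠ x t + 1) ∧
       (∀ s t : Fin m, s ≠ t → x s ≠ -x t ∧ x s ≠ -x t + 1)) →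
      ∃ f : Fin m → Fin K, Phi m K q f = x := by
    intro x hx
    obtain ⟨hx1, hx2, hx3⟩ := hx
    set jfun : Fin m → ℕ := fun i => jxv q (x i) with hjfun
    set sfun : Fin m → Bool := fun i => sxv q (x i) with hsfun
    have hbd : ∀ i, jfun i < R := fun i => jxv_lt q R hq2 (by omega) (x i)
    have hfb : ∀ i, sfun i = true → 2*(jfun i + 1) ≤ q := fun i h => sxv_le q (x i) h
    have hdec : ∀ i, decZ q (jfun i) (sfun i) = x i := fun i => decZ_jxv q (x i)
    have triple : ∀ i i' : Fin m, (i:ℕ) < (i':ℕ) →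
        (jfun i ≠ jfun i' ∧ (jfun i' = jfun i + 1 → sfun i' = true) ∧
         (jfun i = jfun i' + 1 → sfun i' = false)) := by
      intro i i' hii'
      have hne : i ≠ i' := fun hh => by rw [hh] at hii'; omega
      apply (pair_iff q R hq2 hR2 (jfun i) (jfun i') (sfun i) (sfun i')
        (hbd i) (hbd i') (hfb i) (hfb i')).mp
      rw [hdec i, hdec i']
      exact ⟨hx1 i i' hne, hx2 i i' (Fin.lt_def.mpr hii'), (hx3 i i' hne).1,
        (hx3 i i' hne).2, (hx3 i' i hne.symm).1, (hx3 i' i hne.symm).2⟩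
    have hinj : Function.Injective jfun := by
      intro i i' hh
      by_contra hne
      rcases lt_or_gt_of_ne (show (i:ℕ) ≠ (i':ℕ) from fun hc => hne (Fin.ext hc)) with h | h
      · exact (triple i i' h).1 hh
      · exact (triple i' i h).1 hh.symm
    have hadj : ∀ i i', jfun i' = jfun i + 1 → ordv m (sfun i) i < ordv m (sfun i') i' := by
      intro i i' hh
      rcases lt_trichotomy ((i:ℕ)) ((i':ℕ)) with h | h | h
      · exact (ordv_lt_iff _ _ i'.2 h).mpr ((triple i i' h).2.1 hh)
      · exfalso
        have : i = i' := Fin.ext h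
        subst this
        omega
      · exact (ordv_gt_iff (s := sfun i') _ i.2 h).mpr ((triple i' i h).2.2 hh)
    have hencK : ∀ i, enc jfun sfun i < K := by
      intro i
      apply enc_lt jfun sfun hinj hbd hadj ?_ i
      rcases hq2 with h | h
      · left; omega
      · right
        exact ⟨by omega, fun i0 h0 => jxv_force q R h (x i0) h0 (by omega)⟩
    refine ⟨fun i => ⟨enc jfun sfun i, hencK i⟩, ?_⟩
    funext i
    show decZ q (jf _ i) (sgf _ i) = x i
    rw [jf_enc jfun sfun hencK hinj hadj i, sgf_enc jfun sfun hencK i]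
    exact hdec i
  -- counting
  have hrange : {x : Fin m → ZMod q |
        (∀ s t : Fin m, s ≠ t → x s ≠ x t) ∧
        (∀ s t : Fin m, s < t → x s ≠ x t + 1) ∧
        (∀ s t : Fin m, s ≠ t → x s ≠ -x t ∧ x s ≠ -x t + 1)} = Set.range (Phi m K q) := by
    apply Set.eq_of_subset_of_subset
    · intro x hx
      exact hsub x hx
    · rintro x ⟨f, rfl⟩
      exact hmem f
  rw [hrange, ← Set.image_univ, Set.ncard_image_of_injective _ hPhiInj, Set.ncard_univ]
  rw [Nat.card_eq_fintype_card]
  simp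

end ShiDQP


/-- The characteristic quasi-polynomial of the Shi arrangement of type D:
for all sufficiently large `q`, the number of points of `(ZMod q)^m` in the
complement of the Shi arrangement of type D equals `(q - 2m + 2)^m`. -/
theorem shi_typeD_characteristic_quasi_polynomial (m : ℕ) (hm : 1 ≤ m) :
    ∃ N : ℕ, 0 < N ∧ ∀ q : ℕ, N ≤ q →
      ({x : Fin m → ZMod q |
          (∀ s t : Fin m, s ≠ t → x s ≠ x t) ∧
          (∀ s t : Fin m, s < t → x s ≠ x t + 1) ∧
          (∀ s t : Fin m, s ≠ t → x s ≠ -x t ∧ x s ≠ -x t + 1)}.ncard : ℤ)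
        = ((q : ℤ) - 2 * m + 2) ^ m := by
  refine ⟨2*m + 4, by omega, ?_⟩
  intro q hq
  haveI : NeZero q := ⟨by omega⟩
  have h2 : ((q - 2*m + 2 : ℕ) : ℤ) = (q : ℤ) - 2*m + 2 := by omega
  have h := ShiDQP.core_count m ((q+1)/2) q hm (by omega) (by omega)
  rw [h, Nat.cast_pow, h2]
end

section
/- Let m >= 1 and fix i in {1,...,m}. For a positive integer q, let M(q) be the set of tuples (x_1,...,x_m) in Z_q^m such that: 2x_i = 0; 2x_s != 0 and 2x_s != 1 for all s != i; x_s != x_t for all s != t; x_s != x_t + 1 for all s < t; and x_s != -x_t and x_s != -x_t + 1 for all s != t. Then there exists a positive integer N such that, writing T = q - 2m, for every odd integer q >= N one has |M(q)| = T^(m-i) * (T+1)^(i-1), and for every even integer q >= N one has |M(q)| = 2 * T^(m-i) * (T+1)^(i-1). -/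
set_option maxHeartbeats 1000000

def cm (r1 r2 v : ℕ) : ℕ := if v < r1 then v else if v < r2 then v - 1 else v - 2

def hmp (r1 r2 z : ℕ) : ℕ := if z < r1 then z else if z + 1 < r2 then z + 1 else z + 2

/-- hypothesis bundle: `a` is a legal deleted value, `r1 r2` the deleted pair. -/
def HA (q a r1 r2 : ℕ) : Prop :=
  6 ≤ q ∧ 1 ≤ a ∧ a < q ∧ 2*a ≠ q ∧ 2*a ≠ q + 1 ∧ a ≠ 1 ∧
    ((r1 = a ∧ r2 = q - a ∧ 2*a < q) ∨ (r1 = q - a ∧ r2 = a ∧ q < 2*a))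

/-- hypothesis bundle: `w` is a legal surviving value. -/
def HW (q a w : ℕ) : Prop := w < q ∧ w ≠ a ∧ w + a ≠ q ∧ w + a ≠ q + 1 ∧ w + a ≠ 1

lemma cm_bound {q a r1 r2 : ℕ} (hA : HA q a r1 r2) {v : ℕ} (hv : HW q a v) :
    cm r1 r2 v < q - 2 := by
  obtain ⟨h1,h2,h3,h4,h5,h6,h7⟩ := hA; obtain ⟨g1,g2,g3,g4,g5⟩ := hv
  rcases h7 with ⟨rfl, rfl, hord⟩ | ⟨rfl, rfl, hord⟩ <;> (unfold cm; split_ifs <;> omega)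

lemma cm_zero {q a r1 r2 : ℕ} (hA : HA q a r1 r2) : cm r1 r2 0 = 0 := by
  obtain ⟨h1,h2,h3,h4,h5,h6,h7⟩ := hA
  rcases h7 with ⟨rfl, rfl, hord⟩ | ⟨rfl, rfl, hord⟩ <;> (unfold cm; split_ifs <;> omega)

lemma cm_cond3 {q a r1 r2 : ℕ} (hA : HA q a r1 r2) {v : ℕ} (hv : HW q a v)
    (h0 : v ≠ 0) (h1 : v ≠ 1) (h2 : 2*v ≠ q) (h3 : 2*v ≠ q + 1) :
    cm r1 r2 v ≠ 0 ∧ 2 * cm r1 r2 v ≠ q - 2 ∧ 2 * cm r1 r2 v ≠ q - 1 := by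
  obtain ⟨h1',h2',h3',h4',h5',h6',h7'⟩ := hA; obtain ⟨g1,g2,g3,g4,g5⟩ := hv
  rcases h7' with ⟨rfl, rfl, hord⟩ | ⟨rfl, rfl, hord⟩ <;> (unfold cm; split_ifs <;> omega)

lemma cm_inj {q a r1 r2 : ℕ} (hA : HA q a r1 r2) {u v : ℕ}
    (hu : HW q a u) (hv : HW q a v) (huv : u ≠ v) : cm r1 r2 u ≠ cm r1 r2 v := by
  obtain ⟨h1,h2,h3,h4,h5,h6,h7⟩ := hA
  obtain ⟨g1,g2,g3,g4,g5⟩ := hu; obtain ⟨f1,f2,f3,f4,f5⟩ := hv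
  rcases h7 with ⟨rfl, rfl, hord⟩ | ⟨rfl, rfl, hord⟩ <;> (unfold cm; split_ifs <;> omega)

lemma cm_diffA {q a r1 r2 : ℕ} (hA : HA q a r1 r2) {u v : ℕ}
    (hu : HW q a u) (hv : HW q a v) (huv : u ≠ v)
    (d1 : v + 1 ≠ u) (d2 : v + 1 ≠ u + q)
    (e1 : v + 1 ≠ a) (e2 : v + 1 ≠ a + q) (e3 : u + 1 ≠ a) (e4 : u + 1 ≠ a + q) :
    cm r1 r2 v + 1 ≠ cm r1 r2 u ∧ cm r1 r2 v + 1 ≠ cm r1 r2 u + (q - 2) := by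
  obtain ⟨h1,h2,h3,h4,h5,h6,h7⟩ := hA
  obtain ⟨g1,g2,g3,g4,g5⟩ := hu; obtain ⟨f1,f2,f3,f4,f5⟩ := hv
  rcases h7 with ⟨rfl, rfl, hord⟩ | ⟨rfl, rfl, hord⟩ <;> (unfold cm; split_ifs <;> omega)

lemma cm_diffB {q a r1 r2 : ℕ} (hA : HA q a r1 r2) {u v : ℕ}
    (hu : HW q a u) (hv : HW q a v) (huv : u ≠ v)
    (d1 : v + 1 ≠ u) (d2 : v + 1 ≠ u + q)
    (e1 : a + 1 ≠ v) (e2 : a + 1 ≠ v + q) (e3 : a + 1 ≠ u) (e4 : a + 1 ≠ u + q) :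
    cm r1 r2 v + 1 ≠ cm r1 r2 u ∧ cm r1 r2 v + 1 ≠ cm r1 r2 u + (q - 2) := by
  obtain ⟨h1,h2,h3,h4,h5,h6,h7⟩ := hA
  obtain ⟨g1,g2,g3,g4,g5⟩ := hu; obtain ⟨f1,f2,f3,f4,f5⟩ := hv
  rcases h7 with ⟨rfl, rfl, hord⟩ | ⟨rfl, rfl, hord⟩ <;> (unfold cm; split_ifs <;> omega)

lemma cm_sum {q a r1 r2 : ℕ} (hA : HA q a r1 r2) {u v : ℕ}
    (hu : HW q a u) (hv : HW q a v) (huv : u ≠ v)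
    (s1 : u + v ≠ q) (s2 : u + v ≠ 1) (s3 : u + v ≠ q + 1) :
    cm r1 r2 u + cm r1 r2 v ≠ q - 2 ∧ cm r1 r2 u + cm r1 r2 v ≠ 1 ∧
      cm r1 r2 u + cm r1 r2 v ≠ q - 1 := by
  obtain ⟨h1,h2,h3,h4,h5,h6,h7⟩ := hA
  obtain ⟨g1,g2,g3,g4,g5⟩ := hu; obtain ⟨f1,f2,f3,f4,f5⟩ := hv
  rcases h7 with ⟨rfl, rfl, hord⟩ | ⟨rfl, rfl, hord⟩ <;> (unfold cm; split_ifs <;> omega)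

/-- hypothesis bundle relating slot parameter `B` and inserted value `a`. -/
def HB (q B a : ℕ) : Prop :=
  1 ≤ B ∧ B ≤ q - 2 ∧ ((2*B ≤ q - 1 ∧ a = B) ∨ (q ≤ 2*B ∧ a = B + 1))

lemma hb_of_ha {q a r1 r2 : ℕ} (hA : HA q a r1 r2) :
    HB q (if 2 * a ≤ q - 1 then a else a - 1) a := by
  obtain ⟨h1,h2,h3,h4,h5,h6,h7⟩ := hA
  rcases h7 with ⟨rfl, rfl, hord⟩ | ⟨rfl, rfl, hord⟩ <;>
    (unfold HB; split_ifs <;> omega)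

lemma hb_inj {q B a a' : ℕ} (h : HB q B a) (h' : HB q B a') : a = a' := by
  obtain ⟨h1, h2, h3⟩ := h; obtain ⟨g1, g2, g3⟩ := h'
  rcases h3 with ⟨u1, u2⟩ | ⟨u1, u2⟩ <;> rcases g3 with ⟨v1, v2⟩ | ⟨v1, v2⟩ <;> omega

lemma hmp_bound {q a r1 r2 : ℕ} (hA : HA q a r1 r2) {z : ℕ} (hz : z < q - 2) :
    hmp r1 r2 z < q := by
  obtain ⟨h1,h2,h3,h4,h5,h6,h7⟩ := hA
  rcases h7 with ⟨rfl, rfl, hord⟩ | ⟨rfl, rfl, hord⟩ <;> (unfold hmp; split_ifs <;> omega)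

lemma hmp_zero {q a r1 r2 : ℕ} (hA : HA q a r1 r2) : hmp r1 r2 0 = 0 := by
  obtain ⟨h1,h2,h3,h4,h5,h6,h7⟩ := hA
  rcases h7 with ⟨rfl, rfl, hord⟩ | ⟨rfl, rfl, hord⟩ <;> (unfold hmp; split_ifs <;> omega)

lemma hmp_cond3 {q a r1 r2 : ℕ} (hA : HA q a r1 r2) {z : ℕ} (hz : z < q - 2)
    (h0 : z ≠ 0) (h2 : 2*z ≠ q - 2) (h3 : 2*z ≠ q - 1) :
    hmp r1 r2 z ≠ 0 ∧ 2 * hmp r1 r2 z ≠ q ∧ 2 * hmp r1 r2 z ≠ q + 1 := by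
  obtain ⟨h1',h2',h3',h4',h5',h6',h7'⟩ := hA
  rcases h7' with ⟨rfl, rfl, hord⟩ | ⟨rfl, rfl, hord⟩ <;> (unfold hmp; split_ifs <;> omega)

lemma hmp_ne_a {q a r1 r2 : ℕ} (hA : HA q a r1 r2) {z : ℕ} (hz : z < q - 2) :
    a ≠ hmp r1 r2 z ∧ hmp r1 r2 z + a ≠ q := by
  obtain ⟨h1,h2,h3,h4,h5,h6,h7⟩ := hA
  rcases h7 with ⟨rfl, rfl, hord⟩ | ⟨rfl, rfl, hord⟩ <;> (unfold hmp; split_ifs <;> omega)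

lemma hmp_inj {q a r1 r2 : ℕ} (hA : HA q a r1 r2) {u v : ℕ} (hu : u < q - 2)
    (hv : v < q - 2) (huv : u ≠ v) : hmp r1 r2 u ≠ hmp r1 r2 v := by
  obtain ⟨h1,h2,h3,h4,h5,h6,h7⟩ := hA
  rcases h7 with ⟨rfl, rfl, hord⟩ | ⟨rfl, rfl, hord⟩ <;> (unfold hmp; split_ifs <;> omega)

lemma hmp_diff {q a r1 r2 : ℕ} (hA : HA q a r1 r2) {u v : ℕ} (hu : u < q - 2)
    (hv : v < q - 2) (d1 : v + 1 ≠ u) (d2 : v + 1 ≠ u + (q - 2)) :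
    hmp r1 r2 v + 1 ≠ hmp r1 r2 u ∧ hmp r1 r2 v + 1 ≠ hmp r1 r2 u + q := by
  obtain ⟨h1,h2,h3,h4,h5,h6,h7⟩ := hA
  rcases h7 with ⟨rfl, rfl, hord⟩ | ⟨rfl, rfl, hord⟩ <;> (unfold hmp; split_ifs <;> omega)

lemma hmp_sum {q a r1 r2 : ℕ} (hA : HA q a r1 r2) {u v : ℕ} (hu : u < q - 2)
    (hv : v < q - 2) (huv : u ≠ v) (s1 : u + v ≠ q - 2) (s2 : u + v ≠ 1)
    (s3 : u + v ≠ q - 1) :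
    hmp r1 r2 u + hmp r1 r2 v ≠ q ∧ hmp r1 r2 u + hmp r1 r2 v ≠ 1 ∧
      hmp r1 r2 u + hmp r1 r2 v ≠ q + 1 := by
  obtain ⟨h1,h2,h3,h4,h5,h6,h7⟩ := hA
  rcases h7 with ⟨rfl, rfl, hord⟩ | ⟨rfl, rfl, hord⟩ <;> (unfold hmp; split_ifs <;> omega)

lemma hmp_insA {q a r1 r2 B : ℕ} (hA : HA q a r1 r2) (hB : HB q B a) {z : ℕ}
    (hz : z < q - 2) (h : B ≠ z + 1) :
    hmp r1 r2 z + 1 ≠ a ∧ hmp r1 r2 z + 1 ≠ a + q := by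
  obtain ⟨h1,h2,h3,h4,h5,h6,h7⟩ := hA
  obtain ⟨b1, b2, b3⟩ := hB
  rcases h7 with ⟨rfl, rfl, hord⟩ | ⟨rfl, rfl, hord⟩ <;> rcases b3 with ⟨c1, c2⟩ | ⟨c1, c2⟩ <;>
    (unfold hmp; split_ifs <;> omega)

lemma hmp_insB {q a r1 r2 B : ℕ} (hA : HA q a r1 r2) (hB : HB q B a) {z : ℕ}
    (hz : z < q - 2) (h : B ≠ z) (h2 : B ≠ q - 2) :
    a + 1 ≠ hmp r1 r2 z ∧ a + 1 ≠ hmp r1 r2 z + q := by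
  obtain ⟨h1,h2',h3,h4,h5,h6,h7⟩ := hA
  obtain ⟨b1, b2, b3⟩ := hB
  rcases h7 with ⟨rfl, rfl, hord⟩ | ⟨rfl, rfl, hord⟩ <;> rcases b3 with ⟨c1, c2⟩ | ⟨c1, c2⟩ <;>
    (unfold hmp; split_ifs <;> omega)

lemma hmp_insSum {q a r1 r2 B : ℕ} (hA : HA q a r1 r2) (hB : HB q B a) {z : ℕ}
    (hz : z < q - 2) (h1 : B ≠ q - 1 - z) (h2 : B ≠ 1) :
    a + hmp r1 r2 z ≠ q ∧ a + hmp r1 r2 z ≠ 1 ∧ a + hmp r1 r2 z ≠ q + 1 := by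
  obtain ⟨g1,g2,g3,g4,g5,g6,g7⟩ := hA
  obtain ⟨b1, b2, b3⟩ := hB
  rcases g7 with ⟨rfl, rfl, hord⟩ | ⟨rfl, rfl, hord⟩ <;> rcases b3 with ⟨c1, c2⟩ | ⟨c1, c2⟩ <;>
    (unfold hmp; split_ifs <;> omega)

lemma cm_hmp {q a r1 r2 : ℕ} (hA : HA q a r1 r2) {z : ℕ} (hz : z < q - 2) :
    cm r1 r2 (hmp r1 r2 z) = z := by
  obtain ⟨h1,h2,h3,h4,h5,h6,h7⟩ := hA
  rcases h7 with ⟨rfl, rfl, hord⟩ | ⟨rfl, rfl, hord⟩ <;>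
    (unfold hmp cm; split_ifs <;> omega)

lemma cm_fibA {q a r1 r2 B : ℕ} (hA : HA q a r1 r2) (hB : HB q B a) {v : ℕ}
    (hv : HW q a v) (e1 : v + 1 ≠ a) (e2 : v + 1 ≠ a + q) :
    B ≠ cm r1 r2 v + 1 ∧ B ≠ q - 1 - cm r1 r2 v := by
  obtain ⟨h1,h2,h3,h4,h5,h6,h7⟩ := hA
  obtain ⟨g1,g2,g3,g4,g5⟩ := hv
  obtain ⟨b1, b2, b3⟩ := hB
  rcases h7 with ⟨rfl, rfl, hord⟩ | ⟨rfl, rfl, hord⟩ <;> rcases b3 with ⟨c1, c2⟩ | ⟨c1, c2⟩ <;>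
    (unfold cm; split_ifs <;> omega)

lemma cm_fibB {q a r1 r2 B : ℕ} (hA : HA q a r1 r2) (hB : HB q B a) {v : ℕ}
    (hv : HW q a v) (e1 : a + 1 ≠ v) (e2 : a + 1 ≠ v + q) :
    B ≠ cm r1 r2 v ∧ B ≠ q - 1 - cm r1 r2 v := by
  obtain ⟨h1,h2,h3,h4,h5,h6,h7⟩ := hA
  obtain ⟨g1,g2,g3,g4,g5⟩ := hv
  obtain ⟨b1, b2, b3⟩ := hB
  rcases h7 with ⟨rfl, rfl, hord⟩ | ⟨rfl, rfl, hord⟩ <;> rcases b3 with ⟨c1, c2⟩ | ⟨c1, c2⟩ <;>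
    (unfold cm; split_ifs <;> omega)

lemma cm_fibB_scalar {q a r1 r2 B : ℕ} (hA : HA q a r1 r2) (hB : HB q B a)
    (hlast : a + 1 ≠ q) : B ≠ 1 ∧ B ≠ q - 2 := by
  obtain ⟨h1,h2,h3,h4,h5,h6,h7⟩ := hA
  obtain ⟨b1, b2, b3⟩ := hB
  rcases b3 with ⟨c1, c2⟩ | ⟨c1, c2⟩ <;> omega

attribute [local instance] Classical.propDecidable

def ok (q m j : ℕ) (x : Fin m → ℕ) : Prop :=
  (∀ s, x s < q) ∧
  (∀ s : Fin m, (s : ℕ) = j → x s = 0) ∧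
  (∀ s : Fin m, (s : ℕ) ≠ j → x s ≠ 0 ∧ 2 * x s ≠ q ∧ 2 * x s ≠ q + 1) ∧
  (∀ s t : Fin m, s ≠ t → x s ≠ x t) ∧
  (∀ s t : Fin m, (s : ℕ) < (t : ℕ) → x t + 1 ≠ x s ∧ x t + 1 ≠ x s + q) ∧
  (∀ s t : Fin m, s ≠ t → x s + x t ≠ q ∧ x s + x t ≠ 1 ∧ x s + x t ≠ q + 1)

noncomputable def okF (q m j : ℕ) : Finset (Fin m → ℕ) :=
  (Fintype.piFinset fun _ : Fin m => Finset.range q).filter (ok q m j)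

lemma mem_okF {q m j : ℕ} {x : Fin m → ℕ} : x ∈ okF q m j ↔ ok q m j x := by
  constructor
  · intro h; exact (Finset.mem_filter.1 h).2
  · intro h
    refine Finset.mem_filter.2 ⟨Fintype.mem_piFinset.2 fun s => Finset.mem_range.2 (h.1 s), h⟩

lemma succ_ne_succ_of_vne {m : ℕ} {s t : Fin m} (h : (s : ℕ) ≠ (t : ℕ)) :
    s.succ ≠ t.succ := fun he => h (congrArg Fin.val (Fin.succ_inj.mp he))

def ΦA (q m : ℕ) (x : Fin (m+1) → ℕ) : Fin m → ℕ :=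
  fun t => cm (min (x 0) (q - x 0)) (max (x 0) (q - x 0)) (x t.succ)

section StepA

variable {m j q : ℕ}

lemma okA_bundles (hj : j < m) (hq : 2*m + 4 ≤ q) {x : Fin (m+1) → ℕ}
    (hx : ok q (m+1) (j+1) x) :
    HA q (x 0) (min (x 0) (q - x 0)) (max (x 0) (q - x 0)) ∧
      (∀ t : Fin m, HW q (x 0) (x t.succ)) := by
  obtain ⟨hb, h0, h3, h4, h5, h6⟩ := hx
  have jF : Fin m := ⟨j, hj⟩
  have hxj : x (⟨j, hj⟩ : Fin m).succ = 0 := h0 _ (by simp [Fin.val_succ])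
  obtain ⟨ha1, ha2, ha3⟩ := h3 0 (by simp)
  have hne1 : x 0 ≠ 1 := by
    have h01 : (0 : Fin (m+1)) ≠ (⟨j, hj⟩ : Fin m).succ := (Fin.succ_ne_zero _).symm
    have := (h6 0 _ h01).2.1
    rw [hxj] at this; omega
  constructor
  · have B0 := hb 0
    refine ⟨by omega, by omega, B0, ha2, ha3, hne1, ?_⟩
    rcases Nat.lt_or_ge (2 * x 0) q with h | h
    · left; refine ⟨?_, ?_, h⟩ <;> omega
    · right
      have : 2 * x 0 ≠ q := ha2
      refine ⟨?_, ?_, by omega⟩ <;> omega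
  · intro t
    have V := h4 t.succ 0 (Fin.succ_ne_zero t)
    obtain ⟨S1, S2, S3⟩ := h6 t.succ 0 (Fin.succ_ne_zero t)
    exact ⟨hb t.succ, V, S1, S3, S2⟩

lemma forwardA (hj : j < m) (hq : 2*m + 4 ≤ q) :
    ∀ x ∈ okF q (m+1) (j+1), ΦA q m x ∈ okF (q-2) m j := by
  intro x hx
  obtain ⟨hA, hW⟩ := okA_bundles hj hq (mem_okF.1 hx)
  obtain ⟨hb, h0, h3, h4, h5, h6⟩ := mem_okF.1 hx
  have hxj : x (⟨j, hj⟩ : Fin m).succ = 0 := h0 _ (by simp [Fin.val_succ])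
  refine mem_okF.2 ⟨?_, ?_, ?_, ?_, ?_, ?_⟩
  · intro t
    simpa only [ΦA] using cm_bound hA (hW t)
  · intro s hs
    have hsj : s = (⟨j, hj⟩ : Fin m) := Fin.ext hs
    subst hsj
    simp only [ΦA, hxj]
    exact cm_zero hA
  · intro s hs
    have hsS : ((s.succ : Fin (m+1)) : ℕ) ≠ j + 1 := by simp [Fin.val_succ]; omega
    obtain ⟨c1, c2, c3⟩ := h3 s.succ hsS
    have hnej : s.succ ≠ (⟨j, hj⟩ : Fin m).succ := succ_ne_succ_of_vne (by simpa using hs)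
    have hne1 : x s.succ ≠ 1 := by
      have := (h6 s.succ _ hnej).2.1; rw [hxj] at this; omega
    have := cm_cond3 hA (hW s) c1 hne1 c2 c3
    simp only [ΦA]
    exact ⟨this.1, this.2.1, by have := this.2.2; omega⟩
  · intro s t hst
    simp only [ΦA]
    exact cm_inj hA (hW s) (hW t) (h4 s.succ t.succ (fun h => hst (Fin.succ_inj.mp h)))
  · intro s t hst
    have hST := h5 s.succ t.succ (by simp [Fin.val_succ]; omega)
    have E1 := h5 0 t.succ (by simp [Fin.val_succ])
    have E3 := h5 0 s.succ (by simp [Fin.val_succ])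
    have huv : x s.succ ≠ x t.succ :=
      h4 s.succ t.succ (succ_ne_succ_of_vne (by omega))
    have := cm_diffA hA (hW s) (hW t) huv hST.1 hST.2 E1.1 E1.2 E3.1 E3.2
    simp only [ΦA]
    exact ⟨this.1, this.2⟩
  · intro s t hst
    have hST : s.succ ≠ t.succ := fun h => hst (Fin.succ_inj.mp h)
    obtain ⟨E6a, E6b, E6c⟩ := h6 s.succ t.succ hST
    have huv : x s.succ ≠ x t.succ := h4 s.succ t.succ hST
    have := cm_sum hA (hW s) (hW t) huv E6a E6b E6c
    simp only [ΦA]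
    exact ⟨this.1, this.2.1, by have := this.2.2; omega⟩

end StepA

section StepA2

variable {m j q : ℕ}

lemma fiberA (hj : j < m) (hq : 2*m + 4 ≤ q) {y : Fin m → ℕ} (hy : y ∈ okF (q-2) m j) :
    ((okF q (m+1) (j+1)).filter (fun x => ΦA q m x = y)).card = q - (2*m+2) + 1 := by
  classical
  obtain ⟨yb, y0, y3, y4, y5, y6⟩ := mem_okF.1 hy
  have hyj : y ⟨j, hj⟩ = 0 := y0 _ rfl
  set Al : Finset ℕ := (Finset.Icc 1 (q-2)).filter
    (fun B => (∀ t : Fin m, B ≠ y t + 1) ∧ (∀ t : Fin m, B ≠ q - 1 - y t)) with hAl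
  have hAlcard : Al.card = q - (2*m+2) + 1 := by
    have hset : Al = (Finset.Icc 1 (q-2)) \
        ((Finset.univ.image fun t : Fin m => y t + 1) ∪
         ((Finset.univ.erase ⟨j, hj⟩).image fun t : Fin m => q - 1 - y t)) := by
      ext B
      simp only [hAl, Finset.mem_filter, Finset.mem_sdiff, Finset.mem_union,
        Finset.mem_image, Finset.mem_univ, Finset.mem_erase, true_and, and_true,
        Finset.mem_Icc]
      constructor
      · rintro ⟨hB, hB1, hB2⟩
        refine ⟨hB, ?_⟩
        push_neg
        exact ⟨fun t h => (hB1 t) h.symm, fun t _ h => (hB2 t) h.symm⟩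
      · rintro ⟨hB, hB2⟩
        push_neg at hB2
        refine ⟨hB, fun t h => hB2.1 t h.symm, fun t h => ?_⟩
        by_cases htj : t = ⟨j, hj⟩
        · subst htj; rw [hyj] at h; omega
        · exact hB2.2 t htj h.symm
    rw [hset, Finset.card_sdiff_of_subset]
    · have hu : ((Finset.univ.image fun t : Fin m => y t + 1) ∪
          ((Finset.univ.erase ⟨j, hj⟩).image fun t : Fin m => q - 1 - y t)).card
          = m + (m-1) := by
        rw [Finset.card_union_of_disjoint, Finset.card_image_of_injOn,
          Finset.card_image_of_injOn]
        · simp [Finset.card_erase_of_mem]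
        · intro s _ t _ h
          dsimp only at h
          by_contra hne
          have hb1 := yb s; have hb2 := yb t
          exact y4 s t hne (by omega)
        · intro s _ t _ h
          dsimp only at h
          by_contra hne
          have hb1 := yb s; have hb2 := yb t
          exact y4 s t hne (by omega)
        · rw [Finset.disjoint_left]
          rintro B hB1 hB2
          simp only [Finset.mem_image, Finset.mem_univ, Finset.mem_erase, true_and] at hB1 hB2
          obtain ⟨s, hs⟩ := hB1
          obtain ⟨t, htj, ht⟩ := hB2
          have hbs := yb s; have hbt := yb t
          obtain ⟨z1, z2, z3⟩ := y3 t (by simpa [Fin.ext_iff] using htj)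
          by_cases hstq : s = t
          · subst hstq; omega
          · obtain ⟨w1, w2, w3⟩ := y6 s t hstq; omega
      rw [hu, Nat.card_Icc]
      omega
    · intro B hB
      simp only [Finset.mem_union, Finset.mem_image, Finset.mem_univ, Finset.mem_erase,
        true_and] at hB
      simp only [Finset.mem_Icc]
      rcases hB with ⟨t, ht⟩ | ⟨t, htj, ht⟩
      · have := yb t; omega
      · have := yb t
        obtain ⟨z1, z2, z3⟩ := y3 t (by simpa [Fin.ext_iff] using htj)
        omega
  rw [← hAlcard]
  refine Finset.card_bij (fun x _ => if 2 * x 0 ≤ q - 1 then x 0 else x 0 - 1) ?_ ?_ ?_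
  · -- maps into Al
    intro x hx
    obtain ⟨hxok, hxy⟩ := Finset.mem_filter.1 hx
    obtain ⟨hA, hW⟩ := okA_bundles hj hq (mem_okF.1 hxok)
    obtain ⟨hb, h0, h3, h4, h5, h6⟩ := mem_okF.1 hxok
    have hB := hb_of_ha hA
    have hyt : ∀ t : Fin m, y t
        = cm (min (x 0) (q - x 0)) (max (x 0) (q - x 0)) (x t.succ) :=
      fun t => (congrFun hxy t).symm
    simp only [hAl, Finset.mem_filter, Finset.mem_Icc]
    obtain ⟨b1, b2, -⟩ := hB
    refine ⟨⟨b1, b2⟩, ?_, ?_⟩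
    · intro t
      have E1 := h5 0 t.succ (by simp [Fin.val_succ])
      have := cm_fibA hA (hb_of_ha hA) (hW t) E1.1 E1.2
      rw [hyt t]
      exact this.1
    · intro t
      have E1 := h5 0 t.succ (by simp [Fin.val_succ])
      have := cm_fibA hA (hb_of_ha hA) (hW t) E1.1 E1.2
      rw [hyt t]
      exact this.2
  · -- injectivity
    intro x hx x' hx' hbv
    obtain ⟨hxok, hxy⟩ := Finset.mem_filter.1 hx
    obtain ⟨hxok', hxy'⟩ := Finset.mem_filter.1 hx'
    obtain ⟨hA, hW⟩ := okA_bundles hj hq (mem_okF.1 hxok)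
    obtain ⟨hA', hW'⟩ := okA_bundles hj hq (mem_okF.1 hxok')
    have hbv' : (if 2 * x 0 ≤ q - 1 then x 0 else x 0 - 1)
        = (if 2 * x' 0 ≤ q - 1 then x' 0 else x' 0 - 1) := hbv
    have ha : x 0 = x' 0 := by
      refine hb_inj (hb_of_ha hA) ?_
      rw [hbv']; exact hb_of_ha hA'
    funext s
    rcases Fin.eq_zero_or_eq_succ s with rfl | ⟨t, rfl⟩
    · exact ha
    · have e1 : cm (min (x 0) (q - x 0)) (max (x 0) (q - x 0)) (x t.succ)
          = cm (min (x 0) (q - x 0)) (max (x 0) (q - x 0)) (x' t.succ) := by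
        have u1 := congrFun hxy t
        have u2 := congrFun hxy' t
        simp only [ΦA] at u1 u2
        rw [← ha] at u2
        rw [u1, u2]
      by_contra hne
      have hW2 : HW q (x 0) (x' t.succ) := by rw [ha]; exact hW' t
      exact cm_inj hA (hW t) hW2 hne e1
  · -- surjectivity
    intro B hB
    simp only [hAl, Finset.mem_filter, Finset.mem_Icc] at hB
    obtain ⟨⟨hB1, hB2⟩, hA1, hA2⟩ := hB
    have hBne1 : B ≠ 1 := by have := hA1 ⟨j, hj⟩; rw [hyj] at this; omega
    set a : ℕ := if 2*B ≤ q - 1 then B else B + 1 with hadef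
    have hBa : HB q B a := by
      refine ⟨hB1, hB2, ?_⟩
      rw [hadef]; split_ifs with h
      · left; exact ⟨h, rfl⟩
      · right; omega
    have hA : HA q a (min a (q - a)) (max a (q - a)) := by
      obtain ⟨-, -, hd⟩ := hBa
      refine ⟨by omega, ?_, ?_, ?_, ?_, ?_, ?_⟩
      · rcases hd with ⟨c1, c2⟩ | ⟨c1, c2⟩ <;> omega
      · rcases hd with ⟨c1, c2⟩ | ⟨c1, c2⟩ <;> omega
      · rcases hd with ⟨c1, c2⟩ | ⟨c1, c2⟩ <;> omega
      · rcases hd with ⟨c1, c2⟩ | ⟨c1, c2⟩ <;> omega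
      · rcases hd with ⟨c1, c2⟩ | ⟨c1, c2⟩ <;> omega
      · rcases Nat.lt_or_ge (2 * a) q with h | h
        · left
          refine ⟨?_, ?_, h⟩ <;> omega
        · right
          have h2 : 2 * a ≠ q := by rcases hd with ⟨c1, c2⟩ | ⟨c1, c2⟩ <;> omega
          refine ⟨?_, ?_, by omega⟩ <;> omega
    set r1 : ℕ := min a (q - a) with hr1
    set r2 : ℕ := max a (q - a) with hr2
    set xx : Fin (m+1) → ℕ :=
      fun s => if h : s = 0 then a else hmp r1 r2 (y (s.pred h)) with hxxdef
    have hxx0 : xx 0 = a := by rw [hxxdef]; simp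
    have hxxs : ∀ t : Fin m, xx t.succ = hmp r1 r2 (y t) := by
      intro t; rw [hxxdef]; simp [Fin.succ_ne_zero]
    have haq : 1 ≤ a ∧ a < q := ⟨hA.2.1, hA.2.2.1⟩
    have hxxok : ok q (m+1) (j+1) xx := by
      refine ⟨?_, ?_, ?_, ?_, ?_, ?_⟩
      · intro s
        rcases Fin.eq_zero_or_eq_succ s with rfl | ⟨t, rfl⟩
        · rw [hxx0]; omega
        · rw [hxxs t]; exact hmp_bound hA (yb t)
      · intro s hs
        rcases Fin.eq_zero_or_eq_succ s with rfl | ⟨t, rfl⟩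
        · simp at hs
        · have htv : (t : ℕ) = j := by simp [Fin.val_succ] at hs; omega
          have htj : t = ⟨j, hj⟩ := Fin.ext htv
          subst htj
          rw [hxxs, hyj]
          exact hmp_zero hA
      · intro s hs
        rcases Fin.eq_zero_or_eq_succ s with rfl | ⟨t, rfl⟩
        · obtain ⟨g1, g2, g3, g4, g5, g6, g7⟩ := hA
          exact ⟨by omega, g4, g5⟩
        · have htj : (t : ℕ) ≠ j := by simp [Fin.val_succ] at hs; omega
          obtain ⟨z1, z2, z3⟩ := y3 t htj
          rw [hxxs t]
          exact hmp_cond3 hA (yb t) z1 z2 (by omega)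
      · intro s t hst
        rcases Fin.eq_zero_or_eq_succ s with rfl | ⟨u, rfl⟩ <;>
          rcases Fin.eq_zero_or_eq_succ t with rfl | ⟨v, rfl⟩
        · exact absurd rfl hst
        · rw [hxx0, hxxs v]; exact (hmp_ne_a hA (yb v)).1
        · rw [hxx0, hxxs u]; exact fun h => (hmp_ne_a hA (yb u)).1 h.symm
        · have huv : u ≠ v := fun h => hst (by rw [h])
          rw [hxxs u, hxxs v]
          exact hmp_inj hA (yb u) (yb v) (fun h => y4 u v huv h)
      · intro s t hst
        rcases Fin.eq_zero_or_eq_succ t with rfl | ⟨v, rfl⟩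
        · simp at hst
        · rcases Fin.eq_zero_or_eq_succ s with rfl | ⟨u, rfl⟩
          · rw [hxx0, hxxs v]
            exact hmp_insA hA hBa (yb v) (hA1 v)
          · have huv : (u : ℕ) < (v : ℕ) := by simpa [Fin.val_succ] using hst
            obtain ⟨E5a, E5b⟩ := y5 u v huv
            rw [hxxs u, hxxs v]
            exact hmp_diff hA (yb u) (yb v) E5a E5b
      · intro s t hst
        rcases Fin.eq_zero_or_eq_succ s with rfl | ⟨u, rfl⟩ <;>
          rcases Fin.eq_zero_or_eq_succ t with rfl | ⟨v, rfl⟩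
        · exact absurd rfl hst
        · rw [hxx0, hxxs v]
          exact hmp_insSum hA hBa (yb v) (hA2 v) hBne1
        · rw [hxx0, hxxs u]
          have := hmp_insSum hA hBa (yb u) (hA2 u) hBne1
          exact ⟨by omega, by omega, by omega⟩
        · have huv : u ≠ v := fun h => hst (by rw [h])
          obtain ⟨E6a, E6b, E6c⟩ := y6 u v huv
          rw [hxxs u, hxxs v]
          exact hmp_sum hA (yb u) (yb v) (fun h => y4 u v huv h) E6a E6b (by omega)
    refine ⟨xx, ?_, ?_⟩
    · refine Finset.mem_filter.2 ⟨mem_okF.2 hxxok, ?_⟩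
      funext t
      have : ΦA q m xx t = cm r1 r2 (hmp r1 r2 (y t)) := by
        simp only [ΦA, hxx0, hxxs t, hr1, hr2]
      rw [this]
      exact cm_hmp hA (yb t)
    · show (if 2 * xx 0 ≤ q - 1 then xx 0 else xx 0 - 1) = B
      rw [hxx0]
      obtain ⟨-, -, hd⟩ := hBa
      rcases hd with ⟨c1, c2⟩ | ⟨c1, c2⟩ <;> (split_ifs <;> omega)

lemma stepA (hj : j < m) (hq : 2*m + 4 ≤ q) :
    (okF q (m+1) (j+1)).card = (q - (2*m+2) + 1) * (okF (q-2) m j).card := by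
  classical
  rw [Finset.card_eq_sum_card_fiberwise (forwardA hj hq)]
  rw [Finset.sum_congr rfl (fun y hy => fiberA hj hq hy), Finset.sum_const, smul_eq_mul,
    mul_comm]

end StepA2

def ΦB (q m : ℕ) (x : Fin (m+1) → ℕ) : Fin m → ℕ :=
  fun t => cm (min (x (Fin.last m)) (q - x (Fin.last m)))
    (max (x (Fin.last m)) (q - x (Fin.last m))) (x t.castSucc)

section StepB

variable {m q : ℕ}

lemma csl {t : Fin m} : t.castSucc ≠ Fin.last m := Fin.ne_of_lt (Fin.castSucc_lt_last t)

lemma okB_bundles (hm : 1 ≤ m) (hq : 2*m + 4 ≤ q) {x : Fin (m+1) → ℕ}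
    (hx : ok q (m+1) 0 x) :
    HA q (x (Fin.last m)) (min (x (Fin.last m)) (q - x (Fin.last m)))
      (max (x (Fin.last m)) (q - x (Fin.last m))) ∧
      (∀ t : Fin m, HW q (x (Fin.last m)) (x t.castSucc)) := by
  obtain ⟨hb, h0, h3, h4, h5, h6⟩ := hx
  have h0l : (0 : Fin (m+1)) ≠ Fin.last m := Fin.ne_of_val_ne (by simp [Fin.val_last]; omega)
  have hx0 : x 0 = 0 := h0 0 rfl
  obtain ⟨ha1, ha2, ha3⟩ := h3 (Fin.last m) (by simp [Fin.val_last]; omega)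
  have hne1 : x (Fin.last m) ≠ 1 := by
    have := (h6 (Fin.last m) 0 (Ne.symm h0l)).2.1
    rw [hx0] at this; omega
  constructor
  · have B0 := hb (Fin.last m)
    refine ⟨by omega, by omega, B0, ha2, ha3, hne1, ?_⟩
    rcases Nat.lt_or_ge (2 * x (Fin.last m)) q with h | h
    · left; refine ⟨?_, ?_, h⟩ <;> omega
    · right; refine ⟨?_, ?_, by omega⟩ <;> omega
  · intro t
    have V := h4 t.castSucc (Fin.last m) csl
    obtain ⟨S1, S2, S3⟩ := h6 t.castSucc (Fin.last m) csl
    exact ⟨hb t.castSucc, V, S1, S3, S2⟩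

lemma forwardB (hm : 1 ≤ m) (hq : 2*m + 4 ≤ q) :
    ∀ x ∈ okF q (m+1) 0, ΦB q m x ∈ okF (q-2) m 0 := by
  intro x hx
  obtain ⟨hA, hW⟩ := okB_bundles hm hq (mem_okF.1 hx)
  obtain ⟨hb, h0, h3, h4, h5, h6⟩ := mem_okF.1 hx
  have hx0 : x ((⟨0, hm⟩ : Fin m).castSucc) = 0 := h0 _ (by simp)
  refine mem_okF.2 ⟨?_, ?_, ?_, ?_, ?_, ?_⟩
  · intro t
    simpa only [ΦB] using cm_bound hA (hW t)
  · intro s hs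
    have hsj : s = (⟨0, hm⟩ : Fin m) := Fin.ext hs
    subst hsj
    simp only [ΦB, hx0]
    exact cm_zero hA
  · intro s hs
    have hsS : ((s.castSucc : Fin (m+1)) : ℕ) ≠ 0 := by simp [Fin.coe_castSucc]; omega
    obtain ⟨c1, c2, c3⟩ := h3 s.castSucc hsS
    have hnej : s.castSucc ≠ (⟨0, hm⟩ : Fin m).castSucc := by
      intro h; exact hs (by simpa using congrArg Fin.val h)
    have hne1 : x s.castSucc ≠ 1 := by
      have := (h6 s.castSucc _ hnej).2.1; rw [hx0] at this; omega
    have := cm_cond3 hA (hW s) c1 hne1 c2 c3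
    simp only [ΦB]
    exact ⟨this.1, this.2.1, by have := this.2.2; omega⟩
  · intro s t hst
    simp only [ΦB]
    exact cm_inj hA (hW s) (hW t) (h4 s.castSucc t.castSucc
      (fun h => hst (Fin.castSucc_inj.mp h)))
  · intro s t hst
    have hST := h5 s.castSucc t.castSucc (by simpa [Fin.coe_castSucc] using hst)
    have E1 := h5 t.castSucc (Fin.last m) (by simp [Fin.coe_castSucc, Fin.val_last, Fin.is_lt])
    have E3 := h5 s.castSucc (Fin.last m) (by simp [Fin.coe_castSucc, Fin.val_last, Fin.is_lt])
    have huv : x s.castSucc ≠ x t.castSucc :=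
      h4 s.castSucc t.castSucc
        (fun h => (by omega : (s:ℕ) ≠ (t:ℕ)) (congrArg Fin.val (Fin.castSucc_inj.mp h)))
    have := cm_diffB hA (hW s) (hW t) huv hST.1 hST.2 E1.1 E1.2 E3.1 E3.2
    simp only [ΦB]
    exact ⟨this.1, this.2⟩
  · intro s t hst
    have hST : s.castSucc ≠ t.castSucc := fun h => hst (Fin.castSucc_inj.mp h)
    obtain ⟨E6a, E6b, E6c⟩ := h6 s.castSucc t.castSucc hST
    have huv : x s.castSucc ≠ x t.castSucc := h4 s.castSucc t.castSucc hST
    have := cm_sum hA (hW s) (hW t) huv E6a E6b E6c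
    simp only [ΦB]
    exact ⟨this.1, this.2.1, by have := this.2.2; omega⟩

lemma fiberB (hm : 1 ≤ m) (hq : 2*m + 4 ≤ q) {y : Fin m → ℕ} (hy : y ∈ okF (q-2) m 0) :
    ((okF q (m+1) 0).filter (fun x => ΦB q m x = y)).card = q - (2*m+2) := by
  classical
  obtain ⟨yb, y0, y3, y4, y5, y6⟩ := mem_okF.1 hy
  have hyj : y ⟨0, hm⟩ = 0 := y0 _ rfl
  set Al : Finset ℕ := (Finset.Icc 2 (q-3)).filter
    (fun B => (∀ t : Fin m, B ≠ y t) ∧ (∀ t : Fin m, B ≠ q - 1 - y t)) with hAl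
  have hAlcard : Al.card = q - (2*m+2) := by
    have hset : Al = (Finset.Icc 2 (q-3)) \
        (((Finset.univ.erase ⟨0, hm⟩).image fun t : Fin m => y t) ∪
         ((Finset.univ.erase ⟨0, hm⟩).image fun t : Fin m => q - 1 - y t)) := by
      ext B
      simp only [hAl, Finset.mem_filter, Finset.mem_sdiff, Finset.mem_union,
        Finset.mem_image, Finset.mem_univ, Finset.mem_erase, true_and, and_true,
        Finset.mem_Icc]
      constructor
      · rintro ⟨hB, hB1, hB2⟩
        refine ⟨hB, ?_⟩
        push_neg
        exact ⟨fun t _ h => (hB1 t) h.symm, fun t _ h => (hB2 t) h.symm⟩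
      · rintro ⟨hB, hB2⟩
        push_neg at hB2
        refine ⟨hB, fun t h => ?_, fun t h => ?_⟩
        · by_cases htj : t = ⟨0, hm⟩
          · subst htj; rw [hyj] at h; omega
          · exact hB2.1 t htj h.symm
        · by_cases htj : t = ⟨0, hm⟩
          · subst htj; rw [hyj] at h; omega
          · exact hB2.2 t htj h.symm
    rw [hset, Finset.card_sdiff_of_subset]
    · have hu : (((Finset.univ.erase ⟨0, hm⟩).image fun t : Fin m => y t) ∪
          ((Finset.univ.erase ⟨0, hm⟩).image fun t : Fin m => q - 1 - y t)).card
          = (m-1) + (m-1) := by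
        rw [Finset.card_union_of_disjoint, Finset.card_image_of_injOn,
          Finset.card_image_of_injOn]
        · simp [Finset.card_erase_of_mem]
        · intro s _ t _ h
          dsimp only at h
          by_contra hne
          have hb1 := yb s; have hb2 := yb t
          exact y4 s t hne (by omega)
        · intro s _ t _ h
          dsimp only at h
          by_contra hne
          have hb1 := yb s; have hb2 := yb t
          exact y4 s t hne (by omega)
        · rw [Finset.disjoint_left]
          rintro B hB1 hB2
          simp only [Finset.mem_image, Finset.mem_univ, Finset.mem_erase, true_and,
            and_true] at hB1 hB2
          obtain ⟨s, hsj, hs⟩ := hB1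
          obtain ⟨t, htj, ht⟩ := hB2
          have hbs := yb s; have hbt := yb t
          obtain ⟨z1, z2, z3⟩ := y3 t (fun h => htj (Fin.ext h))
          obtain ⟨zz1, zz2, zz3⟩ := y3 s (fun h => hsj (Fin.ext h))
          by_cases hstq : s = t
          · subst hstq; omega
          · obtain ⟨w1, w2, w3⟩ := y6 s t hstq; omega
      rw [hu, Nat.card_Icc]
      omega
    · intro B hB
      simp only [Finset.mem_union, Finset.mem_image, Finset.mem_univ, Finset.mem_erase,
        true_and, and_true] at hB
      simp only [Finset.mem_Icc]
      rcases hB with ⟨t, htj, ht⟩ | ⟨t, htj, ht⟩ <;>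
      · have hbt := yb t
        obtain ⟨z1, z2, z3⟩ := y3 t (fun h => htj (Fin.ext h))
        have h1 := (y6 t ⟨0, hm⟩ htj).2.1
        rw [hyj] at h1
        omega
  rw [← hAlcard]
  refine Finset.card_bij
    (fun x _ => if 2 * x (Fin.last m) ≤ q - 1 then x (Fin.last m) else x (Fin.last m) - 1)
    ?_ ?_ ?_
  · -- maps into Al
    intro x hx
    obtain ⟨hxok, hxy⟩ := Finset.mem_filter.1 hx
    obtain ⟨hA, hW⟩ := okB_bundles hm hq (mem_okF.1 hxok)
    obtain ⟨hb, h0, h3, h4, h5, h6⟩ := mem_okF.1 hxok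
    have hx0 : x 0 = 0 := h0 0 rfl
    have hB := hb_of_ha hA
    have hyt : ∀ t : Fin m, y t
        = cm (min (x (Fin.last m)) (q - x (Fin.last m)))
            (max (x (Fin.last m)) (q - x (Fin.last m))) (x t.castSucc) :=
      fun t => (congrFun hxy t).symm
    have hlast : x (Fin.last m) + 1 ≠ q := by
      have := (h5 0 (Fin.last m) (by simp [Fin.val_last]; omega)).2
      rw [hx0] at this; omega
    have hscal := cm_fibB_scalar hA hB hlast
    simp only [hAl, Finset.mem_filter, Finset.mem_Icc]
    obtain ⟨b1, b2, -⟩ := hB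
    refine ⟨⟨by omega, by omega⟩, ?_, ?_⟩
    · intro t
      have E1 := h5 t.castSucc (Fin.last m)
        (by simp [Fin.coe_castSucc, Fin.val_last, Fin.is_lt])
      have := cm_fibB hA (hb_of_ha hA) (hW t) E1.1 E1.2
      rw [hyt t]
      exact this.1
    · intro t
      have E1 := h5 t.castSucc (Fin.last m)
        (by simp [Fin.coe_castSucc, Fin.val_last, Fin.is_lt])
      have := cm_fibB hA (hb_of_ha hA) (hW t) E1.1 E1.2
      rw [hyt t]
      exact this.2
  · -- injectivity
    intro x hx x' hx' hbv
    obtain ⟨hxok, hxy⟩ := Finset.mem_filter.1 hx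
    obtain ⟨hxok', hxy'⟩ := Finset.mem_filter.1 hx'
    obtain ⟨hA, hW⟩ := okB_bundles hm hq (mem_okF.1 hxok)
    obtain ⟨hA', hW'⟩ := okB_bundles hm hq (mem_okF.1 hxok')
    have hbv' : (if 2 * x (Fin.last m) ≤ q - 1 then x (Fin.last m) else x (Fin.last m) - 1)
        = (if 2 * x' (Fin.last m) ≤ q - 1 then x' (Fin.last m) else x' (Fin.last m) - 1) :=
      hbv
    have ha : x (Fin.last m) = x' (Fin.last m) := by
      refine hb_inj (hb_of_ha hA) ?_
      rw [hbv']; exact hb_of_ha hA'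
    funext s
    rcases Fin.eq_castSucc_or_eq_last s with ⟨t, rfl⟩ | rfl
    · have e1 : cm (min (x (Fin.last m)) (q - x (Fin.last m)))
          (max (x (Fin.last m)) (q - x (Fin.last m))) (x t.castSucc)
          = cm (min (x (Fin.last m)) (q - x (Fin.last m)))
            (max (x (Fin.last m)) (q - x (Fin.last m))) (x' t.castSucc) := by
        have u1 := congrFun hxy t
        have u2 := congrFun hxy' t
        simp only [ΦB] at u1 u2
        rw [← ha] at u2
        rw [u1, u2]
      by_contra hne
      have hW2 : HW q (x (Fin.last m)) (x' t.castSucc) := by rw [ha]; exact hW' t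
      exact cm_inj hA (hW t) hW2 hne e1
    · exact ha
  · -- surjectivity
    intro B hB
    simp only [hAl, Finset.mem_filter, Finset.mem_Icc] at hB
    obtain ⟨⟨hB1, hB2⟩, hA1, hA2⟩ := hB
    set a : ℕ := if 2*B ≤ q - 1 then B else B + 1 with hadef
    have hBa : HB q B a := by
      refine ⟨by omega, by omega, ?_⟩
      rw [hadef]; split_ifs with h
      · left; exact ⟨h, rfl⟩
      · right; omega
    have hA : HA q a (min a (q - a)) (max a (q - a)) := by
      obtain ⟨-, -, hd⟩ := hBa
      refine ⟨by omega, ?_, ?_, ?_, ?_, ?_, ?_⟩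
      · rcases hd with ⟨c1, c2⟩ | ⟨c1, c2⟩ <;> omega
      · rcases hd with ⟨c1, c2⟩ | ⟨c1, c2⟩ <;> omega
      · rcases hd with ⟨c1, c2⟩ | ⟨c1, c2⟩ <;> omega
      · rcases hd with ⟨c1, c2⟩ | ⟨c1, c2⟩ <;> omega
      · rcases hd with ⟨c1, c2⟩ | ⟨c1, c2⟩ <;> omega
      · rcases Nat.lt_or_ge (2 * a) q with h | h
        · left
          refine ⟨?_, ?_, h⟩ <;> omega
        · right
          have h2 : 2 * a ≠ q := by rcases hd with ⟨c1, c2⟩ | ⟨c1, c2⟩ <;> omega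
          refine ⟨?_, ?_, by omega⟩ <;> omega
    set r1 : ℕ := min a (q - a) with hr1
    set r2 : ℕ := max a (q - a) with hr2
    set xx : Fin (m+1) → ℕ :=
      fun s => if h : s = Fin.last m then a else hmp r1 r2 (y (s.castPred h)) with hxxdef
    have hxx0 : xx (Fin.last m) = a := by rw [hxxdef]; simp
    have hxxs : ∀ t : Fin m, xx t.castSucc = hmp r1 r2 (y t) := by
      intro t; rw [hxxdef]; simp [csl]
    have hxxok : ok q (m+1) 0 xx := by
      refine ⟨?_, ?_, ?_, ?_, ?_, ?_⟩
      · intro s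
        rcases Fin.eq_castSucc_or_eq_last s with ⟨t, rfl⟩ | rfl
        · rw [hxxs t]; exact hmp_bound hA (yb t)
        · rw [hxx0]; have := hA.2.2.1; omega
      · intro s hs
        rcases Fin.eq_castSucc_or_eq_last s with ⟨t, rfl⟩ | rfl
        · have htv : (t : ℕ) = 0 := by simpa [Fin.coe_castSucc] using hs
          have htj : t = ⟨0, hm⟩ := Fin.ext htv
          subst htj
          rw [hxxs, hyj]
          exact hmp_zero hA
        · simp [Fin.val_last] at hs; omega
      · intro s hs
        rcases Fin.eq_castSucc_or_eq_last s with ⟨t, rfl⟩ | rfl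
        · have htj : (t : ℕ) ≠ 0 := by simpa [Fin.coe_castSucc] using hs
          obtain ⟨z1, z2, z3⟩ := y3 t htj
          rw [hxxs t]
          exact hmp_cond3 hA (yb t) z1 z2 (by omega)
        · obtain ⟨g1, g2, g3, g4, g5, g6, g7⟩ := hA
          rw [hxx0]
          exact ⟨by omega, g4, g5⟩
      · intro s t hst
        rcases Fin.eq_castSucc_or_eq_last s with ⟨u, rfl⟩ | rfl <;>
          rcases Fin.eq_castSucc_or_eq_last t with ⟨v, rfl⟩ | rfl
        · have huv : u ≠ v := fun h => hst (by rw [h])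
          rw [hxxs u, hxxs v]
          exact hmp_inj hA (yb u) (yb v) (fun h => y4 u v huv h)
        · rw [hxx0, hxxs u]; exact fun h => (hmp_ne_a hA (yb u)).1 h.symm
        · rw [hxx0, hxxs v]; exact (hmp_ne_a hA (yb v)).1
        · exact absurd rfl hst
      · intro s t hst
        rcases Fin.eq_castSucc_or_eq_last t with ⟨v, rfl⟩ | rfl
        · rcases Fin.eq_castSucc_or_eq_last s with ⟨u, rfl⟩ | rfl
          · have huv : (u : ℕ) < (v : ℕ) := by simpa [Fin.coe_castSucc] using hst
            obtain ⟨E5a, E5b⟩ := y5 u v huv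
            rw [hxxs u, hxxs v]
            exact hmp_diff hA (yb u) (yb v) E5a E5b
          · simp [Fin.val_last, Fin.coe_castSucc] at hst
            have := v.is_lt; omega
        · rcases Fin.eq_castSucc_or_eq_last s with ⟨u, rfl⟩ | rfl
          · rw [hxx0, hxxs u]
            exact hmp_insB hA hBa (yb u) (hA1 u) (by omega)
          · simp at hst
      · intro s t hst
        rcases Fin.eq_castSucc_or_eq_last s with ⟨u, rfl⟩ | rfl <;>
          rcases Fin.eq_castSucc_or_eq_last t with ⟨v, rfl⟩ | rfl
        · have huv : u ≠ v := fun h => hst (by rw [h])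
          obtain ⟨E6a, E6b, E6c⟩ := y6 u v huv
          rw [hxxs u, hxxs v]
          exact hmp_sum hA (yb u) (yb v) (fun h => y4 u v huv h) E6a E6b (by omega)
        · rw [hxx0, hxxs u]
          have := hmp_insSum hA hBa (yb u) (hA2 u) (by omega)
          exact ⟨by omega, by omega, by omega⟩
        · rw [hxx0, hxxs v]
          exact hmp_insSum hA hBa (yb v) (hA2 v) (by omega)
        · exact absurd rfl hst
    refine ⟨xx, ?_, ?_⟩
    · refine Finset.mem_filter.2 ⟨mem_okF.2 hxxok, ?_⟩
      funext t
      have : ΦB q m xx t = cm r1 r2 (hmp r1 r2 (y t)) := by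
        simp only [ΦB, hxx0, hxxs t, hr1, hr2]
      rw [this]
      exact cm_hmp hA (yb t)
    · show (if 2 * xx (Fin.last m) ≤ q - 1 then xx (Fin.last m) else xx (Fin.last m) - 1) = B
      rw [hxx0]
      obtain ⟨-, -, hd⟩ := hBa
      rcases hd with ⟨c1, c2⟩ | ⟨c1, c2⟩ <;> (split_ifs <;> omega)

lemma stepB (hm : 1 ≤ m) (hq : 2*m + 4 ≤ q) :
    (okF q (m+1) 0).card = (q - (2*m+2)) * (okF (q-2) m 0).card := by
  classical
  rw [Finset.card_eq_sum_card_fiberwise (forwardB hm hq)]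
  rw [Finset.sum_congr rfl (fun y hy => fiberB hm hq hy), Finset.sum_const, smul_eq_mul,
    mul_comm]

end StepB

lemma okF_one' (q : ℕ) (hq : 1 ≤ q) : (okF q 1 0).card = 1 := by
  rw [Finset.card_eq_one]
  refine ⟨fun _ => 0, ?_⟩
  ext x
  simp only [Finset.mem_singleton]
  constructor
  · intro hx
    have h := (mem_okF.1 hx).2.1
    funext s
    exact h s (by omega)
  · rintro rfl
    refine mem_okF.2 ⟨fun s => hq, fun s _ => rfl, fun s hs => absurd (by omega : (s:ℕ) = 0) hs,
      fun s t hst => absurd (Subsingleton.elim s t) hst, fun s t hst => by omega,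
      fun s t hst => absurd (Subsingleton.elim s t) hst⟩

lemma countOk : ∀ m j q : ℕ, j < m → 2*m + 2 ≤ q →
    (okF q m j).card = (q - 2*m)^(m - 1 - j) * (q - 2*m + 1)^j := by
  intro m
  induction m with
  | zero => intro j q hj hq; omega
  | succ n ih =>
    intro j q hj hq
    rcases Nat.eq_zero_or_pos n with rfl | hn
    · have hj0 : j = 0 := by omega
      subst hj0
      rw [okF_one' q (by omega)]
      simp
    · rcases Nat.eq_zero_or_pos j with rfl | hjpos
      · rw [stepB hn (by omega), ih 0 (q-2) (by omega) (by omega)]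
        have e1 : q - 2 - 2*n = q - 2*(n+1) := by omega
        have e2 : q - (2*n+2) = q - 2*(n+1) := by omega
        rw [e1, e2]
        have e3 : n + 1 - 1 - 0 = (n - 1 - 0) + 1 := by omega
        rw [e3, pow_succ]
        ring
      · obtain ⟨j', rfl⟩ : ∃ j', j = j'+1 := ⟨j-1, by omega⟩
        rw [stepA (show j' < n by omega) (by omega),
          ih j' (q-2) (by omega) (by omega)]
        have e1 : q - 2 - 2*n = q - 2*(n+1) := by omega
        have e2 : q - (2*n+2) = q - 2*(n+1) := by omega
        rw [e1, e2]
        have e3 : n + 1 - 1 - (j' + 1) = n - 1 - j' := by omega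
        rw [e3, pow_succ]
        ring

section Transfer

variable {q m : ℕ}

lemma cast_eq_iff' (hq : 2 ≤ q) {A B : ℕ} (hA : A < 2*q) (hB : B < 2*q) :
    ((A : ZMod q) = (B : ZMod q)) ↔ (A = B ∨ A = B + q ∨ B = A + q) := by
  rw [ZMod.natCast_eq_natCast_iff']
  have eA : A % q = if A < q then A else A - q := by
    split_ifs with h
    · exact Nat.mod_eq_of_lt h
    · rw [Nat.mod_eq_sub_mod (by omega)]; exact Nat.mod_eq_of_lt (by omega)
  have eB : B % q = if B < q then B else B - q := by
    split_ifs with h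
    · exact Nat.mod_eq_of_lt h
    · rw [Nat.mod_eq_sub_mod (by omega)]; exact Nat.mod_eq_of_lt (by omega)
  rw [eA, eB]
  split_ifs <;> omega

lemma card_filter_zero (hq : 4 ≤ q) (jF : Fin m)
    (S : Finset (Fin m → ZMod q))
    (hS : ∀ x, x ∈ S ↔ (2 * x jF = 0 ∧
      (∀ s : Fin m, s ≠ jF → 2 * x s ≠ 0 ∧ 2 * x s ≠ 1) ∧
      (∀ s t : Fin m, s ≠ t → x s ≠ x t) ∧
      (∀ s t : Fin m, s < t → x s ≠ x t + 1) ∧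
      (∀ s t : Fin m, s ≠ t → x s ≠ -x t ∧ x s ≠ -x t + 1))) :
    (S.filter (fun x => x jF = 0)).card = (okF q m (jF : ℕ)).card := by
  classical
  haveI : NeZero q := ⟨by omega⟩
  refine Finset.card_bij (fun x _ => fun s => (x s).val) ?_ ?_ ?_
  · intro x hx
    obtain ⟨hxS, hxj⟩ := Finset.mem_filter.1 hx
    obtain ⟨h1, h2, h3, h4, h5⟩ := (hS x).1 hxS
    have hvb : ∀ s, (x s).val < q := fun s => ZMod.val_lt (x s)
    have hcast : ∀ s : Fin m, (((x s).val : ℕ) : ZMod q) = x s := fun s => by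
      rw [ZMod.natCast_val, ZMod.cast_id]
    show (fun s => (x s).val) ∈ okF q m (jF : ℕ)
    refine mem_okF.2 ⟨hvb, ?_, ?_, ?_, ?_, ?_⟩
    · intro s hs
      have hsj : s = jF := Fin.ext hs
      subst hsj
      show (x s).val = 0
      rw [hxj, ZMod.val_zero]
    · intro s hs
      have hsj : s ≠ jF := fun h => hs (congrArg Fin.val h)
      obtain ⟨c1, c2⟩ := h2 s hsj
      have hbs := hvb s
      have h2x : ((2 * (x s).val : ℕ) : ZMod q) = 2 * x s := by
        push_cast [hcast]
        ring
      have c1' : ¬(2 * (x s).val = 0 ∨ 2 * (x s).val = 0 + q ∨ 0 = 2 * (x s).val + q) :=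
        fun hd => c1 (by
          rw [← h2x, (cast_eq_iff' (by omega) (by omega) (by omega)).2 hd, Nat.cast_zero])
      have c2' : ¬(2 * (x s).val = 1 ∨ 2 * (x s).val = 1 + q ∨ 1 = 2 * (x s).val + q) :=
        fun hd => c2 (by
          rw [← h2x, (cast_eq_iff' (by omega) (by omega) (by omega)).2 hd, Nat.cast_one])
      show (x s).val ≠ 0 ∧ 2 * (x s).val ≠ q ∧ 2 * (x s).val ≠ q + 1
      refine ⟨?_, ?_, ?_⟩ <;> omega
    · intro s t hst h
      dsimp only at h
      exact h3 s t hst (by rw [← hcast s, ← hcast t, h])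
    · intro s t hst
      have hb1 := hvb s; have hb2 := hvb t
      constructor <;>
      · intro h
        dsimp only at h
        apply h4 s t hst
        have e : (((x s).val : ℕ) : ZMod q) = (((x t).val + 1 : ℕ) : ZMod q) :=
          (cast_eq_iff' (by omega) (by omega) (by omega)).2 (by omega)
        calc x s = (((x t).val + 1 : ℕ) : ZMod q) := by rw [← hcast s]; exact e
        _ = x t + 1 := by push_cast [hcast]; ring
    · intro s t hst
      have hb1 := hvb s; have hb2 := hvb t
      obtain ⟨g1, g2⟩ := h5 s t hst
      have hE2 : ∀ k : ℕ, (x s).val + (x t).val = k → x s + x t = ((k : ℕ) : ZMod q) := by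
        intro k hk
        rw [← hcast s, ← hcast t, ← Nat.cast_add, hk]
      show (x s).val + (x t).val ≠ q ∧ (x s).val + (x t).val ≠ 1 ∧
        (x s).val + (x t).val ≠ q + 1
      refine ⟨?_, ?_, ?_⟩ <;> intro h
      · have := hE2 q h
        rw [ZMod.natCast_self] at this
        exact g1 (by linear_combination this)
      · have := hE2 1 h
        rw [Nat.cast_one] at this
        exact g2 (by linear_combination this)
      · have := hE2 (q+1) h
        push_cast [ZMod.natCast_self] at this
        exact g2 (by linear_combination this)
  · intro x hx x' hx' h
    funext s
    have hh := congrFun h s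
    have hcast : (((x s).val : ℕ) : ZMod q) = x s := by rw [ZMod.natCast_val, ZMod.cast_id]
    have hcast' : (((x' s).val : ℕ) : ZMod q) = x' s := by rw [ZMod.natCast_val, ZMod.cast_id]
    rw [← hcast, ← hcast', hh]
  · intro v hv
    obtain ⟨hb, k0, k3, k4, k5, k6⟩ := mem_okF.1 hv
    set x : Fin m → ZMod q := fun s => ((v s : ℕ) : ZMod q) with hxdef
    have hxs : ∀ s, x s = ((v s : ℕ) : ZMod q) := fun s => rfl
    have hxj : x jF = 0 := by
      rw [hxs, k0 jF rfl, Nat.cast_zero]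
    have hmem : x ∈ S := by
      refine (hS x).2 ⟨by rw [hxj]; ring, ?_, ?_, ?_, ?_⟩
      · intro s hs
        obtain ⟨c1, c2, c3⟩ := k3 s (fun h => hs (Fin.ext h))
        have hbs := hb s
        constructor <;> intro h
        · have e : ((2 * v s : ℕ) : ZMod q) = ((0 : ℕ) : ZMod q) := by
            push_cast
            rw [← hxs s]
            linear_combination h
          have := (cast_eq_iff' (by omega) (by omega) (by omega)).1 e
          omega
        · have e : ((2 * v s : ℕ) : ZMod q) = ((1 : ℕ) : ZMod q) := by
            push_cast
            rw [← hxs s]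
            linear_combination h
          have := (cast_eq_iff' (by omega) (by omega) (by omega)).1 e
          omega
      · intro s t hst h
        apply k4 s t hst
        have h1 := hb s; have h2 := hb t
        have := (cast_eq_iff' (by omega) (by omega) (by omega)).1 h
        omega
      · intro s t hst h
        have h1 := hb s; have h2 := hb t
        have e : ((v s : ℕ) : ZMod q) = ((v t + 1 : ℕ) : ZMod q) := by
          push_cast
          rw [← hxs s, ← hxs t]
          exact h
        have hmod := (cast_eq_iff' (by omega) (by omega) (by omega)).1 e
        obtain ⟨d1, d2⟩ := k5 s t hst
        omega
      · intro s t hst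
        obtain ⟨e1, e2, e3⟩ := k6 s t hst
        have h1 := hb s; have h2 := hb t
        have hne := k4 s t hst
        constructor <;> intro h
        · have e : ((v s + v t : ℕ) : ZMod q) = ((0 : ℕ) : ZMod q) := by
            push_cast
            rw [← hxs s, ← hxs t]
            linear_combination h
          have hmod := (cast_eq_iff' (by omega) (by omega) (by omega)).1 e
          omega
        · have e : ((v s + v t : ℕ) : ZMod q) = ((1 : ℕ) : ZMod q) := by
            push_cast
            rw [← hxs s, ← hxs t]
            linear_combination h
          have hmod := (cast_eq_iff' (by omega) (by omega) (by omega)).1 e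
          omega
    refine ⟨x, Finset.mem_filter.2 ⟨hmem, hxj⟩, ?_⟩
    show (fun s => (x s).val) = v
    funext s
    exact ZMod.val_cast_of_lt (hb s)

end Transfer

section OddEven

variable {q m : ℕ}

lemma card_odd (hq : 4 ≤ q) (hodd : q % 2 = 1) (jF : Fin m)
    (S : Finset (Fin m → ZMod q))
    (hS : ∀ x, x ∈ S ↔ (2 * x jF = 0 ∧
      (∀ s : Fin m, s ≠ jF → 2 * x s ≠ 0 ∧ 2 * x s ≠ 1) ∧
      (∀ s t : Fin m, s ≠ t → x s ≠ x t) ∧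
      (∀ s t : Fin m, s < t → x s ≠ x t + 1) ∧
      (∀ s t : Fin m, s ≠ t → x s ≠ -x t ∧ x s ≠ -x t + 1))) :
    S.card = (okF q m (jF : ℕ)).card := by
  classical
  haveI : NeZero q := ⟨by omega⟩
  rw [← card_filter_zero hq jF S hS]
  have hall : ∀ x ∈ S, x jF = 0 := by
    intro x hx
    obtain ⟨h1, -, -, -, -⟩ := (hS x).1 hx
    have hcast : (((x jF).val : ℕ) : ZMod q) = x jF := by rw [ZMod.natCast_val, ZMod.cast_id]
    have hbs : (x jF).val < q := ZMod.val_lt _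
    have e : ((2 * (x jF).val : ℕ) : ZMod q) = ((0:ℕ) : ZMod q) := by
      push_cast [hcast]; exact h1
    have hd := (cast_eq_iff' (by omega) (by omega) (by omega)).1 e
    have hv0 : (x jF).val = 0 := by omega
    rw [← hcast, hv0, Nat.cast_zero]
  rw [Finset.filter_true_of_mem hall]

lemma card_even (hq : 4 ≤ q) (heven : q % 2 = 0) (jF : Fin m)
    (S : Finset (Fin m → ZMod q))
    (hS : ∀ x, x ∈ S ↔ (2 * x jF = 0 ∧
      (∀ s : Fin m, s ≠ jF → 2 * x s ≠ 0 ∧ 2 * x s ≠ 1) ∧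
      (∀ s t : Fin m, s ≠ t → x s ≠ x t) ∧
      (∀ s t : Fin m, s < t → x s ≠ x t + 1) ∧
      (∀ s t : Fin m, s ≠ t → x s ≠ -x t ∧ x s ≠ -x t + 1))) :
    S.card = 2 * (okF q m (jF : ℕ)).card := by
  classical
  haveI : NeZero q := ⟨by omega⟩
  obtain ⟨c, hcdef⟩ : ∃ c : ZMod q, c = ((q/2 : ℕ) : ZMod q) := ⟨_, rfl⟩
  have hc2 : c + c = 0 := by
    rw [hcdef, ← Nat.cast_add]
    have e : q/2 + q/2 = q := by omega
    rw [e, ZMod.natCast_self]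
  have hcne : c ≠ 0 := by
    intro h
    have hv := ZMod.val_cast_of_lt (show q/2 < q by omega)
    rw [← hcdef, h, ZMod.val_zero] at hv
    omega
  have hshift : ∀ x, x ∈ S → (fun s => x s + c) ∈ S := by
    intro x hx
    obtain ⟨h1, h2, h3, h4, h5⟩ := (hS x).1 hx
    refine (hS _).2 ⟨?_, ?_, ?_, ?_, ?_⟩
    · show 2 * (x jF + c) = 0
      linear_combination h1 + hc2
    · intro s hs
      obtain ⟨c1, c2⟩ := h2 s hs
      constructor
      · intro e; (try dsimp only at e); exact c1 (by linear_combination e - hc2)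
      · intro e; (try dsimp only at e); exact c2 (by linear_combination e - hc2)
    · intro s t hst e
      (try dsimp only at e)
      exact h3 s t hst (by linear_combination e)
    · intro s t hst e
      (try dsimp only at e)
      exact h4 s t hst (by linear_combination e)
    · intro s t hst
      obtain ⟨g1, g2⟩ := h5 s t hst
      constructor
      · intro e; (try dsimp only at e); exact g1 (by linear_combination e - hc2)
      · intro e; (try dsimp only at e); exact g2 (by linear_combination e - hc2)
  have key2 : ∀ x, x ∈ S → x jF ≠ 0 → x jF = c := by
    intro x hx hne
    obtain ⟨h1, -, -, -, -⟩ := (hS x).1 hx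
    have hcast : (((x jF).val : ℕ) : ZMod q) = x jF := by rw [ZMod.natCast_val, ZMod.cast_id]
    have hbs : (x jF).val < q := ZMod.val_lt _
    have e : ((2 * (x jF).val : ℕ) : ZMod q) = ((0:ℕ) : ZMod q) := by
      push_cast [hcast]; exact h1
    have hd := (cast_eq_iff' (by omega) (by omega) (by omega)).1 e
    have hv : (x jF).val ≠ 0 := fun h => hne (by rw [← hcast, h, Nat.cast_zero])
    have hv2 : (x jF).val = q / 2 := by omega
    rw [← hcast, hv2, hcdef]
  have h1 : (S.filter (fun x => ¬ x jF = 0)).card = (S.filter (fun x => x jF = 0)).card := by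
    refine Finset.card_bij (fun x _ => fun s => x s + c) ?_ ?_ ?_
    · intro x hx
      obtain ⟨hxS, hxne⟩ := Finset.mem_filter.1 hx
      refine Finset.mem_filter.2 ⟨hshift x hxS, ?_⟩
      show x jF + c = 0
      rw [key2 x hxS hxne]
      exact hc2
    · intro x hx x' hx' e
      funext s
      have ee := congrFun e s
      try try dsimp only at ee
      linear_combination ee
    · intro z hz
      obtain ⟨hzS, hz0⟩ := Finset.mem_filter.1 hz
      refine ⟨fun s => z s + c, Finset.mem_filter.2 ⟨hshift z hzS, ?_⟩, ?_⟩
      · show z jF + c ≠ 0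
        rw [hz0, zero_add]
        exact hcne
      · funext s
        show (z s + c) + c = z s
        linear_combination hc2
  rw [← Finset.card_filter_add_card_filter_not (s := S) (p := fun x => x jF = 0),
    h1, card_filter_zero hq jF S hS]
  exact (two_mul _).symm

end OddEven


/-- The characteristic quasi-polynomial of the restriction of the Shi arrangement
of type C to the hyperplane `2 x_i = 0` (indices `1 ≤ i ≤ m`, 1-indexed). -/
theorem shi_typeC_restriction_two_xi_eq_zero (m i : ℕ) (hm : 1 ≤ m)
    (hi1 : 1 ≤ i) (him : i ≤ m) :
    ∃ N : ℕ, 0 < N ∧ ∀ q : ℕ, N ≤ q →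
      (Odd q →
        ({x : Fin m → ZMod q |
            2 * x ⟨i - 1, by omega⟩ = 0 ∧
            (∀ s : Fin m, s ≠ ⟨i - 1, by omega⟩ → 2 * x s ≠ 0 ∧ 2 * x s ≠ 1) ∧
            (∀ s t : Fin m, s ≠ t → x s ≠ x t) ∧
            (∀ s t : Fin m, s < t → x s ≠ x t + 1) ∧
            (∀ s t : Fin m, s ≠ t → x s ≠ -x t ∧ x s ≠ -x t + 1)}.ncard : ℤ)
          = ((q : ℤ) - 2 * m) ^ (m - i) * ((q : ℤ) - 2 * m + 1) ^ (i - 1)) ∧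
      (Even q →
        ({x : Fin m → ZMod q |
            2 * x ⟨i - 1, by omega⟩ = 0 ∧
            (∀ s : Fin m, s ≠ ⟨i - 1, by omega⟩ → 2 * x s ≠ 0 ∧ 2 * x s ≠ 1) ∧
            (∀ s t : Fin m, s ≠ t → x s ≠ x t) ∧
            (∀ s t : Fin m, s < t → x s ≠ x t + 1) ∧
            (∀ s t : Fin m, s ≠ t → x s ≠ -x t ∧ x s ≠ -x t + 1)}.ncard : ℤ)
          = 2 * ((q : ℤ) - 2 * m) ^ (m - i) * ((q : ℤ) - 2 * m + 1) ^ (i - 1)) := by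
  classical
  refine ⟨2*m + 4, by omega, ?_⟩
  intro q hq
  haveI : NeZero q := ⟨by omega⟩
  have hjlt : i - 1 < m := by omega
  have hS : ∀ x : Fin m → ZMod q,
      x ∈ ({x : Fin m → ZMod q |
            2 * x ⟨i - 1, hjlt⟩ = 0 ∧
            (∀ s : Fin m, s ≠ ⟨i - 1, hjlt⟩ → 2 * x s ≠ 0 ∧ 2 * x s ≠ 1) ∧
            (∀ s t : Fin m, s ≠ t → x s ≠ x t) ∧
            (∀ s t : Fin m, s < t → x s ≠ x t + 1) ∧
            (∀ s t : Fin m, s ≠ t → x s ≠ -x t ∧ x s ≠ -x t + 1)}).toFinset ↔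
        (2 * x ⟨i - 1, hjlt⟩ = 0 ∧
            (∀ s : Fin m, s ≠ ⟨i - 1, hjlt⟩ → 2 * x s ≠ 0 ∧ 2 * x s ≠ 1) ∧
            (∀ s t : Fin m, s ≠ t → x s ≠ x t) ∧
            (∀ s t : Fin m, s < t → x s ≠ x t + 1) ∧
            (∀ s t : Fin m, s ≠ t → x s ≠ -x t ∧ x s ≠ -x t + 1)) := by
    intro x
    simp only [Set.mem_toFinset, Set.mem_setOf_eq]
  have hcount : (okF q m ((⟨i - 1, hjlt⟩ : Fin m) : ℕ)).card
      = (q - 2*m)^(m - i) * (q - 2*m + 1)^(i-1) := by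
    rw [countOk m (i-1) q (by omega) (by omega)]
    congr 2
    omega
  have hpush : ((((q - 2*m)^(m - i) * (q - 2*m + 1)^(i-1) : ℕ)) : ℤ)
      = ((q : ℤ) - 2 * m) ^ (m - i) * ((q : ℤ) - 2 * m + 1) ^ (i - 1) := by
    push_cast [Nat.cast_sub (show 2*m ≤ q by omega)]
    ring
  constructor
  · intro hodd
    rw [Set.ncard_eq_toFinset_card']
    rw [card_odd (by omega) (Nat.odd_iff.1 hodd) ⟨i - 1, hjlt⟩ _ hS, hcount, hpush]
  · intro heven
    rw [Set.ncard_eq_toFinset_card']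
    rw [card_even (by omega) (Nat.even_iff.1 heven) ⟨i - 1, hjlt⟩ _ hS, hcount]
    push_cast [Nat.cast_sub (show 2*m ≤ q by omega)]
    ring
end

section
/- Let m >= 2 and fix 1 <= i < j <= m. For a positive integer q, let M(q) be the set of tuples (x_1,...,x_m) in Z_q^m such that: x_i = -1 and x_j = -1; x_s != 0 and x_s != 1 for all s; x_s != x_t for all s != t with {s,t} != {i,j}; x_s != x_t + 1 for all s < t with (s,t) != (i,j); and x_s != -x_t and x_s != -x_t + 1 for all s != t. Then there exists a positive integer N such that for every integer q >= N (of either parity), |M(q)| = (q - 2m + 1)^(m-i-1) * (q - 2m + 2)^(i-1). -/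
/-!
Let `n = m - 2` be the number of coordinates other than `x_i = x_j = -1`. List `ZMod q` as
`0, 1, -1, 2, -2, …` and let a value at position `c` occupy the domino of cells `c, c + 1`.
The conditions on the remaining coordinates say exactly that their dominoes are disjoint, avoid
the cells of `0, 1, -1, 2`, start at the cell of `-2` only for coordinates before `i`, and that for
`s < t` the domino of `x_s` does not start at the cell of `x_t + 1`. Deleting the domino of the
last coordinate together with its two cells leaves the same problem on `q - 2` cells, and whatever
the other dominoes are, the last one can be put back into `q - 2n - 2` slots if it may start at
the cell of `-2` and into `q - 2n - 3` otherwise. Induction on `n` gives the product.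
-/

namespace ShiB

lemma prod_ite_val_lt {M : Type*} [CommMonoid M] {n r : ℕ} (hr : r ≤ n) (a b : M) :
    ∏ t : Fin n, (if (t : ℕ) < r then a else b) = a ^ r * b ^ (n - r) := by
  rw [Fin.prod_univ_eq_prod_range (fun t => if t < r then a else b),
    ← Finset.prod_range_mul_prod_Ico _ hr,
    Finset.prod_congr rfl fun t ht => if_pos (Finset.mem_range.1 ht),
    Finset.prod_congr rfl fun t ht => if_neg (not_lt.2 (Finset.mem_Ico.1 ht).1),
    Finset.prod_const, Finset.prod_const, Finset.card_range, Nat.card_Ico]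

-- Listing `ZMod Q` as `0, 1, -1, 2, -2, …` (see `cell`), this is the position of `x + 1`
-- given the position `c` of `x`: up the odd positions, then back down the even ones.
def foldSucc (Q c : ℕ) : ℕ :=
  if c = 0 then 1
  else if c % 2 = 1 then (if c + 2 ≤ Q - 1 then c + 2 else 2 * Q - 3 - c)
  else c - 2

def partner (c : ℕ) : ℕ := if c % 2 = 1 then c - 1 else c + 1

lemma partner_involutive : Function.Involutive partner := by
  intro c
  unfold partner
  split_ifs <;> omega

-- `c s` is the left cell of a domino covering cells `c s` and `c s + 1`.
structure IsDominoConfig (Q r : ℕ) {n : ℕ} (c : Fin n → ℕ) : Prop where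
  four_le : ∀ s, 4 ≤ c s
  lt : ∀ s, c s < Q
  lt_of_eq_four : ∀ s, c s = 4 → (s : ℕ) < r
  separated : ∀ s t, s ≠ t → c s + 2 ≤ c t ∨ c t + 2 ≤ c s
  ne_foldSucc : ∀ s t, s < t → c s ≠ foldSucc Q (c t)

open Classical in
noncomputable def dominoConfigs (Q n r : ℕ) : Finset (Fin n → ℕ) :=
  (Fintype.piFinset fun _ => Finset.range Q).filter (IsDominoConfig Q r)

def shiftDown (K a : ℕ) : ℕ := if a < K then a else a - 2

def shiftUp (k a : ℕ) : ℕ := if a < k then a else a + 2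

section dominoConfigs

variable {Q n r : ℕ}

lemma mem_dominoConfigs {c : Fin n → ℕ} : c ∈ dominoConfigs Q n r ↔ IsDominoConfig Q r c := by
  simp only [dominoConfigs, Finset.mem_filter, Fintype.mem_piFinset, Finset.mem_range,
    and_iff_right_iff_imp]
  exact fun h => h.lt

lemma card_dominoConfigs_zero : (dominoConfigs Q 0 r).card = 1 := by
  rw [Finset.card_eq_one]
  refine ⟨default, Finset.eq_singleton_iff_unique_mem.2 ⟨?_, fun c _ => Subsingleton.elim _ _⟩⟩
  rw [mem_dominoConfigs]
  exact ⟨finZeroElim, finZeroElim, finZeroElim, finZeroElim, finZeroElim⟩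

def contract (c : Fin (n + 1) → ℕ) : Fin n → ℕ :=
  fun t => shiftDown (c (Fin.last n)) (c t.castSucc)

-- Opens two cells after cell `k` and puts a new last domino there.
def insertAt (y : Fin n → ℕ) (k : ℕ) : Fin (n + 1) → ℕ :=
  Fin.snoc (fun t => shiftUp k (y t)) (k + 1)

-- A slot `k` must not split a domino, and the new domino must not have an earlier domino at
-- its `foldSucc`, which happens exactly when `k = partner (y t)`.
def goodSlots (Q r : ℕ) (y : Fin n → ℕ) : Finset ℕ :=
  (Finset.Icc 3 (Q - 2)).filter fun k => (k = 3 → n < r) ∧ ∀ t, y t ≠ k ∧ partner (y t) ≠ k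

@[simp]
lemma insertAt_last (y : Fin n → ℕ) (k : ℕ) : insertAt y k (Fin.last n) = k + 1 :=
  Fin.snoc_last ..

@[simp]
lemma insertAt_castSucc (y : Fin n → ℕ) (k : ℕ) (t : Fin n) :
    insertAt y k t.castSucc = shiftUp k (y t) :=
  Fin.snoc_castSucc ..

lemma contract_insertAt (y : Fin n → ℕ) (k : ℕ) : contract (insertAt y k) = y := by
  funext t
  simp only [contract, insertAt_castSucc, insertAt_last, shiftDown, shiftUp]
  split_ifs <;> omega

lemma mem_goodSlots {y : Fin n → ℕ} {k : ℕ} :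
    k ∈ goodSlots Q r y ↔
      3 ≤ k ∧ k ≤ Q - 2 ∧ (k = 3 → n < r) ∧ ∀ t, y t ≠ k ∧ partner (y t) ≠ k := by
  simp only [goodSlots, Finset.mem_filter, Finset.mem_Icc, and_assoc]

lemma eq_foldSucc_of_shiftUp {k a b : ℕ} (hQ : 9 ≤ Q) (ha : 4 ≤ a) (ha' : a + 3 ≤ Q)
    (hb : 4 ≤ b) (hb' : b + 3 ≤ Q) (h : shiftUp k a = foldSucc Q (shiftUp k b)) :
    a = foldSucc (Q - 2) b := by
  simp only [shiftUp, foldSucc] at h ⊢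
  split_ifs at h ⊢ <;> omega

lemma shiftUp_ne_foldSucc {k b : ℕ} (hQ : 9 ≤ Q) (hb : 4 ≤ b) (hb' : b + 3 ≤ Q) (hk : 3 ≤ k)
    (hk' : k + 2 ≤ Q) (hbk : b ≠ k) (hpk : partner b ≠ k) :
    shiftUp k b ≠ foldSucc Q (k + 1) := by
  simp only [shiftUp, foldSucc, partner] at hpk ⊢
  split_ifs at hpk ⊢ <;> omega

lemma eq_foldSucc_of_shiftDown {K a b : ℕ} (hQ : 9 ≤ Q) (ha : 4 ≤ a) (ha' : a < Q)
    (hb : 4 ≤ b) (hb' : b < Q) (hK : 4 ≤ K) (hK' : K < Q) (hab : a + 2 ≤ b ∨ b + 2 ≤ a)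
    (haK : a + 2 ≤ K ∨ K + 2 ≤ a) (hbK : b + 2 ≤ K ∨ K + 2 ≤ b)
    (h : shiftDown K a = foldSucc (Q - 2) (shiftDown K b)) :
    a = foldSucc Q b ∨ a = foldSucc Q K := by
  simp only [shiftDown, foldSucc] at h ⊢
  split_ifs at h ⊢ <;> omega

lemma shiftDown_ne_pred {K a : ℕ} (hQ : 9 ≤ Q) (ha : 4 ≤ a) (ha' : a < Q) (hK : 4 ≤ K)
    (hK' : K < Q) (haK : a + 2 ≤ K ∨ K + 2 ≤ a) (h : a ≠ foldSucc Q K) :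
    shiftDown K a ≠ K - 1 ∧ partner (shiftDown K a) ≠ K - 1 := by
  simp only [shiftDown, foldSucc, partner] at h ⊢
  split_ifs at h ⊢ <;> omega

lemma IsDominoConfig.separated_last {c : Fin (n + 1) → ℕ} (hc : IsDominoConfig Q r c)
    (t : Fin n) : c t.castSucc + 2 ≤ c (Fin.last n) ∨ c (Fin.last n) + 2 ≤ c t.castSucc :=
  hc.separated _ _ (Fin.castSucc_lt_last t).ne

lemma isDominoConfig_contract (hQ : 9 ≤ Q) {c : Fin (n + 1) → ℕ} (hc : IsDominoConfig Q r c) :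
    IsDominoConfig (Q - 2) r (contract c) := by
  have hK := hc.four_le (Fin.last n)
  have hK' := hc.lt (Fin.last n)
  have hKr := hc.lt_of_eq_four (Fin.last n)
  rw [Fin.val_last] at hKr
  refine ⟨fun t => ?_, fun t => ?_, fun t => ?_, fun s t hst => ?_, fun s t hst => ?_⟩
  all_goals simp only [contract, shiftDown]
  · have := hc.four_le t.castSucc
    have := hc.separated_last t
    split_ifs <;> omega
  · have := hc.lt t.castSucc
    have := hc.separated_last t
    split_ifs <;> omega
  · have h4 := hc.lt_of_eq_four t.castSucc
    have := hc.separated_last t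
    have := t.isLt
    rw [Fin.val_castSucc] at h4
    split_ifs <;> omega
  · have := hc.four_le s.castSucc
    have := hc.four_le t.castSucc
    have := hc.separated_last s
    have := hc.separated_last t
    have := hc.separated s.castSucc t.castSucc (Fin.castSucc_injective _ |>.ne hst)
    split_ifs <;> omega
  · intro h
    rcases eq_foldSucc_of_shiftDown hQ (hc.four_le _) (hc.lt _) (hc.four_le _) (hc.lt _) hK hK'
      (hc.separated _ _ (Fin.castSucc_injective _ |>.ne hst.ne)) (hc.separated_last s)
      (hc.separated_last t) h with h | h
    · exact hc.ne_foldSucc _ _ (Fin.castSucc_lt_castSucc_iff.2 hst) h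
    · exact hc.ne_foldSucc _ _ (Fin.castSucc_lt_last s) h

lemma IsDominoConfig.pred_mem_goodSlots (hQ : 9 ≤ Q) {c : Fin (n + 1) → ℕ}
    (hc : IsDominoConfig Q r c) : c (Fin.last n) - 1 ∈ goodSlots Q r (contract c) := by
  have hK := hc.four_le (Fin.last n)
  have hK' := hc.lt (Fin.last n)
  have hKr := hc.lt_of_eq_four (Fin.last n)
  rw [Fin.val_last] at hKr
  refine mem_goodSlots.2 ⟨by omega, by omega, fun h => hKr (by omega), fun t => ?_⟩
  exact shiftDown_ne_pred hQ (hc.four_le _) (hc.lt _) hK hK' (hc.separated_last t)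
    (hc.ne_foldSucc _ _ (Fin.castSucc_lt_last t))

lemma IsDominoConfig.insertAt_contract {c : Fin (n + 1) → ℕ} (hc : IsDominoConfig Q r c) :
    insertAt (contract c) (c (Fin.last n) - 1) = c := by
  have hK := hc.four_le (Fin.last n)
  funext s
  induction s using Fin.lastCases with
  | last => rw [insertAt_last]; omega
  | cast t =>
    have := hc.separated_last t
    simp only [insertAt_castSucc, contract, shiftUp, shiftDown]
    split_ifs <;> omega

lemma separated_insertAt {y : Fin n → ℕ} {k : ℕ}
    (hy : ∀ s t, s ≠ t → y s + 2 ≤ y t ∨ y t + 2 ≤ y s) (hky : ∀ t, y t ≠ k) (s t : Fin (n + 1))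
    (hst : s ≠ t) : insertAt y k s + 2 ≤ insertAt y k t ∨ insertAt y k t + 2 ≤ insertAt y k s := by
  induction s using Fin.lastCases with
  | last =>
    induction t using Fin.lastCases with
    | last => exact absurd rfl hst
    | cast t =>
      have := hky t
      simp only [insertAt_castSucc, insertAt_last, shiftUp]
      split_ifs <;> omega
  | cast s =>
    induction t using Fin.lastCases with
    | last =>
      have := hky s
      simp only [insertAt_castSucc, insertAt_last, shiftUp]
      split_ifs <;> omega
    | cast t =>
      have := hy s t fun h => hst (congrArg _ h)
      simp only [insertAt_castSucc, shiftUp]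
      split_ifs <;> omega

lemma isDominoConfig_insertAt (hQ : 9 ≤ Q) {y : Fin n → ℕ} {k : ℕ}
    (hy : IsDominoConfig (Q - 2) r y) (hk : k ∈ goodSlots Q r y) :
    IsDominoConfig Q r (insertAt y k) := by
  obtain ⟨hk3, hkQ, hk4, hky⟩ := mem_goodSlots.1 hk
  have hbounds : ∀ s, 4 ≤ insertAt y k s ∧ insertAt y k s < Q ∧
      (insertAt y k s = 4 → (s : ℕ) < r) := by
    intro s
    induction s using Fin.lastCases with
    | last => rw [insertAt_last, Fin.val_last]; omega
    | cast t =>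
      have := hy.four_le t
      have := hy.lt t
      have := hy.lt_of_eq_four t
      simp only [insertAt_castSucc, shiftUp, Fin.val_castSucc]
      split_ifs <;> omega
  refine ⟨fun s => (hbounds s).1, fun s => (hbounds s).2.1, fun s => (hbounds s).2.2,
    separated_insertAt hy.separated fun t => (hky t).1, fun s t hst => ?_⟩
  induction t using Fin.lastCases with
  | last =>
    induction s using Fin.lastCases with
    | last => exact absurd hst (lt_irrefl _)
    | cast s =>
      rw [insertAt_castSucc, insertAt_last]
      exact shiftUp_ne_foldSucc hQ (hy.four_le s) (by have := hy.lt s; omega) hk3 (by omega)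
        (hky s).1 (hky s).2
  | cast t =>
    induction s using Fin.lastCases with
    | last => exact absurd (hst.trans (Fin.castSucc_lt_last t)) (lt_irrefl _)
    | cast s =>
      rw [insertAt_castSucc, insertAt_castSucc]
      exact fun h => hy.ne_foldSucc s t (Fin.castSucc_lt_castSucc_iff.1 hst)
        (eq_foldSucc_of_shiftUp hQ (hy.four_le s) (by have := hy.lt s; omega) (hy.four_le t)
          (by have := hy.lt t; omega) h)

lemma IsDominoConfig.injective {y : Fin n → ℕ} (hy : IsDominoConfig Q r y) :
    Function.Injective y := fun s t h => by
  by_contra hst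
  have := hy.separated s t hst
  omega

lemma IsDominoConfig.ne_partner {y : Fin n → ℕ} (hy : IsDominoConfig Q r y) (s t : Fin n) :
    y s ≠ partner (y t) := by
  rcases eq_or_ne s t with rfl | hst
  · unfold partner; split_ifs <;> omega
  · have := hy.separated s t hst
    unfold partner; split_ifs <;> omega

lemma goodSlots_eq (y : Fin n → ℕ) :
    goodSlots Q r y = Finset.Icc (if n < r then 3 else 4) (Q - 2) \
      (Finset.univ.image y ∪ Finset.univ.image (partner ∘ y)) := by
  ext k
  simp only [mem_goodSlots, Finset.mem_sdiff, Finset.mem_Icc, Finset.mem_union,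
    Finset.mem_image, Finset.mem_univ, true_and, Function.comp_apply, not_or, not_exists]
  constructor
  · rintro ⟨hk3, hkQ, hk4, hky⟩
    exact ⟨⟨by split_ifs <;> omega, hkQ⟩, fun t => (hky t).1, fun t => (hky t).2⟩
  · rintro ⟨⟨hk3, hkQ⟩, hy1, hy2⟩
    exact ⟨by split_ifs at hk3 <;> omega, hkQ, by split_ifs at hk3 <;> omega,
      fun t => ⟨hy1 t, hy2 t⟩⟩

lemma card_goodSlots {y : Fin n → ℕ} (hQ : 2 * n + 9 ≤ Q) (hy : IsDominoConfig (Q - 2) r y) :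
    (goodSlots Q r y).card = if n < r then Q - 2 * n - 4 else Q - 2 * n - 5 := by
  have hsub : Finset.univ.image y ∪ Finset.univ.image (partner ∘ y) ⊆
      Finset.Icc (if n < r then 3 else 4) (Q - 2) := by
    intro k hk
    simp only [Finset.mem_union, Finset.mem_image, Finset.mem_univ, true_and,
      Function.comp_apply] at hk
    rw [Finset.mem_Icc]
    rcases hk with ⟨t, rfl⟩ | ⟨t, rfl⟩
    · have := hy.four_le t
      have := hy.lt t
      split_ifs <;> omega
    · have := hy.four_le t
      have := hy.lt t
      unfold partner
      split_ifs <;> omega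
  have hdisj : Disjoint (Finset.univ.image y) (Finset.univ.image (partner ∘ y)) := by
    simp only [Finset.disjoint_left, Finset.mem_image, Finset.mem_univ, true_and,
      Function.comp_apply, not_exists]
    rintro _ ⟨s, rfl⟩ t
    exact (hy.ne_partner s t).symm
  rw [goodSlots_eq, Finset.card_sdiff_of_subset hsub, Finset.card_union_of_disjoint hdisj,
    Finset.card_image_of_injective _ hy.injective,
    Finset.card_image_of_injective _ (partner_involutive.injective.comp hy.injective),
    Nat.card_Icc, Finset.card_univ, Fintype.card_fin]
  split_ifs <;> omega

lemma card_filter_contract_eq (hQ : 9 ≤ Q) {y : Fin n → ℕ} (hy : IsDominoConfig (Q - 2) r y) :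
    ((dominoConfigs Q (n + 1) r).filter (contract · = y)).card = (goodSlots Q r y).card := by
  refine Finset.card_nbij' (fun c => c (Fin.last n) - 1) (insertAt y) ?_ ?_ ?_ ?_
  · intro c hc
    simp only [Finset.mem_coe, Finset.mem_filter, mem_dominoConfigs] at hc
    rw [← hc.2]
    exact hc.1.pred_mem_goodSlots hQ
  · intro k hk
    simp only [Finset.mem_coe, Finset.mem_filter, mem_dominoConfigs]
    exact ⟨isDominoConfig_insertAt hQ hy hk, contract_insertAt y k⟩
  · intro c hc
    simp only [Finset.mem_coe, Finset.mem_filter, mem_dominoConfigs] at hc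
    rw [← hc.2]
    exact hc.1.insertAt_contract
  · intro k _
    simp only [insertAt, Fin.snoc_last, Nat.add_sub_cancel]

lemma card_dominoConfigs_succ (hQ : 2 * n + 11 ≤ Q) :
    (dominoConfigs Q (n + 1) r).card =
      (dominoConfigs (Q - 2) n r).card * (if n < r then Q - 2 * n - 4 else Q - 2 * n - 5) := by
  have hmaps : Set.MapsTo contract (dominoConfigs Q (n + 1) r : Set (Fin (n + 1) → ℕ))
      (dominoConfigs (Q - 2) n r) := fun c hc =>
    mem_dominoConfigs.2 (isDominoConfig_contract (by omega) (mem_dominoConfigs.1 hc))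
  rw [Finset.card_eq_sum_card_fiberwise hmaps]
  refine Finset.sum_const_nat fun y hy => ?_
  rw [card_filter_contract_eq (by omega) (mem_dominoConfigs.1 hy),
    card_goodSlots (by omega) (mem_dominoConfigs.1 hy)]

theorem card_dominoConfigs (hQ : 2 * n + 9 ≤ Q) :
    (dominoConfigs Q n r).card =
      ∏ t : Fin n, if (t : ℕ) < r then Q - 2 * n - 2 else Q - 2 * n - 3 := by
  induction n generalizing Q with
  | zero => simp [card_dominoConfigs_zero]
  | succ n ih =>
    rw [card_dominoConfigs_succ (by omega), ih (by omega), Fin.prod_univ_castSucc]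
    congr 1
    refine Finset.prod_congr rfl fun t _ => ?_
    simp only [Fin.val_castSucc]
    split_ifs <;> omega

end dominoConfigs

-- The position of `x` in the list `0, 1, -1, 2, -2, …` of the elements of `ZMod q`.
def cell (q : ℕ) (x : ZMod q) : ℕ :=
  if x.val = 0 then 0 else if 2 * x.val ≤ q then 2 * x.val - 1 else 2 * (q - x.val)

section cell

variable {q : ℕ}

lemma val_one_of_lt (hq : 1 < q) : (1 : ZMod q).val = 1 :=
  (ZMod.val_one_eq_one_mod q).trans (Nat.mod_eq_of_lt hq)

lemma val_two_of_lt (hq : 2 < q) : (2 : ZMod q).val = 2 := by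
  simpa using ZMod.val_cast_of_lt (n := q) hq

variable [NeZero q]

lemma eq_iff_val_eq {x y : ZMod q} : x = y ↔ x.val = y.val := (ZMod.val_injective q).eq_iff.symm

lemma add_eq_iff_val {x y z : ZMod q} :
    x + y = z ↔ x.val + y.val = z.val ∨ x.val + y.val = z.val + q := by
  rw [eq_iff_val_eq, ZMod.val_add]
  have := x.val_lt
  have := y.val_lt
  have := z.val_lt
  rcases lt_or_ge (x.val + y.val) q with h | h
  · rw [Nat.mod_eq_of_lt h]; omega
  · rw [Nat.mod_eq_sub_mod h, Nat.mod_eq_of_lt (by omega)]; omega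

lemma val_neg_natCast {k : ℕ} (hk : 0 < k) (hkq : k < q) : (-(k : ZMod q)).val = q - k := by
  rw [ZMod.neg_val, if_neg, ZMod.val_cast_of_lt hkq]
  rw [eq_iff_val_eq, ZMod.val_cast_of_lt hkq, ZMod.val_zero]
  omega

lemma val_neg_one_of_lt (hq : 1 < q) : (-1 : ZMod q).val = q - 1 := by
  simpa using val_neg_natCast (q := q) one_pos hq

lemma val_neg_two_of_lt (hq : 2 < q) : (-2 : ZMod q).val = q - 2 := by
  simpa using val_neg_natCast (q := q) two_pos hq

lemma cell_lt (x : ZMod q) : cell q x < q := by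
  have := x.val_lt
  unfold cell
  split_ifs <;> omega

lemma cell_injective : Function.Injective (cell q) := by
  intro x y h
  have := x.val_lt
  have := y.val_lt
  rw [eq_iff_val_eq]
  unfold cell at h
  split_ifs at h <;> omega

lemma exists_cell_eq {c : ℕ} (hc : c < q) : ∃ x, cell q x = c := by
  have hbij : Function.Bijective fun x : ZMod q => (⟨cell q x, cell_lt x⟩ : Fin q) :=
    (Fintype.bijective_iff_injective_and_card _).2
      ⟨fun x y h => cell_injective (Fin.val_eq_of_eq h), by simp⟩
  obtain ⟨x, hx⟩ := hbij.2 ⟨c, hc⟩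
  exact ⟨x, congrArg Fin.val hx⟩

lemma four_le_cell_iff {x : ZMod q} (hq : 9 ≤ q) :
    4 ≤ cell q x ↔ x ≠ 0 ∧ x ≠ 1 ∧ x ≠ -1 ∧ x ≠ 2 := by
  have := x.val_lt
  simp only [ne_eq, eq_iff_val_eq, ZMod.val_zero, val_one_of_lt (by omega : 1 < q),
    val_two_of_lt (by omega : 2 < q), val_neg_one_of_lt (by omega : 1 < q), cell]
  split_ifs <;> omega

lemma cell_eq_four_iff {x : ZMod q} (hq : 9 ≤ q) : cell q x = 4 ↔ x = -2 := by
  have := x.val_lt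
  simp only [eq_iff_val_eq (y := -2), val_neg_two_of_lt (by omega : 2 < q), cell]
  split_ifs <;> constructor <;> intro h <;> first | exact h.elim | omega

lemma neg_one_ne_zero_one_two (hq : 9 ≤ q) :
    (-1 : ZMod q) ≠ 0 ∧ (-1 : ZMod q) ≠ 1 ∧ (-1 : ZMod q) ≠ 2 := by
  simp only [ne_eq, eq_iff_val_eq, ZMod.val_zero, val_one_of_lt (by omega : 1 < q),
    val_two_of_lt (by omega : 2 < q), val_neg_one_of_lt (by omega : 1 < q)]
  omega

lemma separated_iff_cell {x y : ZMod q} (hq : 9 ≤ q) :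
    (x ≠ y ∧ x + y ≠ 0 ∧ x + y ≠ 1) ↔ (cell q x + 2 ≤ cell q y ∨ cell q y + 2 ≤ cell q x) := by
  have := x.val_lt
  have := y.val_lt
  simp only [ne_eq, eq_iff_val_eq (x := x), add_eq_iff_val, ZMod.val_zero,
    val_one_of_lt (by omega : 1 < q), cell]
  split_ifs <;> omega

lemma eq_add_one_iff_cell {x y : ZMod q} (hq : 9 ≤ q) :
    x = y + 1 ↔ cell q x = foldSucc q (cell q y) := by
  have := x.val_lt
  have := y.val_lt
  rw [eq_comm, add_eq_iff_val, val_one_of_lt (by omega)]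
  simp only [cell, foldSucc]
  split_ifs <;> constructor <;> intro h <;> first | exact h.elim | omega

end cell

structure IsFreeConfig (q r : ℕ) {n : ℕ} (y : Fin n → ZMod q) : Prop where
  avoid : ∀ t, y t ≠ 0 ∧ y t ≠ 1 ∧ y t ≠ -1 ∧ y t ≠ 2
  lt_of_eq_neg_two : ∀ t, y t = -2 → (t : ℕ) < r
  separated : ∀ s t, s ≠ t → y s ≠ y t ∧ y s + y t ≠ 0 ∧ y s + y t ≠ 1
  ne_add_one : ∀ s t, s < t → y s ≠ y t + 1

section IsFreeConfig

variable {q n r : ℕ} [NeZero q]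

lemma isFreeConfig_iff (hq : 9 ≤ q) {y : Fin n → ZMod q} :
    IsFreeConfig q r y ↔ IsDominoConfig q r fun t => cell q (y t) := by
  constructor
  · intro h
    exact ⟨fun t => (four_le_cell_iff hq).2 (h.avoid t), fun t => cell_lt _,
      fun t ht => h.lt_of_eq_neg_two t ((cell_eq_four_iff hq).1 ht),
      fun s t hst => (separated_iff_cell hq).1 (h.separated s t hst),
      fun s t hst heq => h.ne_add_one s t hst ((eq_add_one_iff_cell hq).2 heq)⟩
  · intro h
    exact ⟨fun t => (four_le_cell_iff hq).1 (h.four_le t),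
      fun t ht => h.lt_of_eq_four t ((cell_eq_four_iff hq).2 ht),
      fun s t hst => (separated_iff_cell hq).2 (h.separated s t hst),
      fun s t hst heq => h.ne_foldSucc s t hst ((eq_add_one_iff_cell hq).1 heq)⟩

lemma ncard_isFreeConfig (hq : 9 ≤ q) :
    {y : Fin n → ZMod q | IsFreeConfig q r y}.ncard = (dominoConfigs q n r).card := by
  have hinj : Function.Injective fun (y : Fin n → ZMod q) t => cell q (y t) :=
    fun y y' h => funext fun t => cell_injective (congrFun h t)
  rw [← Set.ncard_coe_finset, ← hinj.injOn.ncard_image]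
  congr 1
  ext c
  simp only [Set.mem_image, Set.mem_ofPred_eq, Finset.mem_coe, mem_dominoConfigs]
  constructor
  · rintro ⟨y, hy, rfl⟩
    exact (isFreeConfig_iff hq).1 hy
  · intro hc
    choose y hy using fun t => exists_cell_eq (hc.lt t)
    refine ⟨y, (isFreeConfig_iff hq).2 ?_, funext hy⟩
    simpa only [hy] using hc

end IsFreeConfig

def skipTwo {m : ℕ} (I J : Fin m) (t : Fin (m - 2)) : Fin m :=
  ⟨if (t : ℕ) < I then t else if (t : ℕ) + 1 < J then t + 1 else t + 2, by
    have := t.isLt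
    split_ifs <;> omega⟩

section skipTwo

variable {m : ℕ} {I J : Fin m}

lemma val_skipTwo (t : Fin (m - 2)) :
    ((skipTwo I J t : ℕ) = t ∧ (t : ℕ) < I) ∨
    ((skipTwo I J t : ℕ) = t + 1 ∧ (I : ℕ) ≤ t ∧ (t : ℕ) + 1 < J) ∨
    ((skipTwo I J t : ℕ) = t + 2 ∧ (I : ℕ) ≤ t ∧ (J : ℕ) ≤ t + 1) := by
  simp only [skipTwo]
  split_ifs <;> omega

lemma skipTwo_strictMono : StrictMono (skipTwo I J) := fun s t hst => by
  have := val_skipTwo (I := I) (J := J) s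
  have := val_skipTwo (I := I) (J := J) t
  rw [Fin.lt_def] at hst ⊢
  omega

lemma skipTwo_lt_left_iff {t : Fin (m - 2)} : skipTwo I J t < I ↔ (t : ℕ) < I := by
  have := val_skipTwo (I := I) (J := J) t
  rw [Fin.lt_def]
  omega

lemma skipTwo_ne_left (t : Fin (m - 2)) : skipTwo I J t ≠ I := by
  have := val_skipTwo (I := I) (J := J) t
  rw [Ne, Fin.ext_iff]
  omega

lemma skipTwo_ne_right (hIJ : I < J) (t : Fin (m - 2)) : skipTwo I J t ≠ J := by
  have := val_skipTwo (I := I) (J := J) t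
  rw [Ne, Fin.ext_iff]
  rw [Fin.lt_def] at hIJ
  omega

lemma eq_or_eq_or_exists_skipTwo_eq (hIJ : I < J) (s : Fin m) :
    (s = I ∨ s = J) ∨ ∃ t, skipTwo I J t = s := by
  rw [Fin.lt_def] at hIJ
  by_cases hs : s = I ∨ s = J
  · exact Or.inl hs
  rw [not_or, Fin.ext_iff, Fin.ext_iff] at hs
  have := s.isLt
  refine Or.inr ⟨⟨if (s : ℕ) < I then s else if (s : ℕ) < J then s - 1 else s - 2,
    by split_ifs <;> omega⟩, Fin.ext ?_⟩
  simp only [skipTwo]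
  split_ifs <;> omega

end skipTwo

def IsFlatPoint (q : ℕ) {m : ℕ} (I J : Fin m) (x : Fin m → ZMod q) : Prop :=
  x I = -1 ∧ x J = -1 ∧
  (∀ s : Fin m, x s ≠ 0 ∧ x s ≠ 1) ∧
  (∀ s t : Fin m, s ≠ t → ¬((s = I ∧ t = J) ∨ (s = J ∧ t = I)) → x s ≠ x t) ∧
  (∀ s t : Fin m, s < t → ¬(s = I ∧ t = J) → x s ≠ x t + 1) ∧
  (∀ s t : Fin m, s ≠ t → x s ≠ -x t ∧ x s ≠ -x t + 1)

section IsFlatPoint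

variable {q m : ℕ} {I J : Fin m} {x : Fin m → ZMod q}

lemma isFreeConfig_of_isFlatPoint (hIJ : I < J) (hx : IsFlatPoint q I J x) :
    IsFreeConfig q I fun t => x (skipTwo I J t) := by
  obtain ⟨hI, -, h01, hne, hsucc, hneg⟩ := hx
  have hnotIJ : ∀ s t, ¬((skipTwo I J s = I ∧ t = J) ∨ (skipTwo I J s = J ∧ t = I)) := by
    rintro s t (⟨h, -⟩ | ⟨h, -⟩)
    exacts [skipTwo_ne_left s h, skipTwo_ne_right hIJ s h]
  refine ⟨fun t => ?_, fun t ht => ?_, fun s t hst => ?_, fun s t hst => ?_⟩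
  · have h1 := hne _ I (skipTwo_ne_left (J := J) t) (hnotIJ t I)
    have h2 := (hneg _ I (skipTwo_ne_left (J := J) t)).2
    rw [hI] at h1 h2
    rw [neg_neg, one_add_one_eq_two] at h2
    exact ⟨(h01 _).1, (h01 _).2, h1, h2⟩
  · by_contra hlt
    have hIt : I < skipTwo I J t := lt_of_le_of_ne (not_lt.1 (mt skipTwo_lt_left_iff.1 hlt))
      (skipTwo_ne_left t).symm
    refine hsucc I _ hIt (fun h => skipTwo_ne_right hIJ t h.2) ?_
    rw [hI, ht]
    norm_num
  · have hst' := (skipTwo_strictMono (I := I) (J := J)).injective.ne hst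
    have h := hneg _ _ hst'
    exact ⟨hne _ _ hst' (hnotIJ s _), fun h' => h.1 (eq_neg_iff_add_eq_zero.2 h'),
      fun h' => h.2 (eq_neg_add_iff_add_eq.2 ((add_comm _ _).trans h'))⟩
  · exact hsucc _ _ (skipTwo_strictMono hst) fun h => skipTwo_ne_left s h.1

lemma separated_skipTwo_of_isFreeConfig (hIJ : I < J) (hI : x I = -1) (hJ : x J = -1)
    (hy : IsFreeConfig q I fun t => x (skipTwo I J t)) {s : Fin m} {t : Fin (m - 2)}
    (hst : s ≠ skipTwo I J t) :
    x s ≠ x (skipTwo I J t) ∧ x s + x (skipTwo I J t) ≠ 0 ∧ x s + x (skipTwo I J t) ≠ 1 := by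
  obtain ⟨-, h1, hm1, h2⟩ := hy.avoid t
  have hfixed : ∀ a : ZMod q, a = -1 →
      a ≠ x (skipTwo I J t) ∧ a + x (skipTwo I J t) ≠ 0 ∧ a + x (skipTwo I J t) ≠ 1 := by
    rintro _ rfl
    exact ⟨Ne.symm hm1, fun h => h1 (by linear_combination h),
      fun h => h2 (by linear_combination h)⟩
  rcases eq_or_eq_or_exists_skipTwo_eq hIJ s with (rfl | rfl) | ⟨s, rfl⟩
  · exact hfixed _ hI
  · exact hfixed _ hJ
  · exact hy.separated s t fun h => hst (congrArg _ h)

lemma ne_add_one_of_isFreeConfig (hIJ : I < J) (hI : x I = -1) (hJ : x J = -1)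
    (hy : IsFreeConfig q I fun t => x (skipTwo I J t)) {s t : Fin m} (hst : s < t)
    (hIJst : ¬(s = I ∧ t = J)) : x s ≠ x t + 1 := by
  have hfixed : ∀ s, s = I ∨ s = J → x s = -1 := by rintro s (rfl | rfl) <;> assumption
  rcases eq_or_eq_or_exists_skipTwo_eq hIJ t with ht | ⟨t, rfl⟩
  · rcases eq_or_eq_or_exists_skipTwo_eq hIJ s with hs | ⟨s, rfl⟩
    · rcases hs with rfl | rfl <;> rcases ht with rfl | rfl
      exacts [absurd hst (lt_irrefl _), absurd ⟨rfl, rfl⟩ hIJst, absurd hst hIJ.not_gt,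
        absurd hst (lt_irrefl _)]
    · rw [hfixed t ht, neg_add_cancel]
      exact (hy.avoid s).1
  · rcases eq_or_eq_or_exists_skipTwo_eq hIJ s with hs | ⟨s, rfl⟩
    · rw [hfixed s hs]
      intro h
      have hIs : I ≤ s := by rcases hs with rfl | rfl; exacts [le_rfl, hIJ.le]
      have := (skipTwo_lt_left_iff (J := J)).2 (hy.lt_of_eq_neg_two t (by linear_combination -h))
      exact absurd (hst.trans this) (not_lt.2 hIs)
    · exact hy.ne_add_one s t (skipTwo_strictMono.lt_iff_lt.1 hst)

lemma isFlatPoint_of_isFreeConfig [NeZero q] (hq : 9 ≤ q) (hIJ : I < J) (hI : x I = -1)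
    (hJ : x J = -1) (hy : IsFreeConfig q I fun t => x (skipTwo I J t)) : IsFlatPoint q I J x := by
  have hcases := eq_or_eq_or_exists_skipTwo_eq hIJ
  have hfixed : ∀ s, s = I ∨ s = J → x s = -1 := by rintro s (rfl | rfl) <;> assumption
  have hsep := fun {s} {t} => separated_skipTwo_of_isFreeConfig hIJ hI hJ hy (s := s) (t := t)
  refine ⟨hI, hJ, fun s => ?_, fun s t hst hIJst => ?_,
    fun s t => ne_add_one_of_isFreeConfig hIJ hI hJ hy, fun s t hst => ?_⟩
  · rcases hcases s with hs | ⟨t, rfl⟩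
    · rw [hfixed s hs]
      exact ⟨(neg_one_ne_zero_one_two hq).1, (neg_one_ne_zero_one_two hq).2.1⟩
    · exact ⟨(hy.avoid t).1, (hy.avoid t).2.1⟩
  · rcases hcases t with ht | ⟨t, rfl⟩
    · rcases hcases s with hs | ⟨s, rfl⟩
      · rcases hs with rfl | rfl <;> rcases ht with rfl | rfl <;> tauto
      · exact fun h => (hsep hst.symm).1 h.symm
    · exact (hsep hst).1
  · suffices x s + x t ≠ 0 ∧ x s + x t ≠ 1 from
      ⟨fun h => this.1 (eq_neg_iff_add_eq_zero.1 h),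
        fun h => this.2 ((add_comm _ _).trans (eq_neg_add_iff_add_eq.1 h))⟩
    rcases hcases t with ht | ⟨t, rfl⟩
    · rcases hcases s with hs | ⟨s, rfl⟩
      · rw [hfixed s hs, hfixed t ht]
        exact ⟨fun h => (neg_one_ne_zero_one_two hq).2.1 (by linear_combination h),
          fun h => (neg_one_ne_zero_one_two hq).2.2 (by linear_combination h)⟩
      · rw [add_comm]
        exact (hsep hst.symm).2
    · exact (hsep hst).2

lemma isFlatPoint_iff [NeZero q] (hq : 9 ≤ q) (hIJ : I < J) :
    IsFlatPoint q I J x ↔ x I = -1 ∧ x J = -1 ∧ IsFreeConfig q I fun t => x (skipTwo I J t) :=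
  ⟨fun hx => ⟨hx.1, hx.2.1, isFreeConfig_of_isFlatPoint hIJ hx⟩,
    fun ⟨hI, hJ, hy⟩ => isFlatPoint_of_isFreeConfig hq hIJ hI hJ hy⟩

lemma ncard_isFlatPoint [NeZero q] (hq : 9 ≤ q) (hIJ : I < J) :
    {x : Fin m → ZMod q | IsFlatPoint q I J x}.ncard =
      {y : Fin (m - 2) → ZMod q | IsFreeConfig q I y}.ncard := by
  have hinj : Set.InjOn (fun x t => x (skipTwo I J t)) {x | IsFlatPoint q I J x} := by
    intro x hx x' hx' h
    funext s
    rcases eq_or_eq_or_exists_skipTwo_eq hIJ s with (rfl | rfl) | ⟨t, rfl⟩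
    · exact hx.1.trans hx'.1.symm
    · exact hx.2.1.trans hx'.2.1.symm
    · exact congrFun h t
  rw [← hinj.ncard_image]
  congr 1
  ext y
  simp only [Set.mem_image, Set.mem_ofPred_eq]
  constructor
  · rintro ⟨x, hx, rfl⟩
    exact isFreeConfig_of_isFlatPoint hIJ hx
  · intro hy
    set x := Function.extend (skipTwo I J) y fun _ => -1
    have hxy : (fun t => x (skipTwo I J t)) = y :=
      funext fun t => skipTwo_strictMono.injective.extend_apply _ _ t
    have hfixed : ∀ s, (s = I ∨ s = J) → x s = -1 := by
      rintro s hs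
      refine Function.extend_apply' _ _ _ fun ⟨t, ht⟩ => ?_
      rcases hs with rfl | rfl
      exacts [skipTwo_ne_left t ht, skipTwo_ne_right hIJ t ht]
    refine ⟨x, (isFlatPoint_iff hq hIJ).2 ⟨hfixed I (.inl rfl), hfixed J (.inr rfl), ?_⟩, hxy⟩
    rwa [hxy]

end IsFlatPoint

end ShiB

/-- The number of points on the restriction of `B_m ∪ {x_j = -1}` to the flat
`{x_i - x_j = 0, x_j = -1}` avoiding all other hyperplanes
(indices `1 ≤ i < j ≤ m`, 1-indexed). -/
theorem shi_typeB_flat_xi_eq_xj_eq_neg_one (m i j : ℕ)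
    (hi1 : 1 ≤ i) (hij : i < j) (hjm : j ≤ m) :
    ∃ N : ℕ, 0 < N ∧ ∀ q : ℕ, N ≤ q →
      ({x : Fin m → ZMod q |
          x ⟨i - 1, by omega⟩ = -1 ∧ x ⟨j - 1, by omega⟩ = -1 ∧
          (∀ s : Fin m, x s ≠ 0 ∧ x s ≠ 1) ∧
          (∀ s t : Fin m, s ≠ t →
            ¬((s = ⟨i - 1, by omega⟩ ∧ t = ⟨j - 1, by omega⟩) ∨
              (s = ⟨j - 1, by omega⟩ ∧ t = ⟨i - 1, by omega⟩)) → x s ≠ x t) ∧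
          (∀ s t : Fin m, s < t →
            ¬(s = ⟨i - 1, by omega⟩ ∧ t = ⟨j - 1, by omega⟩) → x s ≠ x t + 1) ∧
          (∀ s t : Fin m, s ≠ t → x s ≠ -x t ∧ x s ≠ -x t + 1)}.ncard : ℤ)
        = ((q : ℤ) - 2 * m + 1) ^ (m - i - 1) * ((q : ℤ) - 2 * m + 2) ^ (i - 1) := by
  refine ⟨2 * m + 5, by omega, fun q hq => ?_⟩
  have : NeZero q := ⟨by omega⟩
  have hIJ : (⟨i - 1, by omega⟩ : Fin m) < ⟨j - 1, by omega⟩ := Fin.mk_lt_mk.2 (by omega)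
  have hcard := (ShiB.ncard_isFlatPoint (q := q) (by omega) hIJ).trans
    (ShiB.ncard_isFreeConfig (by omega))
  rw [ShiB.card_dominoConfigs (by omega), ShiB.prod_ite_val_lt (by omega)] at hcard
  refine (congrArg Nat.cast hcard).trans ?_
  have e1 : ((q - 2 * (m - 2) - 2 : ℕ) : ℤ) = q - 2 * m + 2 := by omega
  have e2 : ((q - 2 * (m - 2) - 3 : ℕ) : ℤ) = q - 2 * m + 1 := by omega
  rw [Nat.cast_mul, Nat.cast_pow, Nat.cast_pow, e1, e2, mul_comm, Fin.val_mk,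
    show m - 2 - (i - 1) = m - i - 1 by omega]
end

section
/- Let m >= 1 be an integer. For a positive integer r, let M_D(r) be the set of tuples (x_1,...,x_m) in Z_r^m such that x_s != x_t for all s != t, x_s != x_t + 1 for all s < t, and x_s != -x_t and x_s != -x_t + 1 for all s != t; and let M_B(r) be the set of tuples (y_1,...,y_m) in Z_r^m such that y_s != 0 and y_s != 1 for all s, y_s != y_t for all s != t, y_s != y_t + 1 for all s < t, and y_s != -y_t and y_s != -y_t + 1 for all s != t. Then for every sufficiently large positive integer q, there is a bijection between M_D(q) and M_B(q+2); in particular |M_D(q)| = |M_B(q+2)|. -/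
namespace ShiDB

/-- The shift function on natural representatives. -/
def F (q a : ℕ) : ℕ := if a = 0 then q + 1 else a + 1

/-- The coordinatewise map `ZMod q → ZMod (q+2)`. -/
def fD (q : ℕ) (a : ZMod q) : ZMod (q + 2) := (F q a.val : ZMod (q + 2))

/-- The inverse coordinatewise map. -/
def fB (q : ℕ) (v : ZMod (q + 2)) : ZMod q :=
  ((if v.val = q + 1 then 0 else v.val - 1 : ℕ) : ZMod q)

lemma cast_iff (n x y : ℕ) (hx : x < 2 * n) (hy : y < n) :
    ((x : ZMod n) = (y : ZMod n)) ↔ (x = y ∨ x = y + n) := by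
  rw [ZMod.natCast_eq_natCast_iff', Nat.mod_eq_of_lt hy]
  rcases Nat.lt_or_ge x n with h | h
  · rw [Nat.mod_eq_of_lt h]; omega
  · rw [Nat.mod_eq_sub_mod h, Nat.mod_eq_of_lt (by omega)]; omega

lemma F_lt (q : ℕ) {a : ℕ} (ha : a < q) : F q a < q + 2 := by
  unfold F; split <;> omega

section

variable (q : ℕ) (hq : 2 ≤ q)
include hq

lemma key (a b : ZMod q) :
    (a = b ∨ a = b + 1 ∨ a + b = 0 ∨ a + b = 1) ↔
      (fD q a = fD q b ∨ fD q a = fD q b + 1 ∨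
        fD q a + fD q b = 0 ∨ fD q a + fD q b = 1) := by
  haveI : NeZero q := ⟨by omega⟩
  have hα : a.val < q := ZMod.val_lt a
  have hβ : b.val < q := ZMod.val_lt b
  have ha : ((a.val : ℕ) : ZMod q) = a := by rw [ZMod.natCast_val, ZMod.cast_id]
  have hb : ((b.val : ℕ) : ZMod q) = b := by rw [ZMod.natCast_val, ZMod.cast_id]
  have A1 : (a = b) ↔ (a.val = b.val ∨ a.val = b.val + q) := by
    conv_lhs => rw [← ha, ← hb]
    exact cast_iff q _ _ (by omega) hβ
  have A2 : (a = b + 1) ↔ (b.val + 1 = a.val ∨ b.val + 1 = a.val + q) := by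
    conv_lhs => rw [eq_comm, ← ha,
      show b + 1 = ((b.val + 1 : ℕ) : ZMod q) by push_cast [hb]; ring]
    exact cast_iff q _ _ (by omega) hα
  have A3 : (a + b = 0) ↔ (a.val + b.val = 0 ∨ a.val + b.val = 0 + q) := by
    rw [show a + b = ((a.val + b.val : ℕ) : ZMod q) by push_cast [ha, hb]; ring,
      show (0 : ZMod q) = ((0 : ℕ) : ZMod q) by push_cast; ring,
      cast_iff q _ _ (by omega) (by omega)]
  have A4 : (a + b = 1) ↔ (a.val + b.val = 1 ∨ a.val + b.val = 1 + q) := by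
    rw [show a + b = ((a.val + b.val : ℕ) : ZMod q) by push_cast [ha, hb]; ring,
      show (1 : ZMod q) = ((1 : ℕ) : ZMod q) by push_cast; ring,
      cast_iff q _ _ (by omega) (by omega)]
  have hFa : F q a.val < q + 2 := F_lt q hα
  have hFb : F q b.val < q + 2 := F_lt q hβ
  have B1 : (fD q a = fD q b) ↔
      (F q a.val = F q b.val ∨ F q a.val = F q b.val + (q + 2)) := by
    unfold fD; rw [cast_iff (q + 2) _ _ (by omega) hFb]
  have B2 : (fD q a = fD q b + 1) ↔
      (F q b.val + 1 = F q a.val ∨ F q b.val + 1 = F q a.val + (q + 2)) := by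
    unfold fD
    rw [eq_comm, show ((F q b.val : ℕ) : ZMod (q+2)) + 1 = ((F q b.val + 1 : ℕ) : ZMod (q+2))
        by push_cast; ring,
      cast_iff (q + 2) _ _ (by omega) hFa]
  have B3 : (fD q a + fD q b = 0) ↔
      (F q a.val + F q b.val = 0 ∨ F q a.val + F q b.val = 0 + (q + 2)) := by
    unfold fD
    rw [show ((F q a.val : ℕ) : ZMod (q+2)) + ((F q b.val : ℕ) : ZMod (q+2))
          = ((F q a.val + F q b.val : ℕ) : ZMod (q+2)) by push_cast; ring,
      show (0 : ZMod (q+2)) = ((0 : ℕ) : ZMod (q+2)) by push_cast; ring,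
      cast_iff (q + 2) _ _ (by omega) (by omega)]
  have B4 : (fD q a + fD q b = 1) ↔
      (F q a.val + F q b.val = 1 ∨ F q a.val + F q b.val = 1 + (q + 2)) := by
    unfold fD
    rw [show ((F q a.val : ℕ) : ZMod (q+2)) + ((F q b.val : ℕ) : ZMod (q+2))
          = ((F q a.val + F q b.val : ℕ) : ZMod (q+2)) by push_cast; ring,
      show (1 : ZMod (q+2)) = ((1 : ℕ) : ZMod (q+2)) by push_cast; ring,
      cast_iff (q + 2) _ _ (by omega) (by omega)]
  rw [A1, A2, A3, A4, B1, B2, B3, B4]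
  unfold F
  split_ifs <;> simp only [false_or, or_false, true_or, or_true, iff_true, true_iff] <;> omega

lemma fD_ne_zero (a : ZMod q) : fD q a ≠ 0 := by
  haveI : NeZero q := ⟨by omega⟩
  have hα : a.val < q := ZMod.val_lt a
  unfold fD
  intro h
  rw [show (0 : ZMod (q+2)) = ((0 : ℕ) : ZMod (q+2)) by push_cast; ring,
    cast_iff (q + 2) _ _ (by have := F_lt q hα; omega) (by omega)] at h
  rcases h with h | h <;> unfold F at h <;> split_ifs at h <;> omega

lemma fD_ne_one (a : ZMod q) : fD q a ≠ 1 := by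
  haveI : NeZero q := ⟨by omega⟩
  have hα : a.val < q := ZMod.val_lt a
  unfold fD
  intro h
  rw [show (1 : ZMod (q+2)) = ((1 : ℕ) : ZMod (q+2)) by push_cast; ring,
    cast_iff (q + 2) _ _ (by have := F_lt q hα; omega) (by omega)] at h
  rcases h with h | h <;> unfold F at h <;> split_ifs at h <;> omega

lemma fB_fD (a : ZMod q) : fB q (fD q a) = a := by
  haveI : NeZero q := ⟨by omega⟩
  have hα : a.val < q := ZMod.val_lt a
  have hv : (fD q a).val = F q a.val := ZMod.val_cast_of_lt (F_lt q hα)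
  unfold fB
  rw [hv]
  unfold F
  by_cases h0 : a.val = 0
  · rw [if_pos h0, if_pos rfl]
    push_cast
    exact ((ZMod.val_eq_zero a).mp h0).symm
  · rw [if_neg h0, if_neg (by omega)]
    simp only [Nat.add_sub_cancel]
    rw [ZMod.natCast_val, ZMod.cast_id]

lemma fD_fB (v : ZMod (q + 2)) (h0 : v ≠ 0) (h1 : v ≠ 1) : fD q (fB q v) = v := by
  haveI : NeZero q := ⟨by omega⟩
  have hν : v.val < q + 2 := ZMod.val_lt v
  have hv : ((v.val : ℕ) : ZMod (q + 2)) = v := by rw [ZMod.natCast_val, ZMod.cast_id]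
  have hν0 : v.val ≠ 0 := fun h => h0 ((ZMod.val_eq_zero v).mp h)
  have hν1 : v.val ≠ 1 := by
    intro h
    apply h1
    rw [← hv, h]; push_cast; ring
  unfold fB
  by_cases hc : v.val = q + 1
  · rw [if_pos hc]
    unfold fD
    rw [Nat.cast_zero, ZMod.val_zero]
    unfold F
    rw [if_pos rfl]
    conv_rhs => rw [← hv]
    rw [hc]
  · rw [if_neg hc]
    have hlt : v.val - 1 < q := by omega
    unfold fD
    rw [ZMod.val_cast_of_lt hlt]
    unfold F
    rw [if_neg (by omega)]
    conv_rhs => rw [← hv]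
    congr 1
    omega

end

/-- canonical form of the type-D conditions -/
lemma memD_iff {n m : ℕ} (x : Fin m → ZMod n) :
    ((∀ s t : Fin m, s ≠ t → x s ≠ x t) ∧
      (∀ s t : Fin m, s < t → x s ≠ x t + 1) ∧
      (∀ s t : Fin m, s ≠ t → x s ≠ -x t ∧ x s ≠ -x t + 1)) ↔
    (∀ s t : Fin m, s < t →
      ¬(x s = x t ∨ x s = x t + 1 ∨ x s + x t = 0 ∨ x s + x t = 1)) := by
  have hneg : ∀ a b : ZMod n, (a ≠ -b ∧ a ≠ -b + 1) ↔ (a + b ≠ 0 ∧ a + b ≠ 1) := by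
    intro a b
    constructor <;> rintro ⟨h1, h2⟩ <;> constructor <;> intro h <;>
      [exact h1 (by linear_combination h); exact h2 (by linear_combination h);
       exact h1 (by linear_combination h); exact h2 (by linear_combination h)]
  constructor
  · rintro ⟨h1, h2, h3⟩ s t hst
    push_neg
    exact ⟨h1 s t hst.ne, h2 s t hst, ((hneg _ _).mp (h3 s t hst.ne))⟩
  · intro h
    refine ⟨fun s t hst => ?_, fun s t hst => ?_, fun s t hst => ?_⟩
    · rcases hst.lt_or_gt with hlt | hlt
      · have := h s t hlt; push_neg at this; exact this.1
      · have := h t s hlt; push_neg at this; exact (this.1).symm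
    · have := h s t hst; push_neg at this; exact this.2.1
    · apply (hneg _ _).mpr
      rcases hst.lt_or_gt with hlt | hlt
      · have := h s t hlt; push_neg at this; exact ⟨this.2.2.1, this.2.2.2⟩
      · have := h t s hlt; push_neg at this
        exact ⟨by rw [add_comm]; exact this.2.2.1, by rw [add_comm]; exact this.2.2.2⟩

section
variable (q : ℕ) (hq : 2 ≤ q)
include hq

/-- canonical form of the type-B conditions -/
lemma memB_iff {m : ℕ} (y : Fin m → ZMod (q + 2)) :
    ((∀ s : Fin m, y s ≠ 0 ∧ y s ≠ 1) ∧
      (∀ s t : Fin m, s ≠ t → y s ≠ y t) ∧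
      (∀ s t : Fin m, s < t → y s ≠ y t + 1) ∧
      (∀ s t : Fin m, s ≠ t → y s ≠ -y t ∧ y s ≠ -y t + 1)) ↔
    ((∀ s : Fin m, y s ≠ 0 ∧ y s ≠ 1) ∧
      ∀ s t : Fin m, s < t →
        ¬(y s = y t ∨ y s = y t + 1 ∨ y s + y t = 0 ∨ y s + y t = 1)) := by
  constructor
  · rintro ⟨h0, h1, h2, h3⟩
    exact ⟨h0, (memD_iff y).mp ⟨h1, h2, h3⟩⟩
  · rintro ⟨h0, h⟩
    have := (memD_iff y).mpr h
    exact ⟨h0, this.1, this.2.1, this.2.2⟩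

lemma mem_transfer {m : ℕ} (x : Fin m → ZMod q) :
    ((∀ s t : Fin m, s ≠ t → x s ≠ x t) ∧
      (∀ s t : Fin m, s < t → x s ≠ x t + 1) ∧
      (∀ s t : Fin m, s ≠ t → x s ≠ -x t ∧ x s ≠ -x t + 1)) ↔
    ((∀ s : Fin m, (fD q ∘ x) s ≠ 0 ∧ (fD q ∘ x) s ≠ 1) ∧
      (∀ s t : Fin m, s ≠ t → (fD q ∘ x) s ≠ (fD q ∘ x) t) ∧
      (∀ s t : Fin m, s < t → (fD q ∘ x) s ≠ (fD q ∘ x) t + 1) ∧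
      (∀ s t : Fin m, s ≠ t →
        (fD q ∘ x) s ≠ -(fD q ∘ x) t ∧ (fD q ∘ x) s ≠ -(fD q ∘ x) t + 1)) := by
  rw [memD_iff, memB_iff q hq]
  constructor
  · intro h
    refine ⟨fun s => ⟨fD_ne_zero q hq _, fD_ne_one q hq _⟩, fun s t hst hbad => ?_⟩
    exact h s t hst ((key q hq (x s) (x t)).mpr hbad)
  · rintro ⟨-, h⟩ s t hst hbad
    exact h s t hst ((key q hq (x s) (x t)).mp hbad)

end

end ShiDB

/-- For all sufficiently large `q` there is a bijection between the complement of the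
Shi arrangement of type D over `ZMod q` and the complement of the Shi arrangement of
type B over `ZMod (q + 2)`; in particular the cardinalities agree. -/
theorem shi_typeD_typeB_bijection (m : ℕ) (hm : 1 ≤ m) :
    ∃ N : ℕ, 0 < N ∧ ∀ q : ℕ, N ≤ q →
      Nonempty
        (↥{x : Fin m → ZMod q |
            (∀ s t : Fin m, s ≠ t → x s ≠ x t) ∧
            (∀ s t : Fin m, s < t → x s ≠ x t + 1) ∧
            (∀ s t : Fin m, s ≠ t → x s ≠ -x t ∧ x s ≠ -x t + 1)} ≃
         ↥{y : Fin m → ZMod (q + 2) |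
            (∀ s : Fin m, y s ≠ 0 ∧ y s ≠ 1) ∧
            (∀ s t : Fin m, s ≠ t → y s ≠ y t) ∧
            (∀ s t : Fin m, s < t → y s ≠ y t + 1) ∧
            (∀ s t : Fin m, s ≠ t → y s ≠ -y t ∧ y s ≠ -y t + 1)}) ∧
      {x : Fin m → ZMod q |
          (∀ s t : Fin m, s ≠ t → x s ≠ x t) ∧
          (∀ s t : Fin m, s < t → x s ≠ x t + 1) ∧
          (∀ s t : Fin m, s ≠ t → x s ≠ -x t ∧ x s ≠ -x t + 1)}.ncard =
        {y : Fin m → ZMod (q + 2) |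
          (∀ s : Fin m, y s ≠ 0 ∧ y s ≠ 1) ∧
          (∀ s t : Fin m, s ≠ t → y s ≠ y t) ∧
          (∀ s t : Fin m, s < t → y s ≠ y t + 1) ∧
          (∀ s t : Fin m, s ≠ t → y s ≠ -y t ∧ y s ≠ -y t + 1)}.ncard := by
  refine ⟨2, by norm_num, fun q hq => ?_⟩
  have e : ↥{x : Fin m → ZMod q |
            (∀ s t : Fin m, s ≠ t → x s ≠ x t) ∧
            (∀ s t : Fin m, s < t → x s ≠ x t + 1) ∧
            (∀ s t : Fin m, s ≠ t → x s ≠ -x t ∧ x s ≠ -x t + 1)} ≃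
         ↥{y : Fin m → ZMod (q + 2) |
            (∀ s : Fin m, y s ≠ 0 ∧ y s ≠ 1) ∧
            (∀ s t : Fin m, s ≠ t → y s ≠ y t) ∧
            (∀ s t : Fin m, s < t → y s ≠ y t + 1) ∧
            (∀ s t : Fin m, s ≠ t → y s ≠ -y t ∧ y s ≠ -y t + 1)} := by
    refine
      { toFun := fun p => ⟨ShiDB.fD q ∘ p.1, (ShiDB.mem_transfer q hq p.1).mp p.2⟩
        invFun := fun p => ⟨ShiDB.fB q ∘ p.1, ?_⟩
        left_inv := fun p => Subtype.ext (funext fun s => ShiDB.fB_fD q hq (p.1 s))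
        right_inv := fun p => Subtype.ext (funext fun s =>
          ShiDB.fD_fB q hq (p.1 s) (p.2.1 s).1 (p.2.1 s).2) }
    · have hyy : ShiDB.fD q ∘ (ShiDB.fB q ∘ p.1) = p.1 :=
        funext fun s => ShiDB.fD_fB q hq (p.1 s) (p.2.1 s).1 (p.2.1 s).2
      have := (ShiDB.mem_transfer q hq (ShiDB.fB q ∘ p.1))
      rw [hyy] at this
      exact this.mpr p.2
  refine ⟨⟨e⟩, ?_⟩
  rw [← Nat.card_coe_set_eq, ← Nat.card_coe_set_eq]
  exact Nat.card_congr e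
end
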